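/- arXiv:1006.5413 — 5 statements merged into one kernel-verified Lean document; each statement's English description precedes it below -/
import Mathlib

section
/- Let ω = (ω₀, ω_{j,k,σ}) ∈ ℂ^{1+dS} and suppose there are integers l₀ ≥ 0 and n₀ ≥ S·l₀ such that v_{l₀,n₀}(ω) = v_{l₀,n₀+1}(ω) = … = v_{l₀,n₀+dS}(ω) = 0. Then the generating function F(z) = ∑_{n=0}^∞ v_n(ω) zⁿ is a rational function; that is, there exist polynomials p, r ∈ ℂ[z] with r ≠ 0 such that r(z)·F(z) = p(z) as formal power series. -/
open scoped BigOperators Classical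
open Finset Polynomial

noncomputable section


/-- The value `P(q^n)` viewed as a complex number. -/
def Pq (q : ℚ) (P : Polynomial ℚ) (n : ℕ) : ℂ := ((P.eval (q ^ n) : ℚ) : ℂ)

/-- The product `∏_{k=1}^n P(q^k)`. -/
def prodP (q : ℚ) (P : Polynomial ℚ) (n : ℕ) : ℂ := ∏ k ∈ Finset.range n, Pq q P (k + 1)

/-- The entire function `f(z) = ∑_{n≥0} zⁿ / ∏_{k=1}^n P(q^k)`. -/
def fC (q : ℚ) (P : Polynomial ℚ) : ℂ → ℂ := fun z => ∑' n : ℕ, z ^ n / prodP q P n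

/-- The linear form `u_n(x) = ∑_{j,k,σ} σ!·binom(n,σ)·(α_j q^k)^{n−σ} x_{j,k,σ}`, where
`σ!·binom(n,σ)` is written as the falling factorial `∏_{i<σ} (n−i)` (valid for all `n ∈ ℤ`). -/
def useq (q : ℚ) {m : ℕ} (d : ℕ) (α : Fin m → ℂ) (s : Fin m → ℕ)
    (x : Fin m → Fin d → ℕ → ℂ) (n : ℤ) : ℂ :=
  ∑ j : Fin m, ∑ k : Fin d, ∑ σ ∈ Finset.range (s j),
    (∏ i ∈ Finset.range σ, ((n : ℂ) - (i : ℂ))) *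
      (α j * (q : ℂ) ^ (k : ℕ)) ^ (n - (σ : ℤ)) * x j k σ

/-- The linear form `v_n(x) = x₀ ∏_{k=1}^n P(q^k) + ∑_{l=0}^n u_l(x) ∏_{k=l+1}^n P(q^k)`. -/
def vseq (q : ℚ) (P : Polynomial ℚ) {m : ℕ} (d : ℕ) (α : Fin m → ℂ) (s : Fin m → ℕ)
    (x0 : ℂ) (x : Fin m → Fin d → ℕ → ℂ) (n : ℕ) : ℂ :=
  x0 * prodP q P n +
    ∑ l ∈ Finset.range (n + 1), useq q d α s x (l : ℤ) * ∏ k ∈ Finset.Icc (l + 1) n, Pq q P k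

/-- `v_n(x)` extended to a two-sided sequence (by `0` at negative indices; the values at
negative indices are irrelevant for the statements below). -/
def vext (q : ℚ) (P : Polynomial ℚ) {m : ℕ} (d : ℕ) (α : Fin m → ℂ) (s : Fin m → ℕ)
    (x0 : ℂ) (x : Fin m → Fin d → ℕ → ℂ) : ℤ → ℂ :=
  fun n => if 0 ≤ n then vseq q P d α s x0 x n.toNat else 0

/-- The difference operator `D_a(ξ)(n) = ξ(n) − a·ξ(n−1)`. -/
def Dop (a : ℂ) (ξ : ℤ → ℂ) : ℤ → ℂ := fun n => ξ n - a * ξ (n - 1)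

/-- The operator `∏_{j=1}^m D_{α_j·c}^{s_j}` (all the operators `D_a` commute, so the order
of composition is irrelevant). -/
def rowOp {m : ℕ} (α : Fin m → ℂ) (s : Fin m → ℕ) (c : ℂ) : (ℤ → ℂ) → (ℤ → ℂ) :=
  (List.finRange m).foldr (fun j acc => (Dop (α j * c))^[s j] ∘ acc) id

/-- The operator `∏_{k=1}^l ∏_{j=1}^m D_{α_j q^{ν−k}}^{s_j}`. -/
def bigOp {m : ℕ} (α : Fin m → ℂ) (s : Fin m → ℕ) (q : ℂ) (ν : ℤ) (l : ℕ) :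
    (ℤ → ℂ) → (ℤ → ℂ) :=
  (List.range l).foldr (fun k acc => rowOp α s (q ^ (ν - ((k : ℤ) + 1))) ∘ acc) id

/-- `v_{l,n}(x) = (∏_{k=1}^l ∏_{j=1}^m D_{α_j q^{−k}}^{s_j})(v_·(x))(n)`. -/
def vln (q : ℚ) (P : Polynomial ℚ) {m : ℕ} (d : ℕ) (α : Fin m → ℂ) (s : Fin m → ℕ)
    (x0 : ℂ) (x : Fin m → Fin d → ℕ → ℂ) (l n : ℕ) : ℂ :=
  bigOp α s (q : ℂ) 0 l (vext q P d α s x0 x) (n : ℤ)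

/-- `P(z) = p_d z^d` is a monomial. -/
def IsMonomialP (P : Polynomial ℚ) : Prop :=
  P = Polynomial.C P.leadingCoeff * Polynomial.X ^ P.natDegree

/-- `ε₀ = 1` if `P` is a monomial and `ε₀ = 0` otherwise. -/
def eps0 (P : Polynomial ℚ) : ℝ := if IsMonomialP P then 1 else 0

/-- The quantity `M` from the theorem. -/
def Mval (d S : ℕ) (P : Polynomial ℚ) : ℝ :=
  if IsMonomialP P then
    (d * S : ℝ) + 1 / 2 + Real.sqrt ((d * S : ℝ) ^ 2 + 1 / 4)
  else (d * S : ℝ) + 1 + Real.sqrt ((d * S : ℝ) * ((d * S : ℝ) + 1))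


def DopM (L : List ℂ) : (ℤ → ℂ) → (ℤ → ℂ) :=
  L.foldr (fun a g => Dop a ∘ g) id

@[simp] lemma DopM_nil (ξ : ℤ → ℂ) : DopM [] ξ = ξ := rfl

@[simp] lemma DopM_cons (a : ℂ) (L : List ℂ) (ξ : ℤ → ℂ) :
    DopM (a :: L) ξ = Dop a (DopM L ξ) := rfl

lemma DopM_append (L₁ L₂ : List ℂ) (ξ : ℤ → ℂ) :
    DopM (L₁ ++ L₂) ξ = DopM L₁ (DopM L₂ ξ) := by
  induction L₁ with
  | nil => rfl
  | cons a L ih => simp [DopM_cons, ih]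

lemma Dop_comm (a b : ℂ) (ξ : ℤ → ℂ) : Dop a (Dop b ξ) = Dop b (Dop a ξ) := by
  funext n; simp only [Dop]; ring

lemma DopM_perm {L₁ L₂ : List ℂ} (h : L₁.Perm L₂) (ξ : ℤ → ℂ) :
    DopM L₁ ξ = DopM L₂ ξ := by
  induction h with
  | nil => rfl
  | cons a _ ih => simp [DopM_cons, ih]
  | swap a b l => simp [DopM_cons, Dop_comm]
  | trans _ _ ih₁ ih₂ => rw [ih₁, ih₂]

lemma Dop_iterate (a : ℂ) (s : ℕ) (ξ : ℤ → ℂ) :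
    (Dop a)^[s] ξ = DopM (List.replicate s a) ξ := by
  induction s generalizing ξ with
  | zero => rfl
  | succ k ih =>
    rw [Function.iterate_succ_apply, ih]
    have : List.replicate (k+1) a = List.replicate k a ++ [a] := by
      rw [List.replicate_succ']
    rw [this, DopM_append]; rfl

@[simp] lemma Dop_zero_fun (a : ℂ) : Dop a (fun _ => (0:ℂ)) = fun _ => 0 := by
  funext n; simp [Dop]

lemma Dop_sub (a : ℂ) (f g : ℤ → ℂ) :
    Dop a (fun n => f n - g n) = fun n => Dop a f n - Dop a g n := by
  funext n; simp only [Dop]; ring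

lemma DopM_sub (L : List ℂ) (f g : ℤ → ℂ) :
    DopM L (fun n => f n - g n) = fun n => DopM L f n - DopM L g n := by
  induction L with
  | nil => rfl
  | cons a L ih => simp only [DopM_cons, ih, Dop_sub]

lemma Dop_sum {ι : Type*} (a : ℂ) (T : Finset ι) (f : ι → ℤ → ℂ) :
    Dop a (fun n => ∑ t ∈ T, f t n) = fun n => ∑ t ∈ T, Dop a (f t) n := by
  funext n; simp only [Dop, Finset.mul_sum, Finset.sum_sub_distrib]

lemma DopM_sum {ι : Type*} (L : List ℂ) (T : Finset ι) (f : ι → ℤ → ℂ) :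
    DopM L (fun n => ∑ t ∈ T, f t n) = fun n => ∑ t ∈ T, DopM L (f t) n := by
  induction L with
  | nil => rfl
  | cons a L ih => simp only [DopM_cons, ih, Dop_sum]

/-- `DopM L f n` only depends on the values of `f` on `[n - L.length, n]`. -/
lemma DopM_congr_local (L : List ℂ) (f g : ℤ → ℂ) (n : ℤ)
    (h : ∀ k : ℤ, n - L.length ≤ k → k ≤ n → f k = g k) :
    DopM L f n = DopM L g n := by
  induction L generalizing n with
  | nil => exact h n (by simp) le_rfl
  | cons a L ih =>
    simp only [DopM_cons, Dop]
    rw [ih n (fun k hk1 hk2 => h k (by simp at hk1 ⊢; omega) hk2),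
        ih (n-1) (fun k hk1 hk2 => h k (by simp at hk1 ⊢; omega) (by omega))]

@[simp] lemma DopM_zero_fun (L : List ℂ) : DopM L (fun _ => (0:ℂ)) = fun _ => 0 := by
  induction L with
  | nil => rfl
  | cons a L ih => simp only [DopM_cons, ih, Dop_zero_fun]

lemma DopM_eq_zero_local (L : List ℂ) (f : ℤ → ℂ) (n : ℤ)
    (h : ∀ k : ℤ, n - L.length ≤ k → k ≤ n → f k = 0) :
    DopM L f n = 0 := by
  rw [DopM_congr_local L f (fun _ => 0) n h, DopM_zero_fun]

/-- If `f` vanishes strictly below `n` (within reach), `DopM L f n = f n`. -/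
lemma DopM_eq_self_of_lower_zero (L : List ℂ) (f : ℤ → ℂ) (n : ℤ)
    (h : ∀ k : ℤ, n - L.length ≤ k → k < n → f k = 0) :
    DopM L f n = f n := by
  induction L generalizing n with
  | nil => rfl
  | cons a L ih =>
    simp only [DopM_cons, Dop]
    rw [ih n (fun k hk1 hk2 => h k (by simp at hk1 ⊢; omega) hk2),
      DopM_eq_zero_local L f (n-1) (fun k hk1 hk2 => h k (by simp; omega) (by omega))]
    ring



/-- `ξ n = p(n)·β^n` with `deg p ≤ t`. -/
def IsVP (t : ℕ) (β : ℂ) (ξ : ℤ → ℂ) : Prop :=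
  ∃ p : Polynomial ℂ, p.natDegree ≤ t ∧ ∀ n : ℤ, ξ n = p.eval (n : ℂ) * β ^ n

lemma top_coeff_comp (p : ℂ[X]) (k : ℕ) (hk : p.natDegree ≤ k) :
    (p.comp (X - C 1)).coeff k = p.coeff k := by
  rw [comp_eq_sum_left, Polynomial.sum_def, finset_sum_coeff]
  rw [Finset.sum_eq_single k]
  · by_cases hmem : k ∈ p.support
    · have hmon : ((X - C (1:ℂ)) ^ k).coeff k = 1 := by
        have h1 : ((X - C (1:ℂ)) ^ k).natDegree = k := by
          rw [natDegree_pow, natDegree_X_sub_C, mul_one]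
        have h2 := ((monic_X_sub_C (1:ℂ)).pow k).coeff_natDegree
        rw [h1] at h2
        exact h2
      rw [coeff_C_mul, hmon, mul_one]
    · have h0 : p.coeff k = 0 := Polynomial.notMem_support_iff.mp hmem
      simp [coeff_C_mul, h0]
  · intro e he hne
    have he' : e ≤ p.natDegree := Polynomial.le_natDegree_of_mem_supp e he
    have helt : e < k := lt_of_le_of_ne (le_trans he' hk) hne
    have hlt : ((X - C (1:ℂ)) ^ e).natDegree < k := by
      rw [natDegree_pow, natDegree_X_sub_C, mul_one]; exact helt
    rw [coeff_C_mul, coeff_eq_zero_of_natDegree_lt hlt, mul_zero]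
  · intro h; simp [Polynomial.notMem_support_iff.mp h]

lemma eval_comp_sub_one (p : ℂ[X]) (n : ℤ) :
    (p.comp (X - C 1)).eval (n : ℂ) = p.eval ((n : ℂ) - 1) := by
  simp [eval_comp]

lemma isVP_dop_preserve {t : ℕ} {β : ℂ} (hβ : β ≠ 0) {ξ : ℤ → ℂ} (b : ℂ)
    (h : IsVP t β ξ) : IsVP t β (Dop b ξ) := by
  obtain ⟨p, hdeg, hval⟩ := h
  refine ⟨p - C (b / β) * p.comp (X - C 1), ?_, ?_⟩
  · refine le_trans (natDegree_sub_le _ _) (max_le hdeg ?_)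
    refine le_trans (natDegree_C_mul_le _ _) ?_
    exact le_trans natDegree_comp_le (by rw [natDegree_X_sub_C, mul_one]; exact hdeg)
  · intro n
    have hzp : β ^ n = β ^ (n - 1) * β := by
      rw [← zpow_add_one₀ hβ]; ring_nf
    simp only [Dop, hval, eval_sub, eval_mul, eval_C, eval_comp_sub_one]
    have : ((n : ℂ) - 1) = ((n - 1 : ℤ) : ℂ) := by push_cast; ring
    rw [this, hzp]
    field_simp

lemma isVP_dop_drop {t : ℕ} {β : ℂ} (hβ : β ≠ 0) {ξ : ℤ → ℂ}
    (h : IsVP (t + 1) β ξ) : IsVP t β (Dop β ξ) := by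
  obtain ⟨p, hdeg, hval⟩ := h
  refine ⟨p - p.comp (X - C 1), ?_, ?_⟩
  · rw [natDegree_le_iff_coeff_eq_zero]
    intro N hN
    have hdN : p.natDegree ≤ N := le_trans hdeg hN
    rw [coeff_sub, top_coeff_comp p N hdN, sub_self]
  · intro n
    have hzp : β ^ n = β ^ (n - 1) * β := by
      rw [← zpow_add_one₀ hβ]; ring_nf
    simp only [Dop, hval, eval_sub, eval_comp_sub_one]
    have : ((n : ℂ) - 1) = ((n - 1 : ℤ) : ℂ) := by push_cast; ring
    rw [this, hzp]
    ring

lemma isVP_zero_dop {β : ℂ} (hβ : β ≠ 0) {ξ : ℤ → ℂ}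
    (h : IsVP 0 β ξ) : Dop β ξ = fun _ => 0 := by
  obtain ⟨p, hdeg, hval⟩ := h
  have hp := Polynomial.eq_C_of_natDegree_le_zero hdeg
  funext n
  have hzp : β ^ n = β ^ (n - 1) * β := by
    rw [← zpow_add_one₀ hβ]; ring_nf
  have h1 := hval n
  have h2 := hval (n - 1)
  rw [hp, eval_C] at h1 h2
  simp only [Dop, h1, h2, hzp]
  ring



lemma kill_lemma {β : ℂ} (hβ : β ≠ 0) :
    ∀ (t : ℕ) (ξ : ℤ → ℂ) (L : List ℂ), IsVP t β ξ → t < L.count β →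
      DopM L ξ = fun _ => 0 := by
  intro t
  induction t with
  | zero =>
    intro ξ L h hcount
    have hmem : β ∈ L := List.count_pos_iff.mp (by omega)
    have hperm : L.Perm (L.erase β ++ [β]) :=
      (List.perm_cons_erase hmem).trans (List.perm_append_singleton β _).symm
    funext n
    rw [DopM_perm hperm, DopM_append]
    have h0 : DopM [β] ξ = fun _ => 0 := by
      simpa [DopM_cons] using isVP_zero_dop hβ h
    rw [h0, DopM_zero_fun]
  | succ t ih =>
    intro ξ L h hcount
    have hmem : β ∈ L := List.count_pos_iff.mp (by omega)
    have hperm : L.Perm (L.erase β ++ [β]) :=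
      (List.perm_cons_erase hmem).trans (List.perm_append_singleton β _).symm
    funext n
    rw [DopM_perm hperm, DopM_append]
    have h1 : DopM [β] ξ = Dop β ξ := rfl
    rw [h1]
    have h2 : IsVP t β (Dop β ξ) := isVP_dop_drop hβ h
    have h3 : t < (L.erase β).count β := by
      rw [List.count_erase_self]; omega
    rw [ih _ _ h2 h3]

lemma coeff_X_sub_one_pow (k : ℕ) :
    ((X - C (1:ℂ)) ^ (k + 1)).coeff k = -(k + 1 : ℂ) := by
  induction k with
  | zero => simp
  | succ k ih =>
    have hsplit : ((X - C (1:ℂ)) ^ (k + 2)) = ((X - C 1) ^ (k+1)) * X - ((X - C 1) ^ (k+1)) * C 1 := by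
      rw [← mul_sub]; ring
    have hmon : ((X - C (1:ℂ)) ^ (k+1)).coeff (k+1) = 1 := by
      have h1 : ((X - C (1:ℂ)) ^ (k+1)).natDegree = k+1 := by
        rw [natDegree_pow, natDegree_X_sub_C, mul_one]
      have h2 := ((monic_X_sub_C (1:ℂ)).pow (k+1)).coeff_natDegree
      rw [h1] at h2; exact h2
    rw [hsplit, coeff_sub, coeff_mul_X, coeff_mul_C, ih, hmon]
    push_cast; ring

/-- Kill the top coefficient: a polynomial `p₀` with
`p₀ - c·p₀∘(X-1)` of degree `≤ k` and `k`-th coefficient `A`. -/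
lemma kill_top (c A : ℂ) (k : ℕ) :
    ∃ p₀ : ℂ[X], p₀.natDegree ≤ k + (if c = 1 then 1 else 0) ∧
      (p₀ - C c * p₀.comp (X - C 1)).natDegree ≤ k ∧
      (p₀ - C c * p₀.comp (X - C 1)).coeff k = A := by
  by_cases hc : c = 1
  · subst hc
    refine ⟨C (A / (k+1)) * X ^ (k+1), ?_, ?_, ?_⟩
    · rw [if_pos rfl]
      refine le_trans (natDegree_C_mul_le _ _) ?_
      rw [natDegree_X_pow]
    · rw [natDegree_le_iff_coeff_eq_zero]
      intro N hN
      simp only [coeff_sub, mul_comp, C_comp, X_pow_comp, coeff_C_mul]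
      rcases eq_or_lt_of_le (Nat.succ_le_of_lt hN) with hEq | hlt
      · have hNk : N = k + 1 := hEq.symm
        subst hNk
        have hmon : ((X - C (1:ℂ)) ^ (k+1)).coeff (k+1) = 1 := by
          have h1 : ((X - C (1:ℂ)) ^ (k+1)).natDegree = k+1 := by
            rw [natDegree_pow, natDegree_X_sub_C, mul_one]
          have h2 := ((monic_X_sub_C (1:ℂ)).pow (k+1)).coeff_natDegree
          rw [h1] at h2; exact h2
        rw [coeff_X_pow, if_pos rfl, hmon]
        ring
      · have hd1 : ((X:ℂ[X]) ^ (k+1)).natDegree < N := by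
          rw [natDegree_X_pow]; omega
        have hd2 : (((X:ℂ[X]) - C 1) ^ (k+1)).natDegree < N := by
          rw [natDegree_pow, natDegree_X_sub_C, mul_one]; omega
        rw [coeff_eq_zero_of_natDegree_lt hd1, coeff_eq_zero_of_natDegree_lt hd2]
        ring
    · simp only [coeff_sub, mul_comp, C_comp, X_pow_comp, coeff_C_mul]
      rw [coeff_X_pow, if_neg (by omega), coeff_X_sub_one_pow]
      have : ((k:ℂ) + 1) ≠ 0 := by
        have := Nat.cast_add_one_ne_zero (R := ℂ) k
        exact_mod_cast this
      field_simp
      ring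
  · refine ⟨C (A / (1 - c)) * X ^ k, ?_, ?_, ?_⟩
    · refine le_trans (natDegree_C_mul_le _ _) ?_
      simp [if_neg hc]
    · rw [natDegree_le_iff_coeff_eq_zero]
      intro N hN
      simp only [coeff_sub, mul_comp, C_comp, X_pow_comp, coeff_C_mul]
      have hd1 : ((X:ℂ[X]) ^ k).natDegree < N := by rw [natDegree_X_pow]; omega
      have hd2 : (((X:ℂ[X]) - C 1) ^ k).natDegree < N := by
        rw [natDegree_pow, natDegree_X_sub_C, mul_one]; omega
      rw [coeff_eq_zero_of_natDegree_lt hd1, coeff_eq_zero_of_natDegree_lt hd2]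
      ring
    · have hmon : ((X - C (1:ℂ)) ^ k).coeff k = 1 := by
        have h1 : ((X - C (1:ℂ)) ^ k).natDegree = k := by
          rw [natDegree_pow, natDegree_X_sub_C, mul_one]
        have h2 := ((monic_X_sub_C (1:ℂ)).pow k).coeff_natDegree
        rw [h1] at h2; exact h2
      simp only [coeff_sub, mul_comp, C_comp, X_pow_comp, coeff_C_mul]
      rw [coeff_X_pow, if_pos rfl, hmon]
      have h1c : (1:ℂ) - c ≠ 0 := fun h => hc (by linear_combination -h)
      field_simp

lemma poly_solve (c : ℂ) :
    ∀ (N : ℕ) (r : ℂ[X]), r.natDegree ≤ N →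
      ∃ p : ℂ[X], p.natDegree ≤ N + (if c = 1 then 1 else 0) ∧
        p - C c * p.comp (X - C 1) = r := by
  intro N
  induction N with
  | zero =>
    intro r hr
    obtain ⟨p₀, hp₀deg, hwdeg, hwcoeff⟩ := kill_top c (r.coeff 0) 0
    refine ⟨p₀, by simpa using hp₀deg, ?_⟩
    have h1 : p₀ - C c * p₀.comp (X - C 1) = C (r.coeff 0) := by
      have := Polynomial.eq_C_of_natDegree_le_zero hwdeg
      rw [this, hwcoeff]
    rw [h1]
    exact (Polynomial.eq_C_of_natDegree_le_zero hr).symm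
  | succ N ih =>
    intro r hr
    obtain ⟨p₀, hp₀deg, hwdeg, hwcoeff⟩ := kill_top c (r.coeff (N+1)) (N+1)
    set w := p₀ - C c * p₀.comp (X - C 1) with hw
    have hr' : (r - w).natDegree ≤ N := by
      rw [natDegree_le_iff_coeff_eq_zero]
      intro M hM
      rcases eq_or_lt_of_le (Nat.succ_le_of_lt hM) with hEq | hlt
      · have : M = N + 1 := hEq.symm
        subst this
        rw [coeff_sub, hwcoeff, sub_self]
      · rw [coeff_sub, coeff_eq_zero_of_natDegree_lt (lt_of_le_of_lt hr hlt),
          coeff_eq_zero_of_natDegree_lt (lt_of_le_of_lt hwdeg hlt), sub_self]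
    obtain ⟨p₁, hp₁deg, hp₁⟩ := ih (r - w) hr'
    refine ⟨p₀ + p₁, ?_, ?_⟩
    · refine le_trans (natDegree_add_le _ _) (max_le hp₀deg ?_)
      omega
    · rw [add_comp, mul_add, add_sub_add_comm, hp₁, ← hw]
      ring

lemma step_solve {a : ℂ} (ha : a ≠ 0) (b : ℂ) (t : ℕ) (φ : ℤ → ℂ)
    (hφ : IsVP t a φ) :
    ∃ ψ : ℤ → ℂ, IsVP (t + (if b = a then 1 else 0)) a ψ ∧ Dop b ψ = φ := by
  obtain ⟨pφ, hdeg, hval⟩ := hφ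
  have hba : (b / a = 1) ↔ b = a := div_eq_one_iff_eq ha
  obtain ⟨p, hpdeg, hpid⟩ := poly_solve (b / a) t pφ hdeg
  refine ⟨fun n => p.eval (n : ℂ) * a ^ n, ⟨p, ?_, fun _ => rfl⟩, ?_⟩
  · have hiff : (if b / a = 1 then (1:ℕ) else 0) = (if b = a then 1 else 0) := by
      by_cases hb : b = a
      · rw [if_pos (hba.mpr hb), if_pos hb]
      · rw [if_neg (fun h => hb (hba.mp h)), if_neg hb]
    rw [← hiff]
    exact hpdeg
  · funext n
    have hzp : a ^ n = a ^ (n - 1) * a := by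
      rw [← zpow_add_one₀ ha]; ring_nf
    have heval := congrArg (fun pp => Polynomial.eval ((n:ℂ)) pp) hpid
    simp only [eval_sub, eval_mul, eval_C, eval_comp_sub_one] at heval
    have hcast : ((n : ℂ) - 1) = ((n - 1 : ℤ) : ℂ) := by push_cast; ring
    rw [hcast] at heval
    simp only [Dop, hval, hzp]
    have : b * (p.eval ((n-1:ℤ):ℂ) * a ^ (n-1)) = (b/a) * p.eval ((n-1:ℤ):ℂ) * (a ^ (n-1) * a) := by
      field_simp
    rw [this, ← heval]
    ring

lemma dopM_solve {a : ℂ} (ha : a ≠ 0) :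
    ∀ (L : List ℂ) (t : ℕ) (h : ℤ → ℂ), IsVP t a h →
      ∃ H : ℤ → ℂ, IsVP (t + L.count a) a H ∧ DopM L H = h := by
  intro L
  induction L with
  | nil => intro t h hh; exact ⟨h, by simpa using hh, rfl⟩
  | cons b L ih =>
    intro t h hh
    obtain ⟨ψ, hψvp, hψ⟩ := step_solve ha b t h hh
    obtain ⟨H, hHvp, hH⟩ := ih _ ψ hψvp
    refine ⟨H, ?_, by rw [DopM_cons, hH, hψ]⟩
    have hcount : (b :: L).count a = L.count a + (if b = a then 1 else 0) := by
      rw [List.count_cons]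
      by_cases hb : b = a <;> simp [hb]
    have harr : t + (L.count a + (if b = a then 1 else 0))
        = t + (if b = a then 1 else 0) + L.count a := by omega
    rw [hcount, harr]
    exact hHvp


lemma prop_main (q : ℂ) (hq : q ≠ 0) (d : ℕ) (pc : ℕ → ℂ) (A : ℤ → ℂ)
    (hA : ∀ n : ℤ, 1 ≤ n → A n = ∑ i ∈ Finset.range (d+1), pc i * ((q ^ i : ℂ) ^ n))
    (M : List ℂ) :
    ∀ (AL : List ℂ), (∀ a ∈ AL, a ≠ 0) →
      (∀ a ∈ AL, ∀ i : ℕ, i ≤ d → AL.count a ≤ M.count (a * q ^ i)) →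
      ∀ (x e : ℤ → ℂ), (∀ n : ℤ, 1 ≤ n → x n = A n * x (n-1) + e n) →
      DopM M e = (fun _ => 0) →
      ∀ n1 : ℤ, (AL.length : ℤ) ≤ n1 →
      (∀ n : ℤ, n1 ≤ n → n ≤ n1 + M.length - AL.length → DopM AL x n = 0) →
      ∀ n : ℤ, n1 ≤ n → DopM AL x n = 0 := by
  intro AL
  induction AL with
  | nil =>
    intro _ _ x e hrec he n1 hn1 hwin n hn
    simp only [DopM_nil] at hwin ⊢
    -- strong induction on j := (n - n1).toNat
    have key : ∀ j : ℕ, x (n1 + j) = 0 := by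
      intro j
      induction j using Nat.strong_induction_on with
      | _ j ihj =>
        by_cases hj : (j : ℤ) ≤ (M.length : ℤ)
        · exact hwin (n1 + j) (by omega) (by simp only [List.length_nil]; push_cast; omega)
        · push_neg at hj
          set nn : ℤ := n1 + j with hnn
          have hn1' : (0:ℤ) ≤ n1 := by simpa using hn1
          have hxlow : ∀ k : ℤ, n1 ≤ k → k < nn → x k = 0 := by
            intro k hk1 hk2
            have hk : k = n1 + ((k - n1).toNat : ℤ) := by omega
            rw [hk]
            exact ihj (k - n1).toNat (by omega)
          set f : ℤ → ℂ := fun k => x k - A k * x (k-1) with hf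
          have hfe : ∀ k : ℤ, nn - M.length ≤ k → k ≤ nn → f k = e k := by
            intro k hk1 hk2
            have h1k : (1:ℤ) ≤ k := by omega
            simp only [hf]
            rw [hrec k h1k]; ring
          have h1 : DopM M f nn = 0 := by
            rw [DopM_congr_local M f e nn hfe]
            have := congrFun he nn
            simpa using this
          have h2 : DopM M f nn = f nn := by
            apply DopM_eq_self_of_lower_zero
            intro k hk1 hk2
            simp only [hf]
            rw [hxlow k (by omega) hk2, hxlow (k-1) (by omega) (by omega)]
            ring
          have h3 : f nn = 0 := by rw [← h2, h1]
          have h4 : x (nn - 1) = 0 := hxlow (nn - 1) (by omega) (by omega)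
          have h5 := h3
          simp only [hf] at h5
          rw [h4] at h5
          simpa using h5
    have hn' : n = n1 + ((n - n1).toNat : ℤ) := by omega
    rw [hn']
    exact key (n - n1).toNat
  | cons a AL' ih =>
    intro hAL0 hcond x e hrec he n1 hn1 hwin n hn
    have ha : a ≠ 0 := hAL0 a List.mem_cons_self
    set y : ℤ → ℂ := DopM AL' x with hy
    set c : ℂ := y (n1 - 1) with hc
    -- geometric description of y on the window
    have hgeo : ∀ jj : ℕ, (n1 - 1 + jj ≤ n1 + M.length - (a :: AL').length) →
        y (n1 - 1 + jj) = c * a ^ (jj : ℕ) := by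
      intro jj
      induction jj with
      | zero => intro _; simp [hc]
      | succ k ihk =>
        intro hbound
        have hwv := hwin (n1 + k) (by omega) (by push_cast at hbound ⊢; omega)
        simp only [DopM_cons, ← hy, Dop] at hwv
        have he1 : n1 + (k:ℤ) - 1 = n1 - 1 + k := by ring
        have he2 : n1 - 1 + ((k:ℕ)+1 : ℕ) = n1 + k := by push_cast; ring
        rw [he2]
        have hyk := ihk (by push_cast at hbound ⊢; omega)
        rw [he1, hyk] at hwv
        have : y (n1 + k) = a * (c * a ^ k) := by linear_combination hwv
        rw [this, pow_succ]; ring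
    set h : ℤ → ℂ := fun nn => (c * a ^ (-(n1-1))) * a ^ nn with hhdef
    have hyh : ∀ nn : ℤ, n1 - 1 ≤ nn → nn ≤ n1 + M.length - (a :: AL').length →
        y nn = h nn := by
      intro nn h1 h2
      have hj : nn = n1 - 1 + ((nn - (n1-1)).toNat : ℤ) := by omega
      have hgg := hgeo (nn - (n1-1)).toNat (by rw [← hj]; exact h2)
      rw [← hj] at hgg
      rw [hgg]
      simp only [hhdef]
      rw [← zpow_natCast a (nn - (n1-1)).toNat]
      rw [show (((nn - (n1-1)).toNat : ℤ)) = nn - (n1 - 1) by omega]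
      rw [show nn - (n1 - 1) = nn + (-(n1-1)) by ring, zpow_add₀ ha]
      ring
    have hhvp : IsVP 0 a h := by
      refine ⟨Polynomial.C (c * a ^ (-(n1-1))), le_of_eq (natDegree_C _), fun nn => ?_⟩
      simp only [hhdef, eval_C]
    obtain ⟨H, hHvp, hH⟩ := dopM_solve ha AL' 0 h hhvp
    rw [zero_add] at hHvp
    obtain ⟨p, hpdeg, hpval⟩ := hHvp
    set Atil : ℤ → ℂ := fun nn => ∑ i ∈ Finset.range (d+1), pc i * ((q ^ i : ℂ) ^ nn) with hAtil
    set xt : ℤ → ℂ := fun nn => x nn - H nn with hxt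
    set et : ℤ → ℂ := fun nn => e nn - (H nn - Atil nn * H (nn-1)) with het
    have hrec' : ∀ nn : ℤ, 1 ≤ nn → xt nn = A nn * xt (nn-1) + et nn := by
      intro nn h1
      simp only [hxt, het, hAtil]
      rw [hrec nn h1, hA nn h1]
      ring
    have he' : DopM M et = fun _ => 0 := by
      have hkillH : DopM M H = fun _ => 0 := by
        have hc0 := hcond a List.mem_cons_self 0 (Nat.zero_le d)
        rw [List.count_cons_self] at hc0
        simp only [pow_zero, mul_one] at hc0
        exact kill_lemma ha _ _ M ⟨p, hpdeg, hpval⟩ (by omega)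
      have hkillg : ∀ i ∈ Finset.range (d+1),
          DopM M (fun k => pc i * ((q ^ i : ℂ) ^ k * H (k - 1))) = fun _ => 0 := by
        intro i hi
        have haq : a * q ^ i ≠ 0 := mul_ne_zero ha (pow_ne_zero i hq)
        have hc0 := hcond a List.mem_cons_self i (Nat.lt_succ_iff.mp (Finset.mem_range.mp hi))
        rw [List.count_cons_self] at hc0
        have hvp : IsVP (List.count a AL') (a * q ^ i)
            (fun k => pc i * ((q ^ i : ℂ) ^ k * H (k - 1))) := by
          refine ⟨Polynomial.C (pc i * a⁻¹) * p.comp (Polynomial.X - Polynomial.C 1), ?_, ?_⟩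
          · refine le_trans (natDegree_C_mul_le _ _) ?_
            exact le_trans natDegree_comp_le (by rw [natDegree_X_sub_C, mul_one]; exact hpdeg)
          · intro nn
            show pc i * ((q ^ i : ℂ) ^ nn * H (nn - 1)) = _
            rw [hpval (nn - 1)]
            simp only [eval_mul, eval_C, eval_comp_sub_one]
            rw [show ((nn:ℂ) - 1) = ((nn - 1 : ℤ) : ℂ) by push_cast; ring]
            rw [mul_zpow, zpow_sub_one₀ ha nn]
            ring
        exact kill_lemma haq _ _ M hvp (by omega)
      funext nn
      have hsub1 : DopM M et nn = DopM M e nn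
          - DopM M (fun k => H k - Atil k * H (k-1)) nn := by
        have h7 := DopM_sub M e (fun k => H k - Atil k * H (k-1))
        have h6 : et = fun k => e k - (fun k' => H k' - Atil k' * H (k'-1)) k := rfl
        rw [h6, h7]
      have hsub2 : DopM M (fun k => H k - Atil k * H (k-1)) nn
          = DopM M H nn - DopM M (fun k => Atil k * H (k-1)) nn := by
        have h7 := DopM_sub M H (fun k => Atil k * H (k-1))
        have h6 : (fun k => H k - Atil k * H (k-1))
            = fun k => H k - (fun k' => Atil k' * H (k'-1)) k := rfl
        rw [h6, h7]
      have hsub3 : DopM M (fun k => Atil k * H (k-1)) nn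
          = ∑ i ∈ Finset.range (d+1),
              DopM M (fun k => pc i * ((q ^ i : ℂ) ^ k * H (k - 1))) nn := by
        have h6 : (fun k => Atil k * H (k-1))
            = fun k => ∑ i ∈ Finset.range (d+1),
                (fun i' k' => pc i' * ((q ^ i' : ℂ) ^ k' * H (k' - 1))) i k := by
          funext k
          simp only [hAtil, Finset.sum_mul]
          exact Finset.sum_congr rfl (fun i _ => by ring)
        rw [h6, DopM_sum]
      rw [hsub1, hsub2, hsub3, congrFun he nn, congrFun hkillH nn,
        Finset.sum_eq_zero (fun i hi => congrFun (hkillg i hi) nn)]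
      simp
    -- apply induction hypothesis
    have hAL0' : ∀ b ∈ AL', b ≠ 0 := fun b hb => hAL0 b (List.mem_cons_of_mem a hb)
    have hcond' : ∀ b ∈ AL', ∀ i : ℕ, i ≤ d → AL'.count b ≤ M.count (b * q ^ i) := by
      intro b hb i hid
      refine le_trans ?_ (hcond b (List.mem_cons_of_mem a hb) i hid)
      exact (List.sublist_cons_self a AL').count_le b
    have hwin' : ∀ nn : ℤ, n1 - 1 ≤ nn → nn ≤ (n1 - 1) + M.length - AL'.length →
        DopM AL' xt nn = 0 := by
      intro nn h1 h2
      have hdx : DopM AL' xt nn = y nn - h nn := by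
        have : DopM AL' xt = fun k => y k - DopM AL' H k := by
          simp only [hxt]
          rw [DopM_sub]
        rw [this, hH]
      rw [hdx, hyh nn h1 (by simp only [List.length_cons] at *; push_cast at h2 ⊢; omega)]
      ring
    have hprop := ih hAL0' hcond' xt et hrec' he' (n1 - 1)
      (by simp only [List.length_cons] at hn1; push_cast at hn1 ⊢; omega) hwin'
    -- conclude
    simp only [DopM_cons, ← hy, Dop]
    have hy1 : y n = h n := by
      have := hprop n (by omega)
      have hdx : DopM AL' xt n = y n - h n := by
        have h5 : DopM AL' xt = fun k => y k - DopM AL' H k := by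
          simp only [hxt]; rw [DopM_sub]
        rw [h5, hH]
      rw [hdx] at this
      exact sub_eq_zero.mp this
    have hy2 : y (n - 1) = h (n - 1) := by
      have := hprop (n-1) (by omega)
      have hdx : DopM AL' xt (n-1) = y (n-1) - h (n-1) := by
        have h5 : DopM AL' xt = fun k => y k - DopM AL' H k := by
          simp only [hxt]; rw [DopM_sub]
        rw [h5, hH]
      rw [hdx] at this
      exact sub_eq_zero.mp this
    rw [hy1, hy2]
    simp only [hhdef]
    rw [zpow_sub_one₀ ha n]
    field_simp
    ring


/-! ### list bookkeeping -/

lemma list_sum_range_eq (n : ℕ) (f : ℕ → ℕ) :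
    ((List.range n).map f).sum = ∑ i ∈ Finset.range n, f i := by
  rw [Finset.sum_range, Fin.sum_univ_def, ← List.map_coe_finRange_eq_range (n := n), List.map_map]; rfl

lemma list_sum_finRange_eq (m : ℕ) (f : Fin m → ℕ) :
    ((List.finRange m).map f).sum = ∑ j : Fin m, f j := (Fin.sum_univ_def f).symm

lemma count_flatMap' {ι : Type*} (l : List ι) (f : ι → List ℂ) (x : ℂ) :
    (l.flatMap f).count x = (l.map (fun i => (f i).count x)).sum := by
  induction l with
  | nil => rfl
  | cons a l ih => simp [List.flatMap_cons, List.count_append, ih]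

lemma length_flatMap' {ι : Type*} (l : List ι) (f : ι → List ℂ) :
    (l.flatMap f).length = (l.map (fun i => (f i).length)).sum := by
  induction l with
  | nil => rfl
  | cons a l ih => simp [List.flatMap_cons, ih]

lemma count_replicate' (x b : ℂ) (n : ℕ) :
    (List.replicate n b).count x = if b = x then n else 0 := by
  rw [List.count_replicate]
  simp

lemma list_sum_range_eq' (n : ℕ) (f : ℤ → ℕ) :
    ((do let a ← List.range n
         pure (a : ℤ) : List ℤ).map f).sum = ∑ i ∈ Finset.range n, f i := by
  induction n with
  | zero => simp
  | succ n ih => simp_all [List.range_succ, Finset.sum_range_succ]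

/-! ### operators as lists -/

lemma foldr_row_eq {m : ℕ} (α : Fin m → ℂ) (s : Fin m → ℕ) (c : ℂ)
    (lst : List (Fin m)) (ξ : ℤ → ℂ) :
    (lst.foldr (fun j acc => (Dop (α j * c))^[s j] ∘ acc) id) ξ
      = DopM (lst.flatMap (fun j => List.replicate (s j) (α j * c))) ξ := by
  induction lst generalizing ξ with
  | nil => rfl
  | cons j L ih =>
    simp only [List.foldr_cons, Function.comp_apply, List.flatMap_cons, DopM_append]
    rw [ih ξ, Dop_iterate]

lemma rowOp_eq {m : ℕ} (α : Fin m → ℂ) (s : Fin m → ℕ) (c : ℂ) (ξ : ℤ → ℂ) :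
    rowOp α s c ξ = DopM ((List.finRange m).flatMap (fun j => List.replicate (s j) (α j * c))) ξ :=
  foldr_row_eq α s c _ ξ

lemma foldr_comp_init {β : Type*} (F : β → (ℤ→ℂ)→(ℤ→ℂ)) (L : List β) (g : (ℤ→ℂ)→(ℤ→ℂ)) (ξ : ℤ→ℂ) :
    (L.foldr (fun k acc => F k ∘ acc) g) ξ = (L.foldr (fun k acc => F k ∘ acc) id) (g ξ) := by
  induction L generalizing ξ with
  | nil => rfl
  | cons b L ih => simp only [List.foldr_cons, Function.comp_apply, ih]

lemma bigOp_succ {m : ℕ} (α : Fin m → ℂ) (s : Fin m → ℕ) (q : ℂ) (ν : ℤ) (l : ℕ) (ξ : ℤ → ℂ) :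
    bigOp α s q ν (l+1) ξ = bigOp α s q ν l (rowOp α s (q ^ (ν - ((l:ℤ)+1))) ξ) := by
  unfold bigOp
  simp only [List.range_succ]
  have hsplit : ((do
      let a ← List.range l ++ [l]
      pure ((a : ℕ) : ℤ)) : List ℤ)
      = ((do let a ← List.range l
             pure ((a : ℕ) : ℤ)) : List ℤ) ++ [(l:ℤ)] := by
    simp
  rw [hsplit, List.foldr_append]
  rw [foldr_comp_init]
  rfl

lemma bigOp_eq {m : ℕ} (α : Fin m → ℂ) (s : Fin m → ℕ) (q : ℂ) (ν : ℤ) (l : ℕ) (ξ : ℤ → ℂ) :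
    bigOp α s q ν l ξ = DopM ((List.range l).flatMap (fun k => (List.finRange m).flatMap
      (fun j => List.replicate (s j) (α j * q ^ (ν - ((k:ℤ)+1)))))) ξ := by
  induction l generalizing ξ with
  | zero => rfl
  | succ l ih =>
    rw [bigOp_succ, ih, rowOp_eq, ← DopM_append, List.range_succ]
    simp

/-! ### the recurrence for `vseq` -/

lemma vseq_rec (q : ℚ) (P : Polynomial ℚ) {m : ℕ} (d : ℕ) (α : Fin m → ℂ) (s : Fin m → ℕ)
    (x0 : ℂ) (x : Fin m → Fin d → ℕ → ℂ) (n : ℕ) :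
    vseq q P d α s x0 x (n+1)
      = Pq q P (n+1) * vseq q P d α s x0 x n + useq q d α s x (((n+1 : ℕ)) : ℤ) := by
  simp only [vseq]
  rw [Finset.sum_range_succ]
  have h1 : prodP q P (n+1) = prodP q P n * Pq q P (n+1) := Finset.prod_range_succ _ _
  have h2 : Finset.Icc (n+1+1) (n+1) = (∅ : Finset ℕ) := Finset.Icc_eq_empty (by omega)
  have h3 : ∀ l ∈ Finset.range (n+1),
      useq q d α s x l * ∏ k ∈ Finset.Icc (l+1) (n+1), Pq q P k
      = (useq q d α s x l * ∏ k ∈ Finset.Icc (l+1) n, Pq q P k) * Pq q P (n+1) := by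
    intro l hl
    have hl' := Finset.mem_range.mp hl
    rw [Finset.prod_Icc_succ_top (by omega : l+1 ≤ n+1)]
    ring
  rw [Finset.sum_congr rfl h3, ← Finset.sum_mul, h1, h2, Finset.prod_empty]
  push_cast
  ring

/-! ### generating functions -/

def rpoly (L : List ℂ) : Polynomial ℂ :=
  (L.map (fun a => 1 - Polynomial.C a * Polynomial.X)).prod

lemma rpoly_ne_zero (L : List ℂ) : rpoly L ≠ 0 := by
  apply List.prod_ne_zero
  intro h0
  obtain ⟨a, _, ha⟩ := List.mem_map.mp h0
  have := congrArg (fun p => Polynomial.coeff p 0) ha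
  simp at this

lemma DopM_neg_zero (L : List ℂ) (x : ℤ → ℂ) (hneg : ∀ n : ℤ, n < 0 → x n = 0)
    (n : ℤ) (hn : n < 0) : DopM L x n = 0 :=
  DopM_eq_zero_local L x n (fun k _ hk2 => hneg k (by omega))

lemma coeff_rpoly_mul (L : List ℂ) (x : ℤ → ℂ) (hneg : ∀ n : ℤ, n < 0 → x n = 0) :
    ∀ n : ℕ, PowerSeries.coeff n
        ((rpoly L : PowerSeries ℂ) * PowerSeries.mk (fun k : ℕ => x k))
      = DopM L x n := by
  induction L with
  | nil =>
    intro n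
    simp [rpoly]
  | cons a L ih =>
    intro n
    have hsplit : (rpoly (a :: L) : PowerSeries ℂ)
        = (1 - PowerSeries.C a * PowerSeries.X) * (rpoly L : PowerSeries ℂ) := by
      have : rpoly (a :: L) = (1 - Polynomial.C a * Polynomial.X) * rpoly L := by
        simp [rpoly]
      rw [this, Polynomial.coe_mul]
      congr 1
      rw [Polynomial.coe_sub, Polynomial.coe_mul, Polynomial.coe_one,
        Polynomial.coe_C, Polynomial.coe_X]
    rw [hsplit, mul_assoc, sub_mul, one_mul, map_sub, mul_assoc, PowerSeries.coeff_C_mul]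
    rcases n with _ | k
    · rw [PowerSeries.coeff_zero_X_mul, ih 0]
      have : DopM L x ((0:ℕ):ℤ) - a * DopM L x (((0:ℕ):ℤ) - 1) = DopM (a::L) x ((0:ℕ):ℤ) := rfl
      rw [← this, DopM_neg_zero L x hneg (((0:ℕ):ℤ) - 1) (by omega)]
    · rw [PowerSeries.coeff_succ_X_mul, ih (k+1), ih k]
      have : DopM (a::L) x (((k+1:ℕ)):ℤ) = DopM L x ((k+1:ℕ):ℤ) - a * DopM L x (((k+1:ℕ):ℤ) - 1) := rfl
      rw [this]
      have hc : (((k+1:ℕ):ℤ) - 1) = ((k:ℕ):ℤ) := by push_cast; ring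
      rw [hc]


/-- if `dS+1` consecutive values `v_{l₀,n}(ω)` vanish, then the generating
function of `v_n(ω)` is rational. -/
theorem stmt_4
    (q₁ q₂ : ℤ) (hq₁ : q₁ ≠ 0) (hq₂ : q₂ ≠ 0) (hcop : Int.gcd q₁ q₂ = 1)
    (habs : |q₂| < |q₁|)
    (q : ℚ) (hq : q = (q₁ : ℚ) / (q₂ : ℚ))
    (P : Polynomial ℚ) (d : ℕ) (hd : d = P.natDegree) (hd1 : 1 ≤ d)
    (hP : ∀ n : ℕ, 1 ≤ n → P.eval (q ^ n) ≠ 0)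
    (m : ℕ) (α : Fin m → ℂ) (hα : ∀ j, α j ≠ 0)
    (s : Fin m → ℕ) (hs : ∀ j, 0 < s j)
    (S : ℕ) (hS : S = ∑ j, s j)
    (ω0 : ℂ) (ω : Fin m → Fin d → ℕ → ℂ)
    (l0 n0 : ℕ) (hn0 : S * l0 ≤ n0)
    (hvanish : ∀ i : ℕ, i ≤ d * S → vln q P d α s ω0 ω l0 (n0 + i) = 0) :
    ∃ p r : Polynomial ℂ, r ≠ 0 ∧
      (r : PowerSeries ℂ) * PowerSeries.mk (fun n => vseq q P d α s ω0 ω n)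
        = (p : PowerSeries ℂ) := by
  classical
  have hqQ : q ≠ 0 := by
    rw [hq]
    exact div_ne_zero (Int.cast_ne_zero.mpr hq₁) (Int.cast_ne_zero.mpr hq₂)
  have hq0 : (q : ℂ) ≠ 0 := by exact_mod_cast Rat.cast_ne_zero.mpr hqQ
  set x : ℤ → ℂ := vext q P d α s ω0 ω with hxdef
  set e : ℤ → ℂ := fun n => useq q d α s ω n with hedef
  set pc : ℕ → ℂ := fun i => ((P.coeff i : ℚ) : ℂ) with hpcdef
  set A : ℤ → ℂ := fun nn => Pq q P nn.toNat with hAdef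
  set AL : List ℂ := (List.range l0).flatMap (fun k => (List.finRange m).flatMap
      (fun j => List.replicate (s j) (α j * (q:ℂ) ^ ((0:ℤ) - ((k:ℤ)+1))))) with hALdef
  set M : List ℂ := (List.finRange m).flatMap (fun j => (List.range (d + l0)).flatMap
      (fun t => List.replicate (s j) (α j * (q:ℂ) ^ ((t:ℤ) - (l0:ℤ))))) with hMdef
  -- lengths
  have hrowlen : ∀ c : ℂ,
      ((List.finRange m).flatMap (fun j => List.replicate (s j) (α j * c))).length = S := by
    intro c
    rw [length_flatMap', list_sum_finRange_eq, hS]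
    simp [List.length_replicate]
  have hALlen : AL.length = l0 * S := by
    rw [hALdef, length_flatMap', list_sum_range_eq']
    have h9 : ∀ k ∈ Finset.range l0, (((List.finRange m).flatMap
        (fun j => List.replicate (s j) (α j * (q:ℂ) ^ ((0:ℤ) - ((k:ℤ)+1)))))).length = S :=
      fun k _ => hrowlen _
    rw [Finset.sum_congr rfl h9, Finset.sum_const, Finset.card_range, smul_eq_mul]
  have hMlen : M.length = (d + l0) * S := by
    rw [hMdef, length_flatMap', list_sum_finRange_eq]
    have h9 : ∀ j : Fin m, (((List.range (d+l0)).flatMap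
        (fun t => List.replicate (s j) (α j * (q:ℂ) ^ ((t:ℤ) - (l0:ℤ)))))).length
        = (d+l0) * s j := by
      intro j
      rw [length_flatMap', list_sum_range_eq']
      simp [List.length_replicate, Finset.sum_const, Finset.card_range]
    calc ∑ j : Fin m, (((List.range (d+l0)).flatMap
        (fun t => List.replicate (s j) (α j * (q:ℂ) ^ ((t:ℤ) - (l0:ℤ)))))).length
        = ∑ j : Fin m, (d+l0) * s j := Finset.sum_congr rfl (fun j _ => h9 j)
      _ = (d + l0) * S := by rw [hS, Finset.mul_sum]
  have hALne : ∀ a ∈ AL, a ≠ 0 := by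
    intro a haa
    rw [hALdef] at haa
    obtain ⟨k, _, hk2⟩ := List.mem_flatMap.mp haa
    obtain ⟨j, _, hj2⟩ := List.mem_flatMap.mp hk2
    rw [List.eq_of_mem_replicate hj2]
    exact mul_ne_zero (hα j) (zpow_ne_zero _ hq0)
  -- counts
  have hALcount : ∀ a : ℂ, AL.count a = ∑ k ∈ Finset.range l0, ∑ j : Fin m,
      (if α j * (q:ℂ) ^ ((0:ℤ) - ((k:ℤ)+1)) = a then s j else 0) := by
    intro a
    rw [hALdef, count_flatMap', list_sum_range_eq']
    refine Finset.sum_congr rfl (fun k _ => ?_)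
    rw [count_flatMap', list_sum_finRange_eq]
    exact Finset.sum_congr rfl (fun j _ => count_replicate' _ _ _)
  have hMcount : ∀ b : ℂ, M.count b = ∑ t ∈ Finset.range (d + l0), ∑ j : Fin m,
      (if α j * (q:ℂ) ^ ((t:ℤ) - (l0:ℤ)) = b then s j else 0) := by
    intro b
    rw [hMdef, count_flatMap', list_sum_finRange_eq]
    have h9 : ∀ j : Fin m, (((List.range (d+l0)).flatMap
        (fun t => List.replicate (s j) (α j * (q:ℂ) ^ ((t:ℤ) - (l0:ℤ)))))).count b
        = ∑ t ∈ Finset.range (d+l0),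
            (if α j * (q:ℂ) ^ ((t:ℤ) - (l0:ℤ)) = b then s j else 0) := by
      intro j
      rw [count_flatMap', list_sum_range_eq']
      exact Finset.sum_congr rfl (fun t _ => count_replicate' _ _ _)
    rw [Finset.sum_congr rfl (fun j _ => h9 j)]
    exact Finset.sum_comm
  have hcond : ∀ a ∈ AL, ∀ i : ℕ, i ≤ d → AL.count a ≤ M.count (a * (q:ℂ) ^ i) := by
    intro a _ i hid
    rw [hALcount a, hMcount (a * (q:ℂ)^i)]
    have hinj : ∀ x1 ∈ Finset.range l0, ∀ x2 ∈ Finset.range l0,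
        l0 + i - 1 - x1 = l0 + i - 1 - x2 → x1 = x2 := by
      intro x1 hx1 x2 hx2 hxy
      have := Finset.mem_range.mp hx1
      have := Finset.mem_range.mp hx2
      omega
    have hterm : ∀ k ∈ Finset.range l0,
        (∑ j : Fin m, if α j * (q:ℂ) ^ ((0:ℤ) - ((k:ℤ)+1)) = a then s j else 0)
        = (fun t : ℕ => ∑ j : Fin m,
            if α j * (q:ℂ) ^ ((t:ℤ) - (l0:ℤ)) = a * (q:ℂ)^i then s j else 0)
          (l0 + i - 1 - k) := by
      intro k hk
      have hk' := Finset.mem_range.mp hk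
      refine Finset.sum_congr rfl (fun j _ => ?_)
      have hcast : (((l0 + i - 1 - k : ℕ)) : ℤ) - (l0:ℤ) = (i:ℤ) - 1 - (k:ℤ) := by omega
      show (if α j * (q:ℂ) ^ ((0:ℤ) - ((k:ℤ)+1)) = a then s j else 0)
        = (if α j * (q:ℂ) ^ ((((l0 + i - 1 - k : ℕ)):ℤ) - (l0:ℤ)) = a * (q:ℂ)^i then s j else 0)
      rw [hcast]
      have hpow : (q:ℂ) ^ ((i:ℤ) - 1 - (k:ℤ))
          = (q:ℂ) ^ ((0:ℤ) - ((k:ℤ)+1)) * (q:ℂ) ^ (i:ℕ) := by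
        rw [← zpow_natCast (q:ℂ) i, ← zpow_add₀ hq0]
        congr 1
        push_cast
        ring
      have hiff : (α j * (q:ℂ) ^ ((i:ℤ)-1-(k:ℤ)) = a * (q:ℂ)^(i:ℕ))
          ↔ (α j * (q:ℂ) ^ ((0:ℤ)-((k:ℤ)+1)) = a) := by
        rw [hpow, ← mul_assoc]
        exact mul_left_inj' (pow_ne_zero _ hq0)
      rw [if_congr hiff.symm rfl rfl]
    rw [Finset.sum_congr rfl hterm]
    have himg := (Finset.sum_image (s := Finset.range l0)
      (g := fun k => l0 + i - 1 - k)
      (f := fun t : ℕ => ∑ j : Fin m,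
        if α j * (q:ℂ) ^ ((t:ℤ) - (l0:ℤ)) = a * (q:ℂ)^i then s j else 0) hinj)
    rw [← himg]
    apply Finset.sum_le_sum_of_subset
    intro t ht
    obtain ⟨k, hk, rfl⟩ := Finset.mem_image.mp ht
    have := Finset.mem_range.mp hk
    exact Finset.mem_range.mpr (by omega)
  -- killing u
  have hM_count_ge : ∀ (j : Fin m) (k : Fin d), (s j : ℕ) ≤ M.count (α j * (q:ℂ) ^ (k:ℕ)) := by
    intro j k
    rw [hMcount]
    have hmem : ((k:ℕ) + l0) ∈ Finset.range (d + l0) :=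
      Finset.mem_range.mpr (by have := k.isLt; omega)
    have hcond1 : α j * (q:ℂ) ^ (((((k:ℕ)+l0 : ℕ)):ℤ) - (l0:ℤ)) = α j * (q:ℂ)^(k:ℕ) := by
      rw [show ((((k:ℕ)+l0:ℕ)):ℤ) - (l0:ℤ) = (((k:ℕ)):ℤ) by push_cast; ring, zpow_natCast]
    have hin : (s j : ℕ) ≤ ∑ j' : Fin m,
        (if α j' * (q:ℂ) ^ (((((k:ℕ)+l0:ℕ)):ℤ) - (l0:ℤ)) = α j * (q:ℂ)^(k:ℕ) then s j' else 0) := by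
      have h8 := Finset.single_le_sum (f := fun j' : Fin m =>
        if α j' * (q:ℂ) ^ (((((k:ℕ)+l0:ℕ)):ℤ) - (l0:ℤ)) = α j * (q:ℂ)^(k:ℕ) then s j' else 0)
        (fun _ _ => Nat.zero_le _) (Finset.mem_univ j)
      have h8' : (if α j * (q:ℂ) ^ (((((k:ℕ)+l0:ℕ)):ℤ) - (l0:ℤ)) = α j * (q:ℂ)^(k:ℕ)
          then s j else 0) ≤ ∑ j' : Fin m,
        (if α j' * (q:ℂ) ^ (((((k:ℕ)+l0:ℕ)):ℤ) - (l0:ℤ)) = α j * (q:ℂ)^(k:ℕ) then s j' else 0) := h8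
      rwa [if_pos hcond1] at h8'
    have h9 := Finset.single_le_sum (f := fun t : ℕ => ∑ j' : Fin m,
      (if α j' * (q:ℂ) ^ ((t:ℤ) - (l0:ℤ)) = α j * (q:ℂ)^(k:ℕ) then s j' else 0))
      (fun t _ => Nat.zero_le _) hmem
    exact le_trans hin h9
  have he : DopM M e = fun _ => 0 := by
    have he1 : e = fun n : ℤ => ∑ j : Fin m, (fun (j : Fin m) (n : ℤ) => ∑ k : Fin d,
        (fun (k : Fin d) (n : ℤ) => ∑ σ ∈ Finset.range (s j), (fun (σ : ℕ) (n : ℤ) =>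
          (∏ i2 ∈ Finset.range σ, ((n:ℂ) - (i2:ℂ))) * (α j * (q:ℂ) ^ (k:ℕ)) ^ (n - (σ:ℤ)) * ω j k σ)
            σ n) k n) j n := rfl
    rw [he1, DopM_sum]
    funext n
    refine Finset.sum_eq_zero (fun j _ => ?_)
    rw [DopM_sum]
    refine Finset.sum_eq_zero (fun k _ => ?_)
    rw [DopM_sum]
    refine Finset.sum_eq_zero (fun σ hσ => ?_)
    have hβ : α j * (q:ℂ) ^ (k:ℕ) ≠ 0 := mul_ne_zero (hα j) (pow_ne_zero _ hq0)
    have hvp : IsVP σ (α j * (q:ℂ) ^ (k:ℕ)) (fun n : ℤ =>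
        (∏ i2 ∈ Finset.range σ, ((n:ℂ) - (i2:ℂ))) * (α j * (q:ℂ) ^ (k:ℕ)) ^ (n - (σ:ℤ)) * ω j k σ) := by
      refine ⟨Polynomial.C (ω j k σ * (α j * (q:ℂ)^(k:ℕ)) ^ (-(σ:ℤ)))
        * ∏ i2 ∈ Finset.range σ, (Polynomial.X - Polynomial.C ((i2:ℕ):ℂ)), ?_, ?_⟩
      · refine le_trans (natDegree_C_mul_le _ _) (le_trans (natDegree_prod_le _ _) ?_)
        have h7 : ∀ i2 ∈ Finset.range σ, (Polynomial.X - Polynomial.C ((i2:ℕ):ℂ)).natDegree = 1 :=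
          fun i2 _ => natDegree_X_sub_C _
        rw [Finset.sum_congr rfl h7]
        simp
      · intro nn
        rw [eval_mul, eval_C, eval_prod]
        simp only [eval_sub, eval_X, eval_C]
        rw [show nn - (σ:ℤ) = nn + (-(σ:ℤ)) by ring, zpow_add₀ hβ]
        ring
    have hcnt : σ < M.count (α j * (q:ℂ)^(k:ℕ)) :=
      lt_of_lt_of_le (Finset.mem_range.mp hσ) (hM_count_ge j k)
    exact congrFun (kill_lemma hβ σ _ M hvp hcnt) n
  -- the recurrence
  have hrec : ∀ nn : ℤ, 1 ≤ nn → x nn = A nn * x (nn-1) + e nn := by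
    intro nn h1
    have h0n : (0:ℤ) ≤ nn := by omega
    have h0n' : (0:ℤ) ≤ nn - 1 := by omega
    have hNt : nn.toNat = (nn-1).toNat + 1 := by omega
    have hcast : ((((nn-1).toNat + 1 : ℕ)) : ℤ) = nn := by omega
    have hstep := vseq_rec q P d α s ω0 ω ((nn-1).toNat)
    calc x nn = vseq q P d α s ω0 ω ((nn-1).toNat + 1) := by
          simp only [hxdef, vext, if_pos h0n]
          rw [hNt]
      _ = Pq q P ((nn-1).toNat + 1) * vseq q P d α s ω0 ω ((nn-1).toNat)
            + useq q d α s ω ((((nn-1).toNat + 1 : ℕ)) : ℤ) := hstep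
      _ = A nn * x (nn-1) + e nn := by
          rw [hcast]
          simp only [hAdef, hedef, hxdef, vext, if_pos h0n']
          rw [hNt]
  have hA : ∀ nn : ℤ, 1 ≤ nn → A nn = ∑ i ∈ Finset.range (d+1), pc i * (((q:ℂ) ^ i) ^ nn) := by
    intro nn h1
    have hNt : ((nn.toNat : ℕ) : ℤ) = nn := by omega
    simp only [hAdef, Pq, hpcdef]
    rw [show P.eval (q ^ nn.toNat)
        = ∑ i ∈ Finset.range (P.natDegree + 1), P.coeff i * (q ^ nn.toNat) ^ i from
      Polynomial.eval_eq_sum_range _]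
    rw [← hd]
    push_cast
    refine Finset.sum_congr rfl (fun i _ => ?_)
    rw [← hNt, zpow_natCast, pow_right_comm, Int.toNat_natCast]
  -- the window
  have hwin : ∀ nn : ℤ, (n0:ℤ) ≤ nn → nn ≤ (n0:ℤ) + M.length - AL.length →
      DopM AL x nn = 0 := by
    intro nn h1 h2
    have hile : (nn - n0).toNat ≤ d * S := by
      rw [hMlen, hALlen, Nat.add_mul] at h2
      push_cast at h2
      omega
    have hi : nn = ((n0 + (nn - n0).toNat : ℕ) : ℤ) := by push_cast; omega
    have hv := hvanish (nn - n0).toNat hile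
    rw [vln, bigOp_eq] at hv
    rw [← hALdef, ← hxdef] at hv
    rw [hi]
    exact hv
  have hn1 : ((AL.length : ℕ) : ℤ) ≤ (n0 : ℤ) := by
    have h9 : AL.length ≤ n0 := by rw [hALlen, Nat.mul_comm]; exact hn0
    exact_mod_cast h9
  have hprop := prop_main (q:ℂ) hq0 d pc A hA M AL hALne hcond x e hrec he (n0:ℤ) hn1 hwin
  -- generating function
  have hxF : PowerSeries.mk (fun n : ℕ => vseq q P d α s ω0 ω n)
      = PowerSeries.mk (fun k : ℕ => x k) := by
    refine congrArg PowerSeries.mk (funext fun k => ?_)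
    simp only [hxdef, vext, if_pos (by exact_mod_cast Nat.zero_le k : (0:ℤ) ≤ (k:ℤ)),
      Int.toNat_natCast]

  have hneg : ∀ nn : ℤ, nn < 0 → x nn = 0 := by
    intro nn hnn
    simp only [hxdef, vext, if_neg (by omega : ¬ (0:ℤ) ≤ nn)]
  refine ⟨PowerSeries.trunc n0 ((rpoly AL : PowerSeries ℂ)
    * PowerSeries.mk (fun n : ℕ => vseq q P d α s ω0 ω n)), rpoly AL, rpoly_ne_zero AL, ?_⟩
  apply PowerSeries.ext
  intro k
  rw [Polynomial.coeff_coe, PowerSeries.coeff_trunc]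
  by_cases hk : k < n0
  · rw [if_pos hk]
  · rw [if_neg hk]
    rw [hxF, coeff_rpoly_mul AL x hneg k]
    exact hprop (k:ℤ) (by exact_mod_cast Nat.le_of_not_lt hk)

end
end

section
/- Assume α₁, …, α_m are nonzero rationals. Let D be a positive integer such that D·P(z) ∈ ℤ[z] and D·α_j·q^k ∈ ℤ for all 1 ≤ j ≤ m and 0 ≤ k < d. Then for all integers l ≥ 0 and n ≥ Sl, the linear form w_{l,n}(x) = Dⁿ · q₁^{S·l(l+1)/2} · q₂^{d·n(n+1)/2} · v_{l,n}(x) has integer coefficients, i.e. w_{l,n} ∈ ℤ[x]. In particular, Dⁿ · q₂^{d·n(n+1)/2} · v_n(x) ∈ ℤ[x] for all n ≥ 0. -/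
open scoped BigOperators Classical
open Finset

noncomputable section

/-- The standard basis vector `e_{j,k,σ}` of the space of coefficient vectors. -/
def basisVec {m : ℕ} (d : ℕ) (j : Fin m) (k : Fin d) (σ : ℕ) :
    Fin m → Fin d → ℕ → ℂ :=
  fun j' k' σ' => if j' = j ∧ k' = k ∧ σ' = σ then 1 else 0


namespace S7

def IsInt (x : ℂ) : Prop := ∃ z : ℤ, x = (z : ℂ)

lemma isInt_intCast (z : ℤ) : IsInt (z : ℂ) := ⟨z, rfl⟩
lemma isInt_zero : IsInt 0 := ⟨0, by simp⟩
lemma isInt_one : IsInt 1 := ⟨1, by simp⟩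
lemma isInt_natCast (n : ℕ) : IsInt (n : ℂ) := ⟨n, by simp⟩

lemma IsInt.add {x y : ℂ} (hx : IsInt x) (hy : IsInt y) : IsInt (x + y) := by
  obtain ⟨a, rfl⟩ := hx; obtain ⟨b, rfl⟩ := hy; exact ⟨a + b, by push_cast; ring⟩
lemma IsInt.mul {x y : ℂ} (hx : IsInt x) (hy : IsInt y) : IsInt (x * y) := by
  obtain ⟨a, rfl⟩ := hx; obtain ⟨b, rfl⟩ := hy; exact ⟨a * b, by push_cast; ring⟩
lemma IsInt.sub {x y : ℂ} (hx : IsInt x) (hy : IsInt y) : IsInt (x - y) := by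
  obtain ⟨a, rfl⟩ := hx; obtain ⟨b, rfl⟩ := hy; exact ⟨a - b, by push_cast; ring⟩
lemma IsInt.pow {x : ℂ} (hx : IsInt x) (n : ℕ) : IsInt (x ^ n) := by
  obtain ⟨a, rfl⟩ := hx; exact ⟨a ^ n, by push_cast; ring⟩

lemma isInt_sum {β : Type*} {t : Finset β} {f : β → ℂ}
    (h : ∀ b ∈ t, IsInt (f b)) : IsInt (∑ b ∈ t, f b) :=
  Finset.sum_induction f IsInt (fun _ _ => IsInt.add) isInt_zero h

lemma isInt_prod {β : Type*} {t : Finset β} {f : β → ℂ}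
    (h : ∀ b ∈ t, IsInt (f b)) : IsInt (∏ b ∈ t, f b) :=
  Finset.prod_induction f IsInt (fun _ _ => IsInt.mul) isInt_one h

/-! Triangle numbers -/

def T (n : ℕ) : ℕ := n * (n + 1) / 2

lemma T_succ (n : ℕ) : T (n + 1) = T n + (n + 1) := by
  unfold T
  have h : (n + 1) * (n + 1 + 1) = n * (n + 1) + (n + 1) * 2 := by ring
  rw [h, Nat.add_mul_div_right _ _ (by norm_num : (0:ℕ) < 2)]

lemma sum_range_id' (n : ℕ) : ∑ i ∈ Finset.range n, (i + 1) = T n := by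
  induction n with
  | zero => simp [T]
  | succ n ih => rw [Finset.sum_range_succ, ih, T_succ]

lemma T_eq_sum (n : ℕ) : T n = ∑ i ∈ Finset.range (n + 1), i := by
  rw [Finset.sum_range_succ' (fun i => i) n, sum_range_id']; ring

lemma T_mono {a b : ℕ} (h : a ≤ b) : T a ≤ T b :=
  Nat.div_le_div_right (Nat.mul_le_mul h (by omega))

lemma T_add {l n : ℕ} (h : l ≤ n) : T l + ∑ k ∈ Finset.Icc (l + 1) n, k = T n := by
  have h1 : Finset.Icc (l + 1) n = Finset.Ico (l + 1) (n + 1) := by rw [Finset.Ico_add_one_right_eq_Icc]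
  rw [h1, T_eq_sum, T_eq_sum, Finset.range_eq_Ico, Finset.range_eq_Ico]
  exact Finset.sum_Ico_consecutive (fun i : ℕ => i) (Nat.zero_le _) (by omega)


def HasKer (F : (ℤ → ℂ) → (ℤ → ℂ)) (T' : ℕ) (c : ℕ → ℂ) : Prop :=
  (∀ t, T' < t → c t = 0) ∧
    ∀ ξ n, F ξ n = ∑ t ∈ Finset.range (T' + 1), c t * ξ (n - (t : ℤ))

def idKer : ℕ → ℂ := fun t => if t = 0 then 1 else 0

lemma hasKer_id : HasKer id 0 idKer := by
  constructor
  · intro t ht; simp only [idKer, if_neg (by omega : ¬ t = 0)]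
  · intro ξ n; simp [idKer]

def Dker (a : ℂ) (c : ℕ → ℂ) : ℕ → ℂ :=
  fun t => c t - a * (if t = 0 then 0 else c (t - 1))

lemma hasKer_comp_Dop {F : (ℤ → ℂ) → (ℤ → ℂ)} {T' : ℕ} {c : ℕ → ℂ}
    (h : HasKer F T' c) (a : ℂ) : HasKer (F ∘ Dop a) (T' + 1) (Dker a c) := by
  obtain ⟨h0, hF⟩ := h
  constructor
  · intro t ht
    have h1 : c t = 0 := h0 t (by omega)
    have h2 : (if t = 0 then (0:ℂ) else c (t-1)) = 0 := by
      rw [if_neg (by omega : ¬ t = 0)]; exact h0 _ (by omega)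
    simp [Dker, h1, h2]
  · intro ξ n
    show F (Dop a ξ) n = _
    rw [hF]
    have key : ∀ t : ℕ, Dop a ξ (n - (t:ℤ)) = ξ (n - (t:ℤ)) - a * ξ (n - ((t+1:ℕ):ℤ)) := by
      intro t; show ξ (n-(t:ℤ)) - a * ξ (n - (t:ℤ) - 1) = _
      congr 2; push_cast; ring
    calc ∑ t ∈ Finset.range (T' + 1), c t * Dop a ξ (n - (t:ℤ))
        = (∑ t ∈ Finset.range (T' + 1), c t * ξ (n - (t:ℤ)))
          - a * ∑ t ∈ Finset.range (T' + 1), c t * ξ (n - ((t+1:ℕ):ℤ)) := by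
          rw [Finset.mul_sum, ← Finset.sum_sub_distrib]
          refine Finset.sum_congr rfl fun t _ => ?_
          rw [key t]; ring
      _ = (∑ t ∈ Finset.range (T' + 1 + 1), c t * ξ (n - (t:ℤ)))
          - a * ∑ t ∈ Finset.range (T' + 1 + 1),
              (if t = 0 then (0:ℂ) else c (t-1)) * ξ (n - (t:ℤ)) := by
          have A : ∑ t ∈ Finset.range (T' + 1 + 1), c t * ξ (n - (t:ℤ))
              = ∑ t ∈ Finset.range (T' + 1), c t * ξ (n - (t:ℤ)) := by
            rw [Finset.sum_range_succ, h0 (T'+1) (by omega), zero_mul, add_zero]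
          have B : ∑ t ∈ Finset.range (T' + 1 + 1),
                (if t = 0 then (0:ℂ) else c (t-1)) * ξ (n - (t:ℤ))
              = ∑ t ∈ Finset.range (T' + 1), c t * ξ (n - ((t+1:ℕ):ℤ)) := by
            rw [Finset.sum_range_succ'
              (fun t => (if t = 0 then (0:ℂ) else c (t-1)) * ξ (n - (t:ℤ)))]
            simp
          rw [A, B]
      _ = ∑ t ∈ Finset.range (T' + 1 + 1), Dker a c t * ξ (n - (t:ℤ)) := by
          rw [Finset.mul_sum, ← Finset.sum_sub_distrib]
          refine Finset.sum_congr rfl fun t _ => ?_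
          simp only [Dker]; ring


lemma int_Dker {Dc W Q a : ℂ} {c : ℕ → ℂ} (hQ : IsInt Q) (ha : IsInt (Dc * a * Q))
    (hc : ∀ t, IsInt (Dc ^ t * W * c t)) :
    ∀ t, IsInt (Dc ^ t * (W * Q) * Dker a c t) := by
  intro t
  cases t with
  | zero =>
    have e : Dc ^ 0 * (W * Q) * Dker a c 0 = Q * (Dc ^ 0 * W * c 0) := by
      simp [Dker]; ring
    rw [e]; exact hQ.mul (hc 0)
  | succ v =>
    have e : Dc ^ (v+1) * (W * Q) * Dker a c (v+1)
        = Q * (Dc ^ (v+1) * W * c (v+1)) - (Dc * a * Q) * (Dc ^ v * W * c v) := by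
      simp only [Dker, if_neg (Nat.succ_ne_zero v), Nat.add_sub_cancel]
      ring
    rw [e]; exact (hQ.mul (hc (v+1))).sub (ha.mul (hc v))

lemma ker_iter (Dc Q W a : ℂ) (hQ : IsInt Q) (ha : IsInt (Dc * a * Q)) :
    ∀ (r : ℕ) (F : (ℤ → ℂ) → (ℤ → ℂ)) (T' : ℕ) (c : ℕ → ℂ), HasKer F T' c →
      (∀ t, IsInt (Dc ^ t * W * c t)) →
      ∃ c', HasKer (F ∘ (Dop a)^[r]) (T' + r) c' ∧
        ∀ t, IsInt (Dc ^ t * (W * Q ^ r) * c' t) := by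
  intro r
  induction r with
  | zero =>
    intro F T' c hF hc
    refine ⟨c, by simpa using hF, fun t => ?_⟩
    simpa using hc t
  | succ r ih =>
    intro F T' c hF hc
    obtain ⟨c', hK, hI⟩ := ih F T' c hF hc
    have hop : F ∘ (Dop a)^[r+1] = (F ∘ (Dop a)^[r]) ∘ Dop a := by
      rw [Function.iterate_succ]; rfl
    refine ⟨Dker a c', ?_, fun t => ?_⟩
    · rw [hop, show T' + (r+1) = (T' + r) + 1 by omega]
      exact hasKer_comp_Dop hK a
    · have := int_Dker hQ ha hI t
      rwa [show W * Q ^ r * Q = W * Q ^ (r+1) by rw [pow_succ]; ring] at this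

lemma ker_list {m : ℕ} (α : Fin m → ℂ) (s : Fin m → ℕ) (Dc Q cc : ℂ)
    (hQ : IsInt Q) (ha : ∀ j, IsInt (Dc * (α j * cc) * Q)) :
    ∀ (L : List (Fin m)) (F : (ℤ → ℂ) → (ℤ → ℂ)) (T' : ℕ) (c : ℕ → ℂ) (W : ℂ),
      HasKer F T' c → (∀ t, IsInt (Dc ^ t * W * c t)) →
      ∃ c', HasKer (F ∘ L.foldr (fun j acc => (Dop (α j * cc))^[s j] ∘ acc) id)
              (T' + (L.map s).sum) c' ∧
            ∀ t, IsInt (Dc ^ t * (W * Q ^ (L.map s).sum) * c' t) := by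
  intro L
  induction L with
  | nil =>
    intro F T' c W hF hc
    refine ⟨c, by simpa using hF, fun t => ?_⟩
    simpa using hc t
  | cons j L ih =>
    intro F T' c W hF hc
    obtain ⟨c₁, hK₁, hI₁⟩ := ker_iter Dc Q W (α j * cc) hQ (ha j) (s j) F T' c hF hc
    obtain ⟨c', hK, hI⟩ := ih (F ∘ (Dop (α j * cc))^[s j]) (T' + s j) c₁ (W * Q ^ s j) hK₁ hI₁
    refine ⟨c', ?_, fun t => ?_⟩
    · have : F ∘ (j :: L).foldr (fun j acc => (Dop (α j * cc))^[s j] ∘ acc) id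
          = (F ∘ (Dop (α j * cc))^[s j]) ∘ L.foldr (fun j acc => (Dop (α j * cc))^[s j] ∘ acc) id := by
        rfl
      rw [this, show T' + ((j :: L).map s).sum = T' + s j + (L.map s).sum by simp; omega]
      exact hK
    · have := hI t
      rwa [show W * Q ^ s j * Q ^ (L.map s).sum = W * Q ^ (((j :: L).map s).sum) by
        rw [List.map_cons, List.sum_cons, pow_add]; ring] at this

lemma ker_rowOp {m : ℕ} (α : Fin m → ℂ) (s : Fin m → ℕ) (S : ℕ) (hS : S = ∑ j, s j)
    (Dc Q cc : ℂ) (hQ : IsInt Q) (ha : ∀ j, IsInt (Dc * (α j * cc) * Q))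
    (F : (ℤ → ℂ) → (ℤ → ℂ)) (T' : ℕ) (c : ℕ → ℂ) (W : ℂ)
    (hF : HasKer F T' c) (hc : ∀ t, IsInt (Dc ^ t * W * c t)) :
    ∃ c', HasKer (F ∘ rowOp α s cc) (T' + S) c' ∧
      ∀ t, IsInt (Dc ^ t * (W * Q ^ S) * c' t) := by
  have hsum : ((List.finRange m).map s).sum = S := by
    rw [hS, ← List.sum_ofFn]; simp [List.ofFn_eq_map]
  obtain ⟨c', hK, hI⟩ := ker_list α s Dc Q cc hQ ha (List.finRange m) F T' c W hF hc
  rw [hsum] at hK hI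
  exact ⟨c', hK, hI⟩

lemma foldr_comp {β : Type*} (f : β → (ℤ → ℂ) → (ℤ → ℂ)) :
    ∀ (L : List β) (g : (ℤ → ℂ) → (ℤ → ℂ)),
      L.foldr (fun k acc => f k ∘ acc) g = L.foldr (fun k acc => f k ∘ acc) id ∘ g
  | [], g => rfl
  | (k :: L), g => by
    simp only [List.foldr_cons]; rw [foldr_comp f L g]; rfl

lemma bigOp_succ {m : ℕ} (α : Fin m → ℂ) (s : Fin m → ℕ) (qc : ℂ) (l : ℕ) :
    bigOp α s qc 0 (l+1) = bigOp α s qc 0 l ∘ rowOp α s (qc ^ ((0:ℤ) - ((l:ℤ)+1))) := by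
  unfold bigOp
  rw [show (do let a ← List.range (l+1); pure ((a:ℤ)) : List ℤ)
      = (do let a ← List.range l; pure ((a:ℤ)) : List ℤ) ++ [((l:ℤ))] from by
    simp [List.range_succ]]
  rw [List.foldr_append]
  simp only [List.foldr_cons, List.foldr_nil]
  rw [foldr_comp]
  rfl


lemma bigOp_zero {m : ℕ} (α : Fin m → ℂ) (s : Fin m → ℕ) (qc : ℂ) :
    bigOp α s qc 0 0 = id := rfl

lemma ker_bigOp {m : ℕ} (α : Fin m → ℂ) (s : Fin m → ℕ) (S : ℕ) (hS : S = ∑ j, s j)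
    (Dc : ℂ) (q₁ : ℤ) (qc : ℂ)
    (ha : ∀ (j : Fin m) (l : ℕ),
      IsInt (Dc * (α j * qc ^ ((0:ℤ) - ((l:ℤ)+1))) * (q₁:ℂ) ^ (l+1))) :
    ∀ l : ℕ, ∃ c, HasKer (bigOp α s qc 0 l) (S * l) c ∧
      ∀ t, IsInt (Dc ^ t * (q₁:ℂ) ^ (S * T l) * c t) := by
  intro l
  induction l with
  | zero =>
    refine ⟨idKer, by simpa [bigOp_zero] using hasKer_id, fun t => ?_⟩
    simp only [idKer]
    rcases Nat.eq_zero_or_pos t with h | h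
    · subst h; simp only [if_pos rfl, pow_zero, one_mul, mul_one]
      simpa [T] using (isInt_intCast q₁).pow 0
    · rw [if_neg (by omega), mul_zero]; exact isInt_zero
  | succ l ih =>
    obtain ⟨c, hK, hI⟩ := ih
    obtain ⟨c', hK', hI'⟩ := ker_rowOp α s S hS Dc ((q₁:ℂ) ^ (l+1))
      (qc ^ ((0:ℤ) - ((l:ℤ)+1))) ((isInt_intCast q₁).pow (l+1)) (fun j => ha j l)
      (bigOp α s qc 0 l) (S * l) c ((q₁:ℂ) ^ (S * T l)) hK hI
    refine ⟨c', ?_, fun t => ?_⟩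
    · rw [bigOp_succ, show S * (l+1) = S * l + S by ring]
      exact hK'
    · have e : (q₁:ℂ) ^ (S * T l) * ((q₁:ℂ) ^ (l+1)) ^ S = (q₁:ℂ) ^ (S * T (l+1)) := by
        rw [← pow_mul, ← pow_add, T_succ]; ring_nf
      rw [← e]
      exact hI' t

lemma int_vln (q : ℚ) (P : Polynomial ℚ) (q₁ q₂ : ℤ) (D d : ℕ)
    {m : ℕ} (αc : Fin m → ℂ) (s : Fin m → ℕ) (S : ℕ)
    (x0 : ℂ) (x : Fin m → Fin d → ℕ → ℂ)
    (hv : ∀ n' : ℕ, IsInt ((D:ℂ)^n' * (q₂:ℂ)^(d * T n') * vseq q P d αc s x0 x n'))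
    (l n : ℕ) (c : ℕ → ℂ)
    (hker : HasKer (bigOp αc s (q:ℂ) 0 l) (S * l) c)
    (hcint : ∀ t, IsInt ((D:ℂ)^t * (q₁:ℂ)^(S * T l) * c t))
    (hn : S * l ≤ n) :
    IsInt ((D:ℂ)^n * (q₁:ℂ)^(S * T l) * (q₂:ℂ)^(d * T n) *
      vln q P d αc s x0 x l n) := by
  unfold vln
  rw [hker.2, Finset.mul_sum]
  apply isInt_sum
  intro t ht
  have htn : t ≤ n := by simp at ht; omega
  have hvex : vext q P d αc s x0 x ((n:ℤ) - (t:ℤ)) = vseq q P d αc s x0 x (n - t) := by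
    rw [show ((n:ℤ) - (t:ℤ)) = ((n - t : ℕ) : ℤ) from by omega]
    unfold vext
    rw [if_pos (Int.natCast_nonneg _), Int.toNat_natCast]
  rw [hvex]
  have hTle : d * T (n - t) ≤ d * T n := Nat.mul_le_mul_left d (T_mono (by omega))
  have e1 : (D:ℂ)^n = (D:ℂ)^t * (D:ℂ)^(n-t) := by
    rw [← pow_add]; congr 1; omega
  have e2 : (q₂:ℂ)^(d * T n)
      = (q₂:ℂ)^(d * T (n-t)) * (q₂:ℂ)^(d * T n - d * T (n-t)) := by
    rw [← pow_add]; congr 1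
    exact (Nat.add_sub_cancel' hTle).symm
  have key : (D:ℂ)^n * (q₁:ℂ)^(S * T l) * (q₂:ℂ)^(d * T n) *
      (c t * vseq q P d αc s x0 x (n - t))
      = ((D:ℂ)^t * (q₁:ℂ)^(S * T l) * c t) *
        ((D:ℂ)^(n-t) * (q₂:ℂ)^(d * T (n-t)) * vseq q P d αc s x0 x (n - t)) *
        (q₂:ℂ)^(d * T n - d * T (n-t)) := by
    rw [e1, e2]; ring
  rw [key]
  exact ((hcint t).mul (hv (n - t))).mul ((isInt_intCast q₂).pow _)

lemma int_row_coeff (q : ℚ) (q₁ q₂ : ℤ) (hq₁ : q₁ ≠ 0) (hq₂ : q₂ ≠ 0)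
    (hq : q = (q₁:ℚ)/(q₂:ℚ)) (D : ℕ) (a : ℚ) (z : ℤ) (hz : (D:ℚ) * a = z) (l : ℕ) :
    IsInt ((D:ℂ) * ((a:ℂ) * (q:ℂ) ^ ((0:ℤ) - ((l:ℤ)+1))) * (q₁:ℂ) ^ (l+1)) := by
  refine ⟨z * q₂ ^ (l+1), ?_⟩
  have hq₁C : (q₁:ℂ) ≠ 0 := Int.cast_ne_zero.2 hq₁
  have hq₂C : (q₂:ℂ) ≠ 0 := Int.cast_ne_zero.2 hq₂
  have hqc : (q:ℂ) = (q₁:ℂ)/(q₂:ℂ) := by rw [hq]; push_cast; ring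
  have hDa : (D:ℂ) * (a:ℂ) = (z:ℂ) := by
    have h2 : (((D:ℚ) * a : ℚ):ℂ) = ((z:ℚ):ℂ) := by rw [hz]
    push_cast at h2; exact h2
  rw [show ((0:ℤ) - ((l:ℤ)+1)) = -(((l+1:ℕ)):ℤ) from by push_cast; ring,
    zpow_neg, zpow_natCast, hqc, div_pow, inv_div]
  have e : (D:ℂ) * ((a:ℂ) * ((q₂:ℂ)^(l+1) / (q₁:ℂ)^(l+1))) * (q₁:ℂ)^(l+1)
      = ((D:ℂ) * (a:ℂ)) * (q₂:ℂ)^(l+1) := by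
    field_simp
  rw [e, hDa]
  push_cast; ring

def IsIntQ (x : ℚ) : Prop := ∃ z : ℤ, x = (z : ℚ)
lemma IsIntQ.mul {x y : ℚ} (hx : IsIntQ x) (hy : IsIntQ y) : IsIntQ (x * y) := by
  obtain ⟨a, rfl⟩ := hx; obtain ⟨b, rfl⟩ := hy; exact ⟨a*b, by push_cast; ring⟩
lemma IsIntQ.add {x y : ℚ} (hx : IsIntQ x) (hy : IsIntQ y) : IsIntQ (x + y) := by
  obtain ⟨a, rfl⟩ := hx; obtain ⟨b, rfl⟩ := hy; exact ⟨a+b, by push_cast; ring⟩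
lemma isIntQ_sum {β : Type*} {t : Finset β} {f : β → ℚ}
    (h : ∀ b ∈ t, IsIntQ (f b)) : IsIntQ (∑ b ∈ t, f b) :=
  Finset.sum_induction f IsIntQ (fun _ _ => IsIntQ.add) ⟨0, by simp⟩ h
lemma IsIntQ.toC {x : ℚ} (hx : IsIntQ x) : IsInt (x : ℂ) := by
  obtain ⟨a, rfl⟩ := hx; exact ⟨a, by push_cast; ring⟩

section main
variable (q : ℚ) (P : Polynomial ℚ) (q₁ q₂ : ℤ) (D d : ℕ)

lemma int_DPq (hq : q = (q₁:ℚ)/(q₂:ℚ)) (hq₂ : q₂ ≠ 0) (hd : d = P.natDegree)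
    (hDP : ∀ i : ℕ, ∃ z : ℤ, (D : ℚ) * P.coeff i = (z : ℚ)) (k : ℕ) :
    IsInt ((D:ℂ) * (q₂:ℂ) ^ (d * k) * Pq q P k) := by
  have hQ : IsIntQ ((D:ℚ) * (q₂:ℚ) ^ (d * k) * P.eval (q ^ k)) := by
    rw [Polynomial.eval_eq_sum_range, ← hd, Finset.mul_sum]
    apply isIntQ_sum
    intro i hi
    have hi' : i ≤ d := by simp at hi; omega
    obtain ⟨z, hz⟩ := hDP i
    have key : (D:ℚ) * (q₂:ℚ) ^ (d * k) * (P.coeff i * (q ^ k) ^ i)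
        = ((D:ℚ) * P.coeff i) * ((q₁:ℚ) ^ (k * i) * (q₂:ℚ) ^ (d * k - k * i)) := by
      have e : d * k = k * i + (d * k - k * i) := by
        have : k * i ≤ d * k := by
          calc k * i ≤ k * d := Nat.mul_le_mul_left k hi'
          _ = d * k := Nat.mul_comm k d
        omega
      rw [hq, ← pow_mul, div_pow]
      rw [show (q₂:ℚ) ^ (d * k) = (q₂:ℚ) ^ (k * i) * (q₂:ℚ) ^ (d * k - k * i) by
        rw [← pow_add, ← e]]
      have hne : ((q₂:ℚ)) ^ (k * i) ≠ 0 := pow_ne_zero _ (Int.cast_ne_zero.2 hq₂)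
      field_simp
    rw [key, hz]
    exact IsIntQ.mul ⟨z, rfl⟩ ⟨q₁ ^ (k*i) * q₂ ^ (d*k - k*i), by push_cast; ring⟩
  have := hQ.toC
  have e2 : (((D:ℚ) * (q₂:ℚ) ^ (d * k) * P.eval (q ^ k) : ℚ) : ℂ)
      = (D:ℂ) * (q₂:ℂ) ^ (d * k) * Pq q P k := by
    simp only [Pq]; push_cast; ring
  rwa [e2] at this

lemma int_prodP (hq : q = (q₁:ℚ)/(q₂:ℚ)) (hq₂ : q₂ ≠ 0) (hd : d = P.natDegree)
    (hDP : ∀ i : ℕ, ∃ z : ℤ, (D : ℚ) * P.coeff i = (z : ℚ)) (n : ℕ) :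
    IsInt ((D:ℂ) ^ n * (q₂:ℂ) ^ (d * T n) * prodP q P n) := by
  have key : (D:ℂ) ^ n * (q₂:ℂ) ^ (d * T n) * prodP q P n
      = ∏ k ∈ Finset.range n, ((D:ℂ) * (q₂:ℂ) ^ (d * (k+1)) * Pq q P (k+1)) := by
    rw [Finset.prod_mul_distrib, Finset.prod_mul_distrib, Finset.prod_const, Finset.card_range,
      Finset.prod_pow_eq_pow_sum, ← Finset.mul_sum, sum_range_id']
    rfl
  rw [key]
  exact isInt_prod fun k _ => int_DPq q P q₁ q₂ D d hq hq₂ hd hDP (k+1)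


lemma useq_zero {m : ℕ} (αc : Fin m → ℂ) (s : Fin m → ℕ) (l : ℤ) :
    useq q d αc s 0 l = 0 := by
  simp [useq]

lemma vseq_one {m : ℕ} (αc : Fin m → ℂ) (s : Fin m → ℕ) (n : ℕ) :
    vseq q P d αc s 1 0 n = prodP q P n := by
  simp [vseq, useq_zero]

lemma useq_basis {m : ℕ} (αc : Fin m → ℂ) (s : Fin m → ℕ)
    (j : Fin m) (k : Fin d) (σ : ℕ) (hσ : σ < s j) (l : ℤ) :
    useq q d αc s (basisVec d j k σ) l
      = (∏ i ∈ Finset.range σ, ((l:ℂ) - (i:ℂ))) * (αc j * (q:ℂ) ^ (k:ℕ)) ^ (l - (σ:ℤ)) := by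
  unfold useq basisVec
  rw [Finset.sum_eq_single_of_mem j (Finset.mem_univ j)]
  · rw [Finset.sum_eq_single_of_mem k (Finset.mem_univ k)]
    · rw [Finset.sum_eq_single_of_mem σ (Finset.mem_range.2 hσ)]
      · simp
      · intro b _ hb; simp [hb]
    · intro b _ hb; apply Finset.sum_eq_zero; intro σ' _; simp [hb]
  · intro b _ hb
    apply Finset.sum_eq_zero; intro k' _; apply Finset.sum_eq_zero; intro σ' _; simp [hb]

lemma ff_int (l σ : ℕ) : IsInt (∏ i ∈ Finset.range σ, (((l:ℕ):ℂ) - (i:ℂ))) :=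
  ⟨∏ i ∈ Finset.range σ, ((l:ℤ) - (i:ℤ)), by push_cast; rfl⟩

lemma ff_zero (l σ : ℕ) (h : l < σ) :
    (∏ i ∈ Finset.range σ, (((l:ℕ):ℂ) - (i:ℂ))) = 0 :=
  Finset.prod_eq_zero (Finset.mem_range.2 h) (by simp)

lemma int_vseq_basis {m : ℕ} (hq : q = (q₁:ℚ)/(q₂:ℚ)) (hq₂ : q₂ ≠ 0) (hd : d = P.natDegree)
    (hDP : ∀ i : ℕ, ∃ z : ℤ, (D : ℚ) * P.coeff i = (z : ℚ))
    (α : Fin m → ℚ) (s : Fin m → ℕ)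
    (hDα : ∀ (j : Fin m) (k : Fin d), ∃ z : ℤ, (D : ℚ) * α j * q ^ (k : ℕ) = (z : ℚ))
    (j : Fin m) (k : Fin d) (σ : ℕ) (hσ : σ < s j) (n : ℕ) :
    IsInt ((D:ℂ) ^ n * (q₂:ℂ) ^ (d * T n) *
      vseq q P d (fun j' => ((α j' : ℚ) : ℂ)) s 0 (basisVec d j k σ) n) := by
  unfold vseq
  rw [zero_mul, zero_add, Finset.mul_sum]
  apply isInt_sum
  intro l hl
  have hln : l ≤ n := by simp at hl; omega
  rw [useq_basis q d _ s j k σ hσ]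
  beta_reduce
  push_cast
  by_cases hcase : l < σ
  · rw [ff_zero l σ hcase, zero_mul, zero_mul, mul_zero]
    exact isInt_zero
  · push_neg at hcase
    rw [show ((l:ℤ) - (σ:ℤ)) = ((l - σ : ℕ) : ℤ) from by omega, zpow_natCast]
    have hsum : d * T l + d * (∑ kk ∈ Finset.Icc (l+1) n, kk) = d * T n := by
      have h1 := T_add hln
      rw [← h1, Nat.mul_add]
    have hTle : d * T l ≤ d * T n := Nat.le.intro hsum
    have c1 : ∏ kk ∈ Finset.Icc (l+1) n, ((D:ℂ) * (q₂:ℂ)^(d*kk) * Pq q P kk)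
        = (D:ℂ)^(n-l) * (q₂:ℂ)^(d * T n - d * T l) * ∏ kk ∈ Finset.Icc (l+1) n, Pq q P kk := by
      have ecard : n + 1 - (l + 1) = n - l := by omega
      have esum : (∑ kk ∈ Finset.Icc (l+1) n, d * kk) = d * T n - d * T l := by
        rw [← Finset.mul_sum]; exact Nat.eq_sub_of_add_eq' hsum
      rw [Finset.prod_mul_distrib, Finset.prod_mul_distrib, Finset.prod_const,
        Finset.prod_pow_eq_pow_sum, Nat.card_Icc, ecard, esum]
    have e1 : (D:ℂ)^n = (D:ℂ)^(l-σ) * (D:ℂ)^σ * (D:ℂ)^(n-l) := by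
      rw [← pow_add, ← pow_add]; congr 1; omega
    have e2 : (q₂:ℂ)^(d * T n) = (q₂:ℂ)^(d * T l) * (q₂:ℂ)^(d * T n - d * T l) := by
      rw [← pow_add]; congr 1
      exact (Nat.add_sub_cancel' hTle).symm
    have key : (D:ℂ)^n * (q₂:ℂ)^(d * T n) *
        ((∏ i ∈ Finset.range σ, ((l:ℂ) - (i:ℂ))) *
          ((α j : ℂ) * (q:ℂ)^(k:ℕ)) ^ (l - σ) * ∏ kk ∈ Finset.Icc (l+1) n, Pq q P kk)
        = (∏ i ∈ Finset.range σ, ((l:ℂ) - (i:ℂ))) *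
            ((D:ℂ) * ((α j : ℂ) * (q:ℂ)^(k:ℕ))) ^ (l - σ) * (D:ℂ)^σ *
            (q₂:ℂ)^(d * T l) *
            ∏ kk ∈ Finset.Icc (l+1) n, ((D:ℂ) * (q₂:ℂ)^(d*kk) * Pq q P kk) := by
      rw [c1, mul_pow, e1, e2]; ring
    rw [key]
    obtain ⟨z, hz⟩ := hDα j k
    have hDa : IsInt ((D:ℂ) * ((α j : ℂ) * (q:ℂ)^(k:ℕ))) := by
      refine ⟨z, ?_⟩
      have h2 : (((D:ℚ) * α j * q ^ (k:ℕ) : ℚ) : ℂ) = ((z:ℚ):ℂ) := by rw [hz]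
      push_cast at h2
      rw [← h2]; ring
    exact ((((ff_int l σ).mul (hDa.pow (l - σ))).mul ((isInt_natCast D).pow σ)).mul
      ((isInt_intCast q₂).pow (d * T l))).mul
      (isInt_prod fun kk _ => int_DPq q P q₁ q₂ D d hq hq₂ hd hDP kk)


end main
end S7

/-- the normalized forms `w_{l,n}` have integer coefficients, and in
particular `Dⁿ q₂^{dn(n+1)/2} v_n ∈ ℤ[x]`. -/
theorem stmt_7
    (q₁ q₂ : ℤ) (hq₁ : q₁ ≠ 0) (hq₂ : q₂ ≠ 0) (hcop : Int.gcd q₁ q₂ = 1)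
    (habs : |q₂| < |q₁|)
    (q : ℚ) (hq : q = (q₁ : ℚ) / (q₂ : ℚ))
    (P : Polynomial ℚ) (d : ℕ) (hd : d = P.natDegree) (hd1 : 1 ≤ d)
    (hP : ∀ n : ℕ, 1 ≤ n → P.eval (q ^ n) ≠ 0)
    (m : ℕ) (α : Fin m → ℚ) (hα : ∀ j, α j ≠ 0)
    (s : Fin m → ℕ) (hs : ∀ j, 0 < s j)
    (S : ℕ) (hS : S = ∑ j, s j)
    (D : ℕ) (hD : 0 < D)
    (hDP : ∀ i : ℕ, ∃ z : ℤ, (D : ℚ) * P.coeff i = (z : ℚ))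
    (hDα : ∀ (j : Fin m) (k : Fin d), ∃ z : ℤ, (D : ℚ) * α j * q ^ (k : ℕ) = (z : ℚ)) :
    (∀ l n : ℕ, S * l ≤ n →
      (∃ z : ℤ, (D : ℂ) ^ n * (q₁ : ℂ) ^ (S * (l * (l + 1) / 2)) *
          (q₂ : ℂ) ^ (d * (n * (n + 1) / 2)) *
          vln q P d (fun j => (α j : ℂ)) s 1 0 l n = (z : ℂ)) ∧
      ∀ (j : Fin m) (k : Fin d) (σ : ℕ), σ < s j →
        ∃ z : ℤ, (D : ℂ) ^ n * (q₁ : ℂ) ^ (S * (l * (l + 1) / 2)) *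
            (q₂ : ℂ) ^ (d * (n * (n + 1) / 2)) *
            vln q P d (fun j' => (α j' : ℂ)) s 0 (basisVec d j k σ) l n = (z : ℂ)) ∧
    (∀ n : ℕ,
      (∃ z : ℤ, (D : ℂ) ^ n * (q₂ : ℂ) ^ (d * (n * (n + 1) / 2)) *
          vseq q P d (fun j => (α j : ℂ)) s 1 0 n = (z : ℂ)) ∧
      ∀ (j : Fin m) (k : Fin d) (σ : ℕ), σ < s j →
        ∃ z : ℤ, (D : ℂ) ^ n * (q₂ : ℂ) ^ (d * (n * (n + 1) / 2)) *
            vseq q P d (fun j' => (α j' : ℂ)) s 0 (basisVec d j k σ) n = (z : ℂ)) := by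
    classical
  have hDα0 : ∀ j : Fin m, ∃ z : ℤ, (D:ℚ) * α j = (z:ℚ) := by
    intro j
    obtain ⟨z, hz⟩ := hDα j ⟨0, hd1⟩
    exact ⟨z, by simpa using hz⟩
  have ha : ∀ (j : Fin m) (l : ℕ),
      S7.IsInt ((D:ℂ) * (((α j : ℚ):ℂ) * (q:ℂ) ^ ((0:ℤ) - ((l:ℤ)+1))) * (q₁:ℂ)^(l+1)) := by
    intro j l
    obtain ⟨z, hz⟩ := hDα0 j
    exact S7.int_row_coeff q q₁ q₂ hq₁ hq₂ hq D (α j) z hz l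
  have hv1 : ∀ n : ℕ, S7.IsInt ((D:ℂ)^n * (q₂:ℂ)^(d * S7.T n) *
      vseq q P d (fun j => ((α j : ℚ):ℂ)) s 1 0 n) := by
    intro n
    rw [S7.vseq_one]
    exact S7.int_prodP q P q₁ q₂ D d hq hq₂ hd hDP n
  have hv2 : ∀ (j : Fin m) (k : Fin d) (σ : ℕ), σ < s j → ∀ n : ℕ,
      S7.IsInt ((D:ℂ)^n * (q₂:ℂ)^(d * S7.T n) *
        vseq q P d (fun j' => ((α j' : ℚ):ℂ)) s 0 (basisVec d j k σ) n) :=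
    fun j k σ hσ n => S7.int_vseq_basis q P q₁ q₂ D d hq hq₂ hd hDP α s hDα j k σ hσ n
  refine ⟨?_, fun n => ⟨hv1 n, fun j k σ hσ => hv2 j k σ hσ n⟩⟩
  intro l n hn
  obtain ⟨c, hker, hcint⟩ :=
    S7.ker_bigOp (fun j => ((α j : ℚ):ℂ)) s S hS (D:ℂ) q₁ (q:ℂ) (fun j l => ha j l) l
  exact ⟨S7.int_vln q P q₁ q₂ D d _ s S 1 0 hv1 l n c hker hcint hn,
    fun j k σ hσ => S7.int_vln q P q₁ q₂ D d _ s S 0 (basisVec d j k σ)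
      (hv2 j k σ hσ) l n c hker hcint hn⟩
end
end

section
/- There exists a constant C > 0 depending only on q, P, m, the α_j and the s_j such that for all integers n ≥ 0 the height H(v_n) (the maximum of the absolute values of the coefficients of the linear form v_n) satisfies H(v_n) ≤ |q|^{d·n²/2 + C(n+1)}, and for all integers 0 ≤ Sl ≤ n one has H(v_{l,n}) ≤ |q|^{d·n²/2 + C(n+1)}. -/
open scoped BigOperators Classical
open Finset

noncomputable section

private lemma poly_eval_bound (P : Polynomial ℚ) (x : ℚ) (hx : 1 ≤ |x|) :
    |P.eval x| ≤ (∑ i ∈ Finset.range (P.natDegree + 1), |P.coeff i| + 1) * |x| ^ P.natDegree := by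
  rw [Polynomial.eval_eq_sum_range]
  have h0 : (0:ℚ) ≤ |x| ^ P.natDegree := by positivity
  calc |∑ i ∈ Finset.range (P.natDegree+1), P.coeff i * x ^ i|
      ≤ ∑ i ∈ Finset.range (P.natDegree+1), |P.coeff i * x ^ i| :=
        Finset.abs_sum_le_sum_abs _ _
    _ ≤ ∑ i ∈ Finset.range (P.natDegree+1), |P.coeff i| * |x| ^ P.natDegree := by
        apply Finset.sum_le_sum; intro i hi
        rw [abs_mul, abs_pow]
        exact mul_le_mul_of_nonneg_left
          (pow_le_pow_right₀ hx (Nat.lt_succ_iff.mp (Finset.mem_range.mp hi))) (abs_nonneg _)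
    _ = (∑ i ∈ Finset.range (P.natDegree+1), |P.coeff i|) * |x| ^ P.natDegree :=
        (Finset.sum_mul _ _ _).symm
    _ ≤ (∑ i ∈ Finset.range (P.natDegree+1), |P.coeff i| + 1) * |x| ^ P.natDegree := by
        nlinarith [h0]

private lemma zpow_abs_bound (z : ℂ) (B : ℝ) (h1 : ‖z‖ ≤ B)
    (h2 : (‖z‖)⁻¹ ≤ B) (hB : 1 ≤ B) (t : ℤ) (N : ℕ) (hN : t.natAbs ≤ N) :
    ‖z ^ t‖ ≤ B ^ N := by
  rw [norm_zpow]
  obtain ⟨k, rfl | rfl⟩ := Int.eq_nat_or_neg t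
  · rw [zpow_natCast]
    calc ‖z‖ ^ k ≤ B ^ k := pow_le_pow_left₀ (norm_nonneg z) h1 k
      _ ≤ B ^ N := pow_le_pow_right₀ hB (by simpa using hN)
  · rw [zpow_neg, ← inv_zpow, zpow_natCast]
    calc (‖z‖)⁻¹ ^ k ≤ B ^ k := pow_le_pow_left₀ (by positivity) h2 k
      _ ≤ B ^ N := pow_le_pow_right₀ hB (by simpa using hN)


private lemma dop_bd {A c : ℝ} (hA : 0 ≤ A) (hc : 0 ≤ c) {g : ℤ → ℝ} (hg : Monotone g)
    {a : ℂ} (ha : ‖a‖ ≤ A) {ξ : ℤ → ℂ}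
    (hξ : ∀ t, ‖ξ t‖ ≤ c * g t) (t : ℤ) :
    ‖Dop a ξ t‖ ≤ (1 + A) * c * g t := by
  have h1 := hξ t
  have h2 := hξ (t-1)
  have h3 : g (t-1) ≤ g t := hg (by omega)
  have h4 : ‖a * ξ (t-1)‖ ≤ A * (c * g (t-1)) := by
    rw [norm_mul]
    exact mul_le_mul ha h2 (norm_nonneg _) hA
  have h5 : ‖Dop a ξ t‖ ≤ ‖ξ t‖ + ‖a * ξ (t-1)‖ := by
    simpa [Dop, sub_eq_add_neg] using norm_add_le (ξ t) (-(a * ξ (t-1)))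
  nlinarith [mul_le_mul_of_nonneg_left h3 (mul_nonneg hA hc)]

private lemma iter_bd {A : ℝ} (hA : 0 ≤ A) {g : ℤ → ℝ} (hg : Monotone g)
    {a : ℂ} (ha : ‖a‖ ≤ A) (k : ℕ) :
    ∀ {ξ : ℤ → ℂ} {c : ℝ}, 0 ≤ c → (∀ t, ‖ξ t‖ ≤ c * g t) →
      ∀ t, ‖(Dop a)^[k] ξ t‖ ≤ (1+A)^k * c * g t := by
  induction k with
  | zero => intro ξ c hc hξ t; simpa using hξ t
  | succ k ih =>
    intro ξ c hc hξ t
    rw [Function.iterate_succ_apply]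
    have hstep := dop_bd hA hc hg ha hξ
    have := ih (c := (1+A)*c) (by positivity) hstep t
    calc ‖(Dop a)^[k] (Dop a ξ) t‖ ≤ (1+A)^k * ((1+A)*c) * g t := this
      _ = (1+A)^(k+1) * c * g t := by ring

private lemma foldr_row_bd {m : ℕ} (α : Fin m → ℂ) (s : Fin m → ℕ) (cc : ℂ)
    {A : ℝ} (hA : 0 ≤ A) {g : ℤ → ℝ} (hg : Monotone g)
    (hcc : ∀ j, ‖α j * cc‖ ≤ A) (L : List (Fin m)) :
    ∀ {ξ : ℤ → ℂ} {c : ℝ}, 0 ≤ c → (∀ t, ‖ξ t‖ ≤ c * g t) →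
      ∀ t, ‖(L.foldr (fun j acc => (Dop (α j * cc))^[s j] ∘ acc) id) ξ t‖
        ≤ (1+A) ^ (L.map s).sum * c * g t := by
  induction L with
  | nil => intro ξ c hc hξ t; simpa using hξ t
  | cons j L ih =>
    intro ξ c hc hξ t
    simp only [List.foldr_cons, Function.comp_apply]
    have h1 := ih hc hξ
    have h2 := iter_bd hA hg (hcc j) (s j)
      (c := (1+A) ^ (L.map s).sum * c) (by positivity) h1 t
    calc ‖_‖ ≤ (1+A)^(s j) * ((1+A) ^ (L.map s).sum * c) * g t := h2
      _ = (1+A) ^ ((List.map s (j :: L)).sum) * c * g t := by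
          rw [List.map_cons, List.sum_cons, pow_add]; ring

private lemma rowOp_bd {m : ℕ} (α : Fin m → ℂ) (s : Fin m → ℕ) (cc : ℂ)
    {A : ℝ} (hA : 0 ≤ A) {g : ℤ → ℝ} (hg : Monotone g)
    (hcc : ∀ j, ‖α j * cc‖ ≤ A)
    {ξ : ℤ → ℂ} {c : ℝ} (hc : 0 ≤ c) (hξ : ∀ t, ‖ξ t‖ ≤ c * g t) (t : ℤ) :
    ‖rowOp α s cc ξ t‖ ≤ (1+A) ^ (∑ j, s j) * c * g t := by
  have := foldr_row_bd α s cc hA hg hcc (List.finRange m) hc hξ t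
  rwa [← List.ofFn_eq_map, List.sum_ofFn] at this

private lemma bigOp_bd {m : ℕ} (α : Fin m → ℂ) (s : Fin m → ℕ) (qc : ℂ) (ν : ℤ)
    {A : ℝ} (hA : 0 ≤ A) {g : ℤ → ℝ} (hg : Monotone g)
    (hco : ∀ (k : ℕ) (j : Fin m), ‖α j * qc ^ (ν - ((k:ℤ)+1))‖ ≤ A)
    (l : ℕ) {ξ : ℤ → ℂ} {c : ℝ} (hc : 0 ≤ c) (hξ : ∀ t, ‖ξ t‖ ≤ c * g t) (t : ℤ) :
    ‖bigOp α s qc ν l ξ t‖ ≤ ((1+A) ^ (∑ j, s j))^l * c * g t := by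
  suffices h : ∀ (L : List ℤ), (∀ k ∈ L, ∀ j, ‖α j * qc ^ (ν - (k+1))‖ ≤ A) →
      ∀ {ξ : ℤ → ℂ} {c : ℝ}, 0 ≤ c → (∀ t, ‖ξ t‖ ≤ c * g t) → ∀ t,
      ‖(L.foldr (fun (k : ℤ) acc => rowOp α s (qc ^ (ν - (k + 1))) ∘ acc) id) ξ t‖
        ≤ ((1+A) ^ (∑ j, s j))^L.length * c * g t by
    have h2 := h (do let a ← List.range l; pure ((a:ℕ):ℤ)) ?_ hc hξ t
    · unfold bigOp
      simpa [Function.comp_def, List.map_const', List.sum_replicate, smul_eq_mul,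
        List.length_range] using h2
    · intro k hk j
      simp only [List.mem_flatMap, List.mem_range, List.mem_singleton, List.bind_eq_flatMap,
        List.mem_pure] at hk
      obtain ⟨a, _, rfl⟩ := hk
      exact hco a j
  intro L hL
  induction L with
  | nil => intro ξ c hc hξ t; simpa using hξ t
  | cons k L ih =>
    intro ξ c hc hξ t
    rw [List.foldr_cons]
    simp only [Function.comp_apply]
    have h1 := ih (fun k' hk' => hL k' (List.mem_cons_of_mem _ hk')) hc hξ
    have h2 := rowOp_bd α s _ hA hg (hL k (List.mem_cons_self))
      (c := ((1+A) ^ (∑ j, s j))^L.length * c) (by positivity) h1 t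
    calc ‖_‖ ≤ (1+A)^(∑ j, s j) * (((1+A) ^ (∑ j, s j))^L.length * c) * g t := h2
      _ = ((1+A) ^ (∑ j, s j))^((k :: L).length) * c * g t := by
          rw [List.length_cons, pow_succ]; ring

private lemma vln_bd (q : ℚ) (P : Polynomial ℚ) {m : ℕ} (d : ℕ) (α : Fin m → ℂ) (s : Fin m → ℕ)
    (x0 : ℂ) (x : Fin m → Fin d → ℕ → ℂ) (Q Kv A : ℝ)
    (hQ1 : 1 ≤ Q) (hKv : 1 ≤ Kv) (hA : 0 ≤ A)
    (hco : ∀ (k : ℕ) (j : Fin m), ‖α j * (q:ℂ) ^ ((0:ℤ) - ((k:ℤ)+1))‖ ≤ A)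
    (hv : ∀ n : ℕ, ‖vseq q P d α s x0 x n‖
      ≤ Kv ^ (n+1) * Q ^ (d * ∑ k ∈ Finset.range n, (k+1)))
    (S : ℕ) (hS : S = ∑ j, s j) (l n : ℕ) (hln : S * l ≤ n) :
    ‖vln q P d α s x0 x l n‖
      ≤ ((1+A)*Kv) ^ (n+1) * Q ^ (d * ∑ k ∈ Finset.range n, (k+1)) := by
  have hg : Monotone (fun t : ℤ =>
      Kv ^ (t.toNat+1) * Q ^ (d * ∑ k ∈ Finset.range t.toNat, (k+1))) := by
    intro a b hab
    have h1 : a.toNat ≤ b.toNat := Int.toNat_le_toNat hab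
    have h2 : (∑ k ∈ Finset.range a.toNat, (k+1)) ≤ ∑ k ∈ Finset.range b.toNat, (k+1) :=
      Finset.sum_le_sum_of_subset (Finset.range_subset_range.mpr h1)
    exact mul_le_mul (pow_le_pow_right₀ hKv (by omega))
      (pow_le_pow_right₀ hQ1 (Nat.mul_le_mul_left d h2)) (by positivity) (by positivity)
  have hvext : ∀ t : ℤ, ‖vext q P d α s x0 x t‖
      ≤ 1 * (Kv ^ (t.toNat+1) * Q ^ (d * ∑ k ∈ Finset.range t.toNat, (k+1))) := by
    intro t
    rw [one_mul]
    unfold vext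
    split
    · exact hv t.toNat
    · simp only [norm_zero]
      positivity
  have hbig := bigOp_bd α s (q:ℂ) 0 hA hg hco l (c := 1) (by norm_num) hvext (n:ℤ)
  rw [← hS] at hbig
  unfold vln
  have htn : ((n:ℤ)).toNat = n := Int.toNat_natCast n
  rw [htn] at hbig
  calc ‖bigOp α s (q:ℂ) 0 l (vext q P d α s x0 x) (n:ℤ)‖
      ≤ ((1+A) ^ S)^l * 1 * (Kv ^ (n+1) * Q ^ (d * ∑ k ∈ Finset.range n, (k+1))) := hbig
    _ ≤ (1+A)^(n+1) * (Kv ^ (n+1) * Q ^ (d * ∑ k ∈ Finset.range n, (k+1))) := by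
        apply mul_le_mul_of_nonneg_right _ (by positivity)
        rw [mul_one, ← pow_mul]
        exact pow_le_pow_right₀ (by linarith) (by omega)
    _ = ((1+A)*Kv) ^ (n+1) * Q ^ (d * ∑ k ∈ Finset.range n, (k+1)) := by
        rw [mul_pow]; ring


private lemma zpow_abs_bound' (z : ℂ) (B : ℝ) (h1 : ‖z‖ ≤ B)
    (h2 : (‖z‖)⁻¹ ≤ B) (hB : 1 ≤ B) (t : ℤ) (N : ℕ) (hN : t.natAbs ≤ N) :
    ‖z ^ t‖ ≤ B ^ N := by
  rw [norm_zpow]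
  obtain ⟨k, rfl | rfl⟩ := Int.eq_nat_or_neg t
  · rw [zpow_natCast]
    calc ‖z‖ ^ k ≤ B ^ k := pow_le_pow_left₀ (norm_nonneg z) h1 k
      _ ≤ B ^ N := pow_le_pow_right₀ hB (by simpa using hN)
  · rw [zpow_neg, ← inv_zpow, zpow_natCast]
    calc (‖z‖)⁻¹ ^ k ≤ B ^ k := pow_le_pow_left₀ (by positivity) h2 k
      _ ≤ B ^ N := pow_le_pow_right₀ hB (by simpa using hN)

private lemma useq_bd (q : ℚ) {m : ℕ} (d : ℕ) (α : Fin m → ℂ) (s : Fin m → ℕ)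
    (x : Fin m → Fin d → ℕ → ℂ) (S : ℕ) (hsS : ∀ j, s j ≤ S)
    (B : ℝ) (hB1 : 1 ≤ B)
    (hB : ∀ (j : Fin m) (k : Fin d), ‖α j * (q:ℂ) ^ (k:ℕ)‖ ≤ B ∧
      (‖α j * (q:ℂ) ^ (k:ℕ)‖)⁻¹ ≤ B)
    (hx : ∀ j k σ, ‖x j k σ‖ ≤ 1) (l : ℕ) :
    ‖useq q d α s x (l:ℤ)‖
      ≤ (((m:ℝ)*d*S+1) * ((2:ℝ)^S)^(S+1) * B^(S+1)) ^ (l+1) := by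
  have hterm : ∀ (j : Fin m) (k : Fin d), ∀ σ ∈ Finset.range (s j),
      ‖(∏ i ∈ Finset.range σ, (((l:ℤ) : ℂ) - (i : ℂ))) *
        (α j * (q : ℂ) ^ (k : ℕ)) ^ ((l:ℤ) - (σ : ℤ)) * x j k σ‖
        ≤ ((l:ℝ)+S+1)^S * B^(l+S) := by
    intro j k σ hσ
    have hσS : σ ≤ S := le_trans (le_of_lt (Finset.mem_range.mp hσ)) (hsS j)
    rw [norm_mul, norm_mul]
    have hprod : ‖∏ i ∈ Finset.range σ, (((l:ℤ) : ℂ) - (i : ℂ))‖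
        ≤ ((l:ℝ)+S+1)^S := by
      rw [norm_prod]
      calc ∏ i ∈ Finset.range σ, ‖((l:ℤ) : ℂ) - (i : ℂ)‖
          ≤ ∏ i ∈ Finset.range σ, ((l:ℝ)+S+1) := by
            apply Finset.prod_le_prod (fun _ _ => norm_nonneg _)
            intro i hi
            have hiS : (i:ℝ) ≤ S := by
              exact_mod_cast le_of_lt (lt_of_lt_of_le (Finset.mem_range.mp hi) hσS)
            calc ‖((l:ℤ) : ℂ) - (i : ℂ)‖
                ≤ ‖((l:ℤ) : ℂ)‖ + ‖((i:ℕ) : ℂ)‖ := by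
                  simpa [sub_eq_add_neg] using norm_add_le (((l:ℤ)):ℂ) (-((i:ℕ):ℂ))
              _ = (l:ℝ) + (i:ℝ) := by
                  push_cast
                  rw [Complex.norm_natCast, Complex.norm_natCast]
              _ ≤ (l:ℝ)+S+1 := by linarith
        _ = ((l:ℝ)+S+1)^σ := by rw [Finset.prod_const, Finset.card_range]
        _ ≤ ((l:ℝ)+S+1)^S := by
            apply pow_le_pow_right₀ _ hσS
            have : (0:ℝ) ≤ (l:ℝ) := Nat.cast_nonneg l
            have : (0:ℝ) ≤ (S:ℝ) := Nat.cast_nonneg S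
            linarith
    have hz : ‖(α j * (q : ℂ) ^ (k : ℕ)) ^ ((l:ℤ) - (σ : ℤ))‖ ≤ B^(l+S) := by
      apply zpow_abs_bound' _ _ (hB j k).1 (hB j k).2 hB1
      calc ((l:ℤ) - (σ:ℤ)).natAbs ≤ (l:ℤ).natAbs + (σ:ℤ).natAbs := Int.natAbs_sub_le _ _
        _ = l + σ := by simp
        _ ≤ l + S := by omega
    calc ‖_‖ * ‖_‖ * ‖x j k σ‖
        ≤ (((l:ℝ)+S+1)^S * B^(l+S)) * 1 := by
          apply mul_le_mul (mul_le_mul hprod hz (norm_nonneg _) (by positivity))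
            (hx j k σ) (norm_nonneg _) (by positivity)
      _ = ((l:ℝ)+S+1)^S * B^(l+S) := mul_one _
  have hsum : ‖useq q d α s x (l:ℤ)‖
      ≤ ((m:ℝ)*d*S) * (((l:ℝ)+S+1)^S * B^(l+S)) := by
    unfold useq
    have hbnd : (0:ℝ) ≤ ((l:ℝ)+S+1)^S * B^(l+S) := by positivity
    calc ‖∑ j : Fin m, ∑ k : Fin d, ∑ σ ∈ Finset.range (s j), _‖
        ≤ ∑ j : Fin m, ‖∑ k : Fin d, ∑ σ ∈ Finset.range (s j),
            (∏ i ∈ Finset.range σ, (((l:ℤ) : ℂ) - (i : ℂ))) *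
              (α j * (q : ℂ) ^ (k : ℕ)) ^ ((l:ℤ) - (σ : ℤ)) * x j k σ‖ :=
          norm_sum_le _ _
      _ ≤ ∑ j : Fin m, ((d:ℝ) * S) * (((l:ℝ)+S+1)^S * B^(l+S)) := by
          apply Finset.sum_le_sum
          intro j _
          calc ‖∑ k : Fin d, _‖
              ≤ ∑ k : Fin d, ‖∑ σ ∈ Finset.range (s j),
                  (∏ i ∈ Finset.range σ, (((l:ℤ) : ℂ) - (i : ℂ))) *
                    (α j * (q : ℂ) ^ (k : ℕ)) ^ ((l:ℤ) - (σ : ℤ)) * x j k σ‖ :=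
                norm_sum_le _ _
            _ ≤ ∑ k : Fin d, ((S:ℝ) * (((l:ℝ)+S+1)^S * B^(l+S))) := by
                apply Finset.sum_le_sum
                intro k _
                calc ‖∑ σ ∈ Finset.range (s j), _‖
                    ≤ ∑ σ ∈ Finset.range (s j), ‖(∏ i ∈ Finset.range σ, (((l:ℤ) : ℂ) - (i : ℂ))) *
                          (α j * (q : ℂ) ^ (k : ℕ)) ^ ((l:ℤ) - (σ : ℤ)) * x j k σ‖ :=
                      norm_sum_le _ _
                  _ ≤ ∑ σ ∈ Finset.range (s j), (((l:ℝ)+S+1)^S * B^(l+S)) :=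
                      Finset.sum_le_sum (hterm j k)
                  _ = (s j : ℝ) * (((l:ℝ)+S+1)^S * B^(l+S)) := by
                      rw [Finset.sum_const, Finset.card_range, nsmul_eq_mul]
                  _ ≤ (S:ℝ) * (((l:ℝ)+S+1)^S * B^(l+S)) := by
                      apply mul_le_mul_of_nonneg_right _ hbnd
                      exact_mod_cast hsS j
            _ = (d:ℝ) * S * (((l:ℝ)+S+1)^S * B^(l+S)) := by
                rw [Finset.sum_const, Finset.card_univ, Fintype.card_fin, nsmul_eq_mul]; ring
      _ = ((m:ℝ)*d*S) * (((l:ℝ)+S+1)^S * B^(l+S)) := by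
          rw [Finset.sum_const, Finset.card_univ, Fintype.card_fin, nsmul_eq_mul]; ring
  -- now the arithmetic step
  have h2p : ((l:ℝ)+S+1) ≤ (2:ℝ)^(l+S+1) := by
    have := Nat.lt_two_pow_self (n := l+S+1)
    have h' : ((l+S+1 : ℕ):ℝ) ≤ ((2^(l+S+1) : ℕ):ℝ) := by exact_mod_cast this.le
    push_cast at h'
    convert h' using 2 <;> push_cast <;> ring
  set Ku : ℝ := ((m:ℝ)*d*S+1) * ((2:ℝ)^S)^(S+1) * B^(S+1) with hKu
  have hmds : (0:ℝ) ≤ (m:ℝ)*d*S := by positivity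
  have hKu1 : (2:ℝ)^S * B ≤ Ku := by
    rw [hKu]
    calc (2:ℝ)^S * B ≤ ((2:ℝ)^S)^(S+1) * B^(S+1) := by
          apply mul_le_mul (le_self_pow₀ (one_le_pow₀ (by norm_num)) (Nat.succ_ne_zero S))
            (le_self_pow₀ hB1 (Nat.succ_ne_zero S)) (by linarith) (by positivity)
      _ ≤ ((m:ℝ)*d*S+1) * (((2:ℝ)^S)^(S+1) * B^(S+1)) := by
          apply le_mul_of_one_le_left (by positivity) (by linarith)
      _ = ((m:ℝ)*d*S+1) * ((2:ℝ)^S)^(S+1) * B^(S+1) := by ring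
  have hKu2 : ((m:ℝ)*d*S) * (((2:ℝ)^S)^(S+1) * B^S) ≤ Ku := by
    rw [hKu]
    have hBS : B^S ≤ B^(S+1) := pow_le_pow_right₀ hB1 (Nat.le_succ S)
    have h1 : ((m:ℝ)*d*S) ≤ ((m:ℝ)*d*S+1) := by linarith
    calc ((m:ℝ)*d*S) * (((2:ℝ)^S)^(S+1) * B^S)
        ≤ ((m:ℝ)*d*S+1) * (((2:ℝ)^S)^(S+1) * B^(S+1)) := by
          apply mul_le_mul h1 (by
            apply mul_le_mul_of_nonneg_left hBS (by positivity)) (by positivity) (by linarith)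
      _ = ((m:ℝ)*d*S+1) * ((2:ℝ)^S)^(S+1) * B^(S+1) := by ring
  have hsplit : ((m:ℝ)*d*S) * (((2:ℝ)^(l+S+1))^S * B^(l+S))
      = (((m:ℝ)*d*S) * (((2:ℝ)^S)^(S+1) * B^S)) * (((2:ℝ)^S * B))^l := by
    rw [← pow_mul, ← pow_mul, mul_pow, ← pow_mul]
    have e1 : (l+S+1)*S = S*(S+1) + S*l := by ring
    have e2 : l + S = S + l := by ring
    rw [e1, e2, pow_add, pow_add]
    ring
  calc ‖useq q d α s x (l:ℤ)‖
      ≤ ((m:ℝ)*d*S) * (((l:ℝ)+S+1)^S * B^(l+S)) := hsum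
    _ ≤ ((m:ℝ)*d*S) * (((2:ℝ)^(l+S+1))^S * B^(l+S)) := by
        apply mul_le_mul_of_nonneg_left _ hmds
        apply mul_le_mul_of_nonneg_right _ (by positivity)
        apply pow_le_pow_left₀ (by positivity) h2p
    _ = (((m:ℝ)*d*S) * (((2:ℝ)^S)^(S+1) * B^S)) * (((2:ℝ)^S * B))^l := hsplit
    _ ≤ Ku * Ku^l := by
        apply mul_le_mul hKu2 (pow_le_pow_left₀ (by positivity) hKu1 l) (by positivity) (by
          rw [hKu]; positivity)
    _ = Ku ^ (l+1) := by rw [pow_succ]; ring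

private lemma sum_Icc_one' (n : ℕ) : ∑ k ∈ Finset.Icc 1 n, k = ∑ k ∈ Finset.range n, (k+1) := by
  induction n with
  | zero => simp
  | succ n ih => rw [Finset.sum_Icc_succ_top (by omega), Finset.sum_range_succ, ih]

private lemma vseq_bd (q : ℚ) (P : Polynomial ℚ) {m : ℕ} (d : ℕ) (α : Fin m → ℂ) (s : Fin m → ℕ)
    (x0 : ℂ) (x : Fin m → Fin d → ℕ → ℂ) (Q cP Ku : ℝ) (hQ1 : 1 ≤ Q)
    (hcP : 1 ≤ cP) (hKu : 1 ≤ Ku)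
    (hPb : ∀ k : ℕ, 1 ≤ k → ‖Pq q P k‖ ≤ cP * Q ^ (d * k))
    (hub : ∀ l : ℕ, ‖useq q d α s x (l:ℤ)‖ ≤ Ku ^ (l+1))
    (hx0 : ‖x0‖ ≤ 1) (n : ℕ) :
    ‖vseq q P d α s x0 x n‖
      ≤ (4*Ku*cP) ^ (n+1) * Q ^ (d * ∑ k ∈ Finset.range n, (k+1)) := by
  set T : ℕ := ∑ k ∈ Finset.range n, (k+1) with hT
  have hQT : (0:ℝ) < Q ^ (d * T) := by positivity
  -- bound on the Icc products (including prodP as the l = 0 style case)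
  have hIcc : ∀ l : ℕ, ‖∏ k ∈ Finset.Icc (l+1) n, Pq q P k‖
      ≤ cP ^ n * Q ^ (d * T) := by
    intro l
    rw [norm_prod]
    calc ∏ k ∈ Finset.Icc (l+1) n, ‖Pq q P k‖
        ≤ ∏ k ∈ Finset.Icc (l+1) n, (cP * Q ^ (d * k)) := by
          apply Finset.prod_le_prod (fun _ _ => norm_nonneg _)
          intro k hk
          exact hPb k (by have := (Finset.mem_Icc.mp hk).1; omega)
      _ ≤ ∏ k ∈ Finset.Icc 1 n, (cP * Q ^ (d * k)) := by
          have hsub : Finset.Icc (l+1) n ⊆ Finset.Icc 1 n :=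
            Finset.Icc_subset_Icc (by omega) le_rfl
          rw [← Finset.prod_sdiff hsub]
          apply le_mul_of_one_le_left (Finset.prod_nonneg (fun i _ => by positivity))
          have := Finset.prod_le_prod (s := Finset.Icc 1 n \ Finset.Icc (l+1) n)
            (f := fun _ => (1:ℝ)) (g := fun k => cP * Q ^ (d*k))
            (by intro i _; norm_num) (by
              intro i _
              show (1:ℝ) ≤ cP * Q ^ (d*i)
              have h1 : (1:ℝ) ≤ Q ^ (d*i) := one_le_pow₀ hQ1
              nlinarith)
          simpa using this
      _ = cP ^ n * Q ^ (d * T) := by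
          rw [Finset.prod_mul_distrib, Finset.prod_const, Nat.card_Icc,
            Finset.prod_pow_eq_pow_sum, ← Finset.mul_sum, hT, sum_Icc_one']
          norm_num
  have hprodP : ‖prodP q P n‖ ≤ cP ^ n * Q ^ (d * T) := by
    unfold prodP
    rw [norm_prod]
    calc ∏ k ∈ Finset.range n, ‖Pq q P (k+1)‖
        ≤ ∏ k ∈ Finset.range n, (cP * Q ^ (d * (k+1))) := by
          apply Finset.prod_le_prod (fun _ _ => norm_nonneg _)
          intro k _
          exact hPb (k+1) (by omega)
      _ = cP ^ n * Q ^ (d * T) := by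
          rw [Finset.prod_mul_distrib, Finset.prod_const, Finset.card_range]
          congr 1
          rw [Finset.prod_pow_eq_pow_sum, ← Finset.mul_sum, hT]
  have habs : ‖vseq q P d α s x0 x n‖
      ≤ (1 + (n+1) * Ku^(n+1)) * (cP ^ n * Q ^ (d * T)) := by
    unfold vseq
    calc ‖x0 * prodP q P n + ∑ l ∈ Finset.range (n + 1),
          useq q d α s x (l : ℤ) * ∏ k ∈ Finset.Icc (l + 1) n, Pq q P k‖
        ≤ ‖x0 * prodP q P n‖ + ‖∑ l ∈ Finset.range (n + 1),
            useq q d α s x (l : ℤ) * ∏ k ∈ Finset.Icc (l + 1) n, Pq q P k‖ :=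
          norm_add_le _ _
      _ ≤ 1 * (cP ^ n * Q ^ (d * T)) + ∑ l ∈ Finset.range (n + 1),
            (Ku^(l+1) * (cP ^ n * Q ^ (d * T))) := by
          apply add_le_add
          · rw [norm_mul]
            apply mul_le_mul hx0 hprodP (norm_nonneg _) (by norm_num)
          · calc ‖∑ l ∈ Finset.range (n + 1), _‖
                ≤ ∑ l ∈ Finset.range (n + 1), ‖useq q d α s x (l : ℤ) * ∏ k ∈ Finset.Icc (l + 1) n, Pq q P k‖ :=
                  norm_sum_le _ _
              _ ≤ ∑ l ∈ Finset.range (n + 1), (Ku^(l+1) * (cP ^ n * Q ^ (d * T))) := by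
                  apply Finset.sum_le_sum
                  intro l _
                  rw [norm_mul]
                  exact mul_le_mul (hub l) (hIcc l) (norm_nonneg _) (by positivity)
      _ ≤ 1 * (cP ^ n * Q ^ (d * T)) + ∑ l ∈ Finset.range (n + 1),
            (Ku^(n+1) * (cP ^ n * Q ^ (d * T))) := by
          apply add_le_add_right
          apply Finset.sum_le_sum
          intro l hl
          apply mul_le_mul_of_nonneg_right _ (by positivity)
          exact pow_le_pow_right₀ hKu (by have := Finset.mem_range.mp hl; omega)
      _ = (1 + (n+1) * Ku^(n+1)) * (cP ^ n * Q ^ (d * T)) := by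
          rw [Finset.sum_const, Finset.card_range, nsmul_eq_mul]
          push_cast
          ring
  calc ‖vseq q P d α s x0 x n‖
      ≤ (1 + (n+1) * Ku^(n+1)) * (cP ^ n * Q ^ (d * T)) := habs
    _ = ((1 + ((n:ℕ)+1) * Ku^(n+1)) * cP^n) * Q ^ (d * T) := by ring
    _ ≤ (4*Ku*cP) ^ (n+1) * Q ^ (d * T) := by
        apply mul_le_mul_of_nonneg_right _ hQT.le
        have ht1 : ((n:ℝ)+1) ≤ (2:ℝ)^(n+1) := by
          have := Nat.lt_two_pow_self (n := n+1)
          have h' : ((n+1 : ℕ):ℝ) ≤ ((2^(n+1) : ℕ):ℝ) := by exact_mod_cast this.le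
          push_cast at h'
          linarith
        have ht2 : (2:ℝ) ≤ (2:ℝ)^(n+1) := le_self_pow₀ (by norm_num) (Nat.succ_ne_zero n)
        have hK1 : (1:ℝ) ≤ Ku^(n+1) := one_le_pow₀ hKu
        have hc1 : (1:ℝ) ≤ cP^n := one_le_pow₀ hcP
        have hcc : cP^n ≤ cP^(n+1) := pow_le_pow_right₀ hcP (Nat.le_succ n)
        have h4 : (4:ℝ)^(n+1) = (2:ℝ)^(n+1) * (2:ℝ)^(n+1) := by
          rw [← mul_pow]; norm_num
        have hcn : (0:ℝ) ≤ cP^n := by positivity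
        have ht0 : (0:ℝ) ≤ (2:ℝ)^(n+1) := by positivity
        calc (1 + ((n:ℕ)+1 : ℝ) * Ku^(n+1)) * cP^n
            ≤ ((2:ℝ)^(n+1) + (2:ℝ)^(n+1) * Ku^(n+1)) * cP^n := by
              apply mul_le_mul_of_nonneg_right _ hcn
              push_cast
              have h5 : ((n:ℝ)+1) * Ku^(n+1) ≤ (2:ℝ)^(n+1) * Ku^(n+1) :=
                mul_le_mul_of_nonneg_right ht1 (by linarith)
              linarith
          _ ≤ ((2:ℝ)^(n+1) * Ku^(n+1) + (2:ℝ)^(n+1) * Ku^(n+1)) * cP^n := by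
              apply mul_le_mul_of_nonneg_right _ hcn
              have h5 : (2:ℝ)^(n+1) * 1 ≤ (2:ℝ)^(n+1) * Ku^(n+1) :=
                mul_le_mul_of_nonneg_left hK1 ht0
              linarith
          _ = ((2:ℝ) * (2:ℝ)^(n+1) * Ku^(n+1)) * cP^n := by ring
          _ ≤ ((2:ℝ)^(n+1) * (2:ℝ)^(n+1) * Ku^(n+1)) * cP^(n+1) := by
              have e1 : (2:ℝ) * (2:ℝ)^(n+1) ≤ (2:ℝ)^(n+1) * (2:ℝ)^(n+1) := by nlinarith
              have e2 : (2:ℝ) * (2:ℝ)^(n+1) * Ku^(n+1) ≤ (2:ℝ)^(n+1) * (2:ℝ)^(n+1) * Ku^(n+1) :=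
                mul_le_mul_of_nonneg_right e1 (by positivity)
              exact mul_le_mul e2 hcc hcn (by positivity)
          _ = (4*Ku*cP) ^ (n+1) := by
              rw [mul_pow, mul_pow, h4]


private lemma two_mul_gauss' (n : ℕ) : (∑ k ∈ Finset.range n, (k+1)) * 2 = n * (n+1) := by
  induction n with
  | zero => simp
  | succ n ih => rw [Finset.sum_range_succ, add_mul, ih]; ring

private lemma rpow_final (Q K : ℝ) (hQ : 1 < Q) (hK : 1 ≤ K) (d : ℕ) :
    ∃ C : ℝ, 0 < C ∧ ∀ n : ℕ, K^(n+1) * Q^(d * ∑ k ∈ Finset.range n, (k+1))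
      ≤ Q ^ ((d:ℝ) * (n:ℝ)^2 / 2 + C * ((n:ℝ)+1)) := by
  have hQ0 : (0:ℝ) < Q := by linarith
  have hK0 : (0:ℝ) < K := by linarith
  have hlogb : 0 ≤ Real.logb Q K := Real.logb_nonneg hQ hK
  refine ⟨(d:ℝ)/2 + Real.logb Q K + 1, by positivity, ?_⟩
  intro n
  set T : ℕ := ∑ k ∈ Finset.range n, (k+1) with hT
  have hT2 : ((T:ℝ)) * 2 = (n:ℝ) * ((n:ℝ)+1) := by
    have := two_mul_gauss' n
    rw [← hT] at this
    exact_mod_cast congrArg (Nat.cast : ℕ → ℝ) this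
  have e1 : Q ^ (Real.logb Q K * ((n:ℝ)+1)) = K ^ (n+1) := by
    rw [Real.rpow_mul hQ0.le, Real.rpow_logb hQ0 hQ.ne' hK0,
      show ((n:ℝ)+1) = ((n+1 : ℕ):ℝ) by push_cast; ring, Real.rpow_natCast]
  have e2 : Q ^ (((d*T : ℕ)):ℝ) = Q ^ (d*T) := Real.rpow_natCast Q (d*T)
  calc K^(n+1) * Q^(d * T)
      = Q ^ (Real.logb Q K * ((n:ℝ)+1) + ((d*T:ℕ):ℝ)) := by
        rw [Real.rpow_add hQ0, e1, e2]
    _ ≤ Q ^ ((d:ℝ) * (n:ℝ)^2 / 2 + ((d:ℝ)/2 + Real.logb Q K + 1) * ((n:ℝ)+1)) := by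
        apply Real.rpow_le_rpow_of_exponent_le hQ.le
        have hc : ((d*T:ℕ):ℝ) = (d:ℝ) * (T:ℝ) := by push_cast; ring
        have hdT : (d:ℝ) * ((T:ℝ) * 2) = (d:ℝ) * ((n:ℝ) * ((n:ℝ)+1)) := by rw [hT2]
        rw [hc]
        nlinarith [Nat.cast_nonneg (α := ℝ) n, Nat.cast_nonneg (α := ℝ) d]



private lemma one_le_prod_real {ι : Type*} (s : Finset ι) (f : ι → ℝ)
    (h : ∀ i ∈ s, 1 ≤ f i) : 1 ≤ ∏ i ∈ s, f i := by
  have := Finset.prod_le_prod (s := s) (f := fun _ => (1:ℝ)) (g := f)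
    (by intro i _; norm_num) h
  simpa using this

private lemma sup_coe_le {m d : ℕ} (s : Fin m → ℕ) (F : Fin m → Fin d → ℕ → ℂ) (R : ℝ)
    (hR : 0 ≤ R) (h : ∀ (j : Fin m) (k : Fin d) (σ : ℕ), ‖F j k σ‖ ≤ R) :
    ((Finset.univ.sup fun j : Fin m => Finset.univ.sup fun k : Fin d =>
        (Finset.range (s j)).sup fun σ => ‖F j k σ‖₊ : NNReal) : ℝ) ≤ R := by
  rw [← Real.coe_toNNReal R hR, NNReal.coe_le_coe]
  apply Finset.sup_le
  intro j _
  apply Finset.sup_le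
  intro k _
  apply Finset.sup_le
  intro σ _
  rw [← NNReal.coe_le_coe, coe_nnnorm, Real.coe_toNNReal _ hR]
  exact h j k σ


/-- height estimates for the linear forms `v_n` and `v_{l,n}`. -/
theorem stmt_10
    (q₁ q₂ : ℤ) (hq₁ : q₁ ≠ 0) (hq₂ : q₂ ≠ 0) (hcop : Int.gcd q₁ q₂ = 1)
    (habs : |q₂| < |q₁|)
    (q : ℚ) (hq : q = (q₁ : ℚ) / (q₂ : ℚ))
    (P : Polynomial ℚ) (d : ℕ) (hd : d = P.natDegree) (hd1 : 1 ≤ d)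
    (hP : ∀ n : ℕ, 1 ≤ n → P.eval (q ^ n) ≠ 0)
    (m : ℕ) (α : Fin m → ℂ) (hα : ∀ j, α j ≠ 0)
    (s : Fin m → ℕ) (hs : ∀ j, 0 < s j)
    (S : ℕ) (hS : S = ∑ j, s j) :
    ∃ C : ℝ, 0 < C ∧
      (∀ n : ℕ,
        max (‖vseq q P d α s 1 0 n‖)
          ((Finset.univ.sup fun j : Fin m => Finset.univ.sup fun k : Fin d =>
              (Finset.range (s j)).sup fun σ =>
                ‖vseq q P d α s 0 (basisVec d j k σ) n‖₊ : NNReal) : ℝ)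
          ≤ |(q : ℝ)| ^ ((d : ℝ) * (n : ℝ) ^ 2 / 2 + C * ((n : ℝ) + 1))) ∧
      (∀ l n : ℕ, S * l ≤ n →
        max (‖vln q P d α s 1 0 l n‖)
          ((Finset.univ.sup fun j : Fin m => Finset.univ.sup fun k : Fin d =>
              (Finset.range (s j)).sup fun σ =>
                ‖vln q P d α s 0 (basisVec d j k σ) l n‖₊ : NNReal) : ℝ)
          ≤ |(q : ℝ)| ^ ((d : ℝ) * (n : ℝ) ^ 2 / 2 + C * ((n : ℝ) + 1))) := by
  classical
  have habs1 : (1:ℚ) < |q| := by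
    have h2 : (0:ℚ) < |(q₂:ℚ)| := abs_pos.2 (Int.cast_ne_zero.2 hq₂)
    rw [hq, abs_div, lt_div_iff₀ h2, one_mul]
    exact_mod_cast habs
  have hQgt : 1 < |(q:ℝ)| := by exact_mod_cast habs1
  have hQ1 : (1:ℝ) ≤ |(q:ℝ)| := hQgt.le
  have habsqC : ‖(q:ℂ)‖ = |(q:ℝ)| := by
    rw [← Complex.ofReal_ratCast, Complex.norm_real, Real.norm_eq_abs]
  -- constant for P
  set cPQ : ℚ := ∑ i ∈ Finset.range (P.natDegree+1), |P.coeff i| + 1 with hcPQ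
  set cP : ℝ := (cPQ : ℝ) with hcPdef
  have hcP1 : 1 ≤ cP := by
    have h0 : (0:ℚ) ≤ ∑ i ∈ Finset.range (P.natDegree+1), |P.coeff i| :=
      Finset.sum_nonneg fun i _ => abs_nonneg _
    have h1 : (1:ℚ) ≤ cPQ := by rw [hcPQ]; linarith
    rw [hcPdef]
    exact_mod_cast h1
  have hPb : ∀ k : ℕ, 1 ≤ k → ‖Pq q P k‖ ≤ cP * |(q:ℝ)| ^ (d * k) := by
    intro k _
    have hx : (1:ℚ) ≤ |q ^ k| := by
      rw [abs_pow]; exact one_le_pow₀ habs1.le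
    have h := poly_eval_bound P (q ^ k) hx
    rw [abs_pow, ← pow_mul] at h
    unfold Pq
    rw [← Complex.ofReal_ratCast, Complex.norm_real, Real.norm_eq_abs]
    have hcast : |((P.eval (q^k) : ℚ) : ℝ)| = ((|P.eval (q^k)| : ℚ) : ℝ) := by push_cast; ring
    rw [hcast, hd]
    calc ((|P.eval (q^k)| : ℚ) : ℝ)
        ≤ ((cPQ * |q| ^ (k * P.natDegree) : ℚ) : ℝ) := by
          rw [hcPQ]; exact_mod_cast h
      _ = cP * |(q:ℝ)| ^ (P.natDegree * k) := by
          rw [hcPdef]; push_cast; rw [mul_comm k]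
  -- constant B
  set Bp : ℝ := ∏ j, (‖α j‖ + (‖α j‖)⁻¹ + 1) with hBpdef
  have hfge1 : ∀ j : Fin m, (1:ℝ) ≤ ‖α j‖ + (‖α j‖)⁻¹ + 1 := by
    intro j
    have h1 := norm_nonneg (α j)
    have h2 : (0:ℝ) ≤ (‖α j‖)⁻¹ := by positivity
    linarith
  have hBp1 : 1 ≤ Bp := by
    rw [hBpdef]
    exact one_le_prod_real _ _ (fun j _ => hfge1 j)
  have hfBp : ∀ j : Fin m, ‖α j‖ + (‖α j‖)⁻¹ + 1 ≤ Bp := by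
    intro j
    rw [hBpdef, ← Finset.mul_prod_erase Finset.univ _ (Finset.mem_univ j)]
    apply le_mul_of_one_le_right (by linarith [hfge1 j])
    exact one_le_prod_real _ _ (fun i _ => hfge1 i)
  set B : ℝ := Bp * (|(q:ℝ)|+1)^d with hBdef
  have hqd1 : (1:ℝ) ≤ (|(q:ℝ)|+1)^d := one_le_pow₀ (by linarith)
  have hB1 : 1 ≤ B := by
    rw [hBdef]; nlinarith
  have hBjk : ∀ (j : Fin m) (k : Fin d), ‖α j * (q:ℂ) ^ (k:ℕ)‖ ≤ B ∧
      (‖α j * (q:ℂ) ^ (k:ℕ)‖)⁻¹ ≤ B := by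
    intro j k
    have habsmul : ‖α j * (q:ℂ) ^ (k:ℕ)‖
        = ‖α j‖ * |(q:ℝ)| ^ (k:ℕ) := by
      rw [norm_mul, norm_pow, habsqC]
    have haj : ‖α j‖ ≤ Bp := by
      have h1 := hfBp j
      have h2 : (0:ℝ) ≤ (‖α j‖)⁻¹ := by positivity
      linarith
    have hajinv : (‖α j‖)⁻¹ ≤ Bp := by
      have h1 := hfBp j
      have h2 := norm_nonneg (α j)
      linarith
    have hQk : |(q:ℝ)| ^ (k:ℕ) ≤ (|(q:ℝ)|+1)^d :=
      le_trans (pow_le_pow_left₀ (abs_nonneg _) (by linarith) _)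
        (pow_le_pow_right₀ (by linarith) (le_of_lt k.isLt))
    constructor
    · rw [habsmul, hBdef]
      exact mul_le_mul haj hQk (by positivity) (by linarith)
    · rw [habsmul, mul_inv]
      have hQkinv : (|(q:ℝ)| ^ (k:ℕ))⁻¹ ≤ 1 := inv_le_one_of_one_le₀ (one_le_pow₀ hQ1)
      calc (‖α j‖)⁻¹ * (|(q:ℝ)| ^ (k:ℕ))⁻¹
          ≤ Bp * 1 := mul_le_mul hajinv hQkinv (by positivity) (by linarith)
        _ = Bp := mul_one _
        _ ≤ B := by rw [hBdef]; nlinarith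
  have hsS : ∀ j, s j ≤ S := by
    intro j
    rw [hS]
    exact Finset.single_le_sum (fun _ _ => Nat.zero_le _) (Finset.mem_univ j)
  -- constants Ku, Kv
  set Ku : ℝ := ((m:ℝ)*d*S+1) * ((2:ℝ)^S)^(S+1) * B^(S+1) with hKudef
  have hKu1 : 1 ≤ Ku := by
    rw [hKudef]
    have h0 : (0:ℝ) ≤ (m:ℝ)*d*S := by positivity
    have h2 : (1:ℝ) ≤ ((2:ℝ)^S)^(S+1) := one_le_pow₀ (one_le_pow₀ (by norm_num))
    have h3 : (1:ℝ) ≤ B^(S+1) := one_le_pow₀ hB1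
    have h4 : (1:ℝ) ≤ ((m:ℝ)*d*S+1) * ((2:ℝ)^S)^(S+1) :=
      one_le_mul_of_one_le_of_one_le (by linarith) h2
    calc (1:ℝ) ≤ ((m:ℝ)*d*S+1) * ((2:ℝ)^S)^(S+1) := h4
      _ = ((m:ℝ)*d*S+1) * ((2:ℝ)^S)^(S+1) * 1 := (mul_one _).symm
      _ ≤ ((m:ℝ)*d*S+1) * ((2:ℝ)^S)^(S+1) * B^(S+1) := by
          apply mul_le_mul_of_nonneg_left h3 (by linarith)
  set Kv : ℝ := 4*Ku*cP with hKvdef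
  have hKv1 : 1 ≤ Kv := by rw [hKvdef]; nlinarith
  -- uniform bound on vseq
  have hvbound : ∀ (x0 : ℂ) (x : Fin m → Fin d → ℕ → ℂ), ‖x0‖ ≤ 1 →
      (∀ j k σ, ‖x j k σ‖ ≤ 1) → ∀ n : ℕ,
      ‖vseq q P d α s x0 x n‖
        ≤ Kv ^ (n+1) * |(q:ℝ)| ^ (d * ∑ k ∈ Finset.range n, (k+1)) := by
    intro x0 x hx0 hx n
    have hub : ∀ l : ℕ, ‖useq q d α s x (l:ℤ)‖ ≤ Ku ^ (l+1) := by
      intro l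
      rw [hKudef]
      exact useq_bd q d α s x S hsS B hB1 hBjk hx l
    have h := vseq_bd q P d α s x0 x |(q:ℝ)| cP Ku hQ1 hcP1 hKu1 hPb hub hx0 n
    rw [hKvdef]
    exact h
  -- constant A for the difference operators
  set A : ℝ := 1 + ∑ j, ‖α j‖ with hAdef
  have hsumnn : (0:ℝ) ≤ ∑ j, ‖α j‖ :=
    Finset.sum_nonneg fun j _ => norm_nonneg _
  have hA0 : 0 ≤ A := by rw [hAdef]; linarith
  have hco : ∀ (k : ℕ) (j : Fin m),
      ‖α j * (q:ℂ) ^ ((0:ℤ) - ((k:ℤ)+1))‖ ≤ A := by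
    intro k j
    rw [norm_mul, norm_zpow, habsqC]
    have h1 : |(q:ℝ)| ^ ((0:ℤ) - ((k:ℤ)+1)) ≤ 1 := zpow_le_one_of_nonpos₀ hQ1 (by omega)
    have h3 : ‖α j‖ ≤ ∑ j', ‖α j'‖ :=
      Finset.single_le_sum (fun _ _ => norm_nonneg _) (Finset.mem_univ j)
    calc ‖α j‖ * |(q:ℝ)| ^ ((0:ℤ) - ((k:ℤ)+1))
        ≤ ‖α j‖ * 1 := mul_le_mul_of_nonneg_left h1 (norm_nonneg _)
      _ = ‖α j‖ := mul_one _
      _ ≤ A := by rw [hAdef]; linarith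
  set K' : ℝ := (1+A)*Kv with hK'def
  have hK'1 : 1 ≤ K' := by rw [hK'def]; nlinarith
  have hKvK' : Kv ≤ K' := by rw [hK'def]; nlinarith
  obtain ⟨C, hC0, hC⟩ := rpow_final (|(q:ℝ)|) K' hQgt hK'1 d
  have hbasis : ∀ (j : Fin m) (k : Fin d) (σ : ℕ) (j' : Fin m) (k' : Fin d) (σ' : ℕ),
      ‖basisVec d j k σ j' k' σ'‖ ≤ 1 := by
    intro j k σ j' k' σ'
    simp only [basisVec]
    split <;> simp
  refine ⟨C, hC0, ?_, ?_⟩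
  · -- bounds for vseq
    intro n
    have hR0 : (0:ℝ) ≤ |(q:ℝ)| ^ ((d:ℝ)*(n:ℝ)^2/2 + C*((n:ℝ)+1)) :=
      (Real.rpow_pos_of_pos (by linarith) _).le
    have hbound : ∀ (x0 : ℂ) (x : Fin m → Fin d → ℕ → ℂ), ‖x0‖ ≤ 1 →
        (∀ j k σ, ‖x j k σ‖ ≤ 1) →
        ‖vseq q P d α s x0 x n‖
          ≤ |(q:ℝ)| ^ ((d:ℝ)*(n:ℝ)^2/2 + C*((n:ℝ)+1)) := by
      intro x0 x hx0 hx
      calc ‖vseq q P d α s x0 x n‖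
          ≤ Kv ^ (n+1) * |(q:ℝ)| ^ (d * ∑ k ∈ Finset.range n, (k+1)) :=
            hvbound x0 x hx0 hx n
        _ ≤ K' ^ (n+1) * |(q:ℝ)| ^ (d * ∑ k ∈ Finset.range n, (k+1)) := by
            apply mul_le_mul_of_nonneg_right _ (by positivity)
            exact pow_le_pow_left₀ (by linarith) hKvK' _
        _ ≤ |(q:ℝ)| ^ ((d:ℝ)*(n:ℝ)^2/2 + C*((n:ℝ)+1)) := hC n
    refine max_le ?_ ?_
    · exact hbound 1 0 (by simp) (by intro j k σ; simp)
    · exact sup_coe_le s _ _ hR0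
        (fun j k σ => hbound 0 (basisVec d j k σ) (by simp) (hbasis j k σ))
  · -- bounds for vln
    intro l n hln
    have hR0 : (0:ℝ) ≤ |(q:ℝ)| ^ ((d:ℝ)*(n:ℝ)^2/2 + C*((n:ℝ)+1)) :=
      (Real.rpow_pos_of_pos (by linarith) _).le
    have hbound : ∀ (x0 : ℂ) (x : Fin m → Fin d → ℕ → ℂ), ‖x0‖ ≤ 1 →
        (∀ j k σ, ‖x j k σ‖ ≤ 1) →
        ‖vln q P d α s x0 x l n‖
          ≤ |(q:ℝ)| ^ ((d:ℝ)*(n:ℝ)^2/2 + C*((n:ℝ)+1)) := by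
      intro x0 x hx0 hx
      have h1 := vln_bd q P d α s x0 x |(q:ℝ)| Kv A hQ1 hKv1 hA0 hco
        (hvbound x0 x hx0 hx) S hS l n hln
      calc ‖vln q P d α s x0 x l n‖
          ≤ ((1+A)*Kv) ^ (n+1) * |(q:ℝ)| ^ (d * ∑ k ∈ Finset.range n, (k+1)) := h1
        _ = K' ^ (n+1) * |(q:ℝ)| ^ (d * ∑ k ∈ Finset.range n, (k+1)) := by rw [hK'def]
        _ ≤ |(q:ℝ)| ^ ((d:ℝ)*(n:ℝ)^2/2 + C*((n:ℝ)+1)) := hC n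
    refine max_le ?_ ?_
    · exact hbound 1 0 (by simp) (by intro j k σ; simp)
    · exact sup_coe_le s _ _ hR0
        (fun j k σ => hbound 0 (basisVec d j k σ) (by simp) (hbasis j k σ))
end
end

section
/- Let ω = (ω₀, ω_{j,k,σ}) ∈ ℂ^{1+dS} and write P(z) = ∑_{ν=0}^d p_ν z^ν. Define the formal power series F(z) = ∑_{n=0}^∞ v_n(ω) zⁿ and R(z) = ω₀ + ∑_{n=0}^∞ u_n(ω) zⁿ, and let F(q^ν z) denote the formal power series ∑_{n=0}^∞ v_n(ω) q^{νn} zⁿ. Then (1 − p₀ z)·F(z) = ∑_{ν=1}^d p_ν q^ν z·F(q^ν z) + R(z) as formal power series over ℂ. -/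
open scoped BigOperators Classical
open Finset

noncomputable section

lemma vseq_succ (q : ℚ) (P : Polynomial ℚ) {m : ℕ} (d : ℕ) (α : Fin m → ℂ) (s : Fin m → ℕ)
    (x0 : ℂ) (x : Fin m → Fin d → ℕ → ℂ) (n : ℕ) :
    vseq q P d α s x0 x (n + 1)
      = Pq q P (n + 1) * vseq q P d α s x0 x n + useq q d α s x ((n : ℤ) + 1) := by
  unfold vseq prodP
  rw [Finset.prod_range_succ, Finset.sum_range_succ]
  have h1 : Finset.Icc (n + 1 + 1) (n + 1) = (∅ : Finset ℕ) :=
    Finset.Icc_eq_empty (by omega)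
  have h2 : ∀ l ∈ Finset.range (n + 1),
      useq q d α s x (l : ℤ) * ∏ k ∈ Finset.Icc (l + 1) (n + 1), Pq q P k
        = Pq q P (n + 1) * (useq q d α s x (l : ℤ) * ∏ k ∈ Finset.Icc (l + 1) n, Pq q P k) := by
    intro l hl
    rw [Finset.prod_Icc_succ_top (by have := Finset.mem_range.mp hl; omega)]
    ring
  rw [Finset.sum_congr rfl h2, h1, mul_add, Finset.mul_sum]
  push_cast
  simp only [Finset.prod_empty, mul_one]
  ring

lemma Pq_expand (q : ℚ) (P : Polynomial ℚ) (n : ℕ) :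
    Pq q P n = ∑ ν ∈ Finset.range (P.natDegree + 1),
      ((P.coeff ν : ℚ) : ℂ) * (q : ℂ) ^ (ν * n) := by
  unfold Pq
  rw [Polynomial.eval_eq_sum_range]
  push_cast
  exact Finset.sum_congr rfl fun ν _ => by rw [← pow_mul, mul_comm ν n, mul_comm]

/-- the functional equation `(1 − p₀z)F(z) = ∑_{ν=1}^d p_ν q^ν z F(q^ν z) + R(z)`
for the generating function of `v_n(ω)`, as formal power series. -/
theorem stmt_11
    (q₁ q₂ : ℤ) (hq₁ : q₁ ≠ 0) (hq₂ : q₂ ≠ 0) (hcop : Int.gcd q₁ q₂ = 1)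
    (habs : |q₂| < |q₁|)
    (q : ℚ) (hq : q = (q₁ : ℚ) / (q₂ : ℚ))
    (P : Polynomial ℚ) (d : ℕ) (hd : d = P.natDegree) (hd1 : 1 ≤ d)
    (hP : ∀ n : ℕ, 1 ≤ n → P.eval (q ^ n) ≠ 0)
    (m : ℕ) (α : Fin m → ℂ) (hα : ∀ j, α j ≠ 0)
    (s : Fin m → ℕ) (hs : ∀ j, 0 < s j)
    (S : ℕ) (hS : S = ∑ j, s j)
    (ω0 : ℂ) (ω : Fin m → Fin d → ℕ → ℂ)
    (F : ℤ → PowerSeries ℂ)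
    (hF : ∀ ν : ℤ, F ν = PowerSeries.mk fun n : ℕ =>
      vseq q P d α s ω0 ω n * (q : ℂ) ^ (ν * (n : ℤ)))
    (R : PowerSeries ℂ)
    (hR : R = PowerSeries.C (R := ℂ) ω0 + PowerSeries.mk fun n : ℕ => useq q d α s ω (n : ℤ)) :
    (1 - PowerSeries.C (R := ℂ) ((P.coeff 0 : ℚ) : ℂ) * PowerSeries.X) * F 0
      = ∑ ν ∈ Finset.Icc 1 d,
          PowerSeries.C (R := ℂ) (((P.coeff ν : ℚ) : ℂ) * (q : ℂ) ^ ν) * PowerSeries.X * F ν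
        + R := by
  have hq0 : (q : ℂ) ≠ 0 := by
    subst hq
    push_cast
    exact div_ne_zero (by exact_mod_cast hq₁) (by exact_mod_cast hq₂)
  ext n
  rw [sub_mul, one_mul, map_sub, map_add, map_sum, hR, map_add]
  simp only [hF]
  cases n with
  | zero =>
      simp [vseq, prodP, useq, mul_assoc]
  | succ n =>
      have key := vseq_succ q P d α s ω0 ω n
      rw [Pq_expand, ← hd] at key
      simp only [mul_assoc, PowerSeries.coeff_C_mul, PowerSeries.coeff_succ_X_mul,
        PowerSeries.coeff_mk, map_add, PowerSeries.coeff_C, Nat.succ_ne_zero, if_false,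
        zero_add, Nat.cast_succ, zero_mul, zpow_zero, mul_one, ← Nat.cast_mul, zpow_natCast]
      rw [key, Finset.sum_range_succ', ← Finset.Ico_add_one_right_eq_Icc, Finset.sum_Ico_eq_sum_range]
      simp only [Nat.add_sub_cancel, zero_mul, pow_zero, mul_one]
      rw [add_mul, Finset.sum_mul]
      have : ∀ i ∈ Finset.range d,
          ((P.coeff (i + 1) : ℚ) : ℂ) * (q : ℂ) ^ ((i + 1) * (n + 1)) * vseq q P d α s ω0 ω n
            = ((P.coeff (1 + i) : ℚ) : ℂ) *
              ((q : ℂ) ^ (1 + i) * (vseq q P d α s ω0 ω n * (q : ℂ) ^ ((1 + i) * n))) := by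
        intro i _
        rw [add_comm 1 i, Nat.mul_succ, pow_add]
        ring
      rw [Finset.sum_congr rfl this]
      ring
end
end

section
/- Write P(z) = ∑_{ν=0}^d p_ν z^ν. Let l ≥ d be an integer, ω = (ω₀, ω_{j,k,σ}) ∈ ℂ^{1+dS}, and for an integer ν and n ≥ Sl set W_ν(n) = ((∏_{k=1}^l ∏_{j=1}^m D_{α_j q^{ν−k}}^{s_j})(n ↦ v_n(ω)))(n). Then for all integers n ≥ Sl one has p_d · v_{l,n}(ω) = q^{−d(n+1)} · W_d(n+1) − ∑_{ν=1}^d p_{d−ν} · q^{−ν(n+1)} · W_ν(n), where v_{l,n}(ω) = W_0(n). -/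
open scoped BigOperators Classical
open Finset

noncomputable section

namespace S15aux

/-! ### Linearity -/

def IsLin (op : (ℤ → ℂ) → (ℤ → ℂ)) : Prop :=
  (∀ ξ ζ, op (fun n => ξ n + ζ n) = fun n => op ξ n + op ζ n) ∧
  (∀ (c : ℂ) ξ, op (fun n => c * ξ n) = fun n => c * op ξ n)

lemma isLin_id : IsLin id := ⟨fun _ _ => rfl, fun _ _ => rfl⟩

lemma isLin_comp {f g} (hf : IsLin f) (hg : IsLin g) : IsLin (f ∘ g) := by
  constructor
  · intro ξ ζ
    simp only [Function.comp_apply, hg.1 ξ ζ, hf.1]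
  · intro c ξ
    simp only [Function.comp_apply, hg.2 c ξ, hf.2]

lemma isLin_Dop (a : ℂ) : IsLin (Dop a) := by
  constructor
  · intro ξ ζ; funext n; simp only [Dop]; ring
  · intro c ξ; funext n; simp only [Dop]; ring

lemma isLin_iter {f} (hf : IsLin f) (s : ℕ) : IsLin f^[s] := by
  induction s with
  | zero => exact isLin_id
  | succ t ih => rw [Function.iterate_succ]; exact isLin_comp ih hf

lemma isLin_foldr {ι : Type*} (F : ι → (ℤ → ℂ) → (ℤ → ℂ)) (h : ∀ i, IsLin (F i))
    (L : List ι) : IsLin (L.foldr (fun i acc => F i ∘ acc) id) := by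
  induction L with
  | nil => exact isLin_id
  | cons i L ih =>
    simp only [List.foldr_cons]
    exact isLin_comp (h i) ih

lemma IsLin.zero {op} (h : IsLin op) : op (fun _ => 0) = fun _ => 0 := by
  have := h.2 0 (fun _ => 0)
  simpa using this

lemma IsLin.sub {op} (h : IsLin op) (ξ ζ : ℤ → ℂ) :
    op (fun n => ξ n - ζ n) = fun n => op ξ n - op ζ n := by
  have h1 := h.1 ξ (fun n => (-1) * ζ n)
  have h2 := h.2 (-1) ζ
  funext n
  have : (fun n => ξ n - ζ n) = fun n => ξ n + (fun n => (-1) * ζ n) n := by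
    funext k; ring
  rw [this, h1]
  simp only [h2]; ring

lemma IsLin.sum {op} (h : IsLin op) {ι : Type*} (t : Finset ι) (F : ι → ℤ → ℂ) :
    op (fun n => ∑ i ∈ t, F i n) = fun n => ∑ i ∈ t, op (F i) n := by
  classical
  induction t using Finset.induction with
  | empty => simpa using h.zero
  | insert a t' hnot ih =>
    have : (fun n => ∑ i ∈ insert a t', F i n) = fun n => F a n + (fun n => ∑ i ∈ t', F i n) n := by
      funext n; rw [Finset.sum_insert hnot]
    rw [this, h.1, ih]
    funext n
    rw [Finset.sum_insert hnot]

/-! ### Window (locality) -/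

def Window (op : (ℤ → ℂ) → (ℤ → ℂ)) (N : ℤ) : Prop :=
  ∀ ξ ζ n, (∀ k, n - N ≤ k → ξ k = ζ k) → op ξ n = op ζ n

lemma window_id : Window id 0 := by
  intro ξ ζ n h
  exact h n (by omega)

lemma window_Dop (a : ℂ) : Window (Dop a) 1 := by
  intro ξ ζ n h
  simp only [Dop, h n (by omega), h (n-1) (by omega)]

lemma window_comp {f g N₁ N₂} (hf : Window f N₁) (hg : Window g N₂) :
    Window (f ∘ g) (N₁ + N₂) := by
  intro ξ ζ n h
  exact hf _ _ n (fun k hk => hg _ _ k (fun k' hk' => h k' (by omega)))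

lemma window_iter (a : ℂ) (s : ℕ) : Window (Dop a)^[s] (s : ℤ) := by
  induction s with
  | zero => exact window_id
  | succ t ih =>
    rw [Function.iterate_succ]
    have h2 := window_comp ih (window_Dop a)
    have h3 : ((t : ℤ) + 1) = (((t+1 : ℕ)) : ℤ) := by push_cast; ring
    rwa [h3] at h2

lemma window_foldr {ι : Type*} (F : ι → (ℤ → ℂ) → (ℤ → ℂ)) (N : ι → ℤ)
    (h : ∀ i, Window (F i) (N i)) (L : List ι) :
    Window (L.foldr (fun i acc => F i ∘ acc) id) ((L.map N).sum) := by
  induction L with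
  | nil => exact window_id
  | cons i L ih =>
    have := window_comp (h i) ih
    simpa using this

/-! ### Shift -/

def shf (ξ : ℤ → ℂ) : ℤ → ℂ := fun n => ξ (n + 1)

def Commsh (op : (ℤ → ℂ) → (ℤ → ℂ)) : Prop := ∀ ξ, op (shf ξ) = shf (op ξ)

lemma commsh_id : Commsh id := fun _ => rfl

lemma commsh_Dop (a : ℂ) : Commsh (Dop a) := by
  intro ξ; funext n
  simp only [Dop, shf]
  ring_nf

lemma commsh_comp {f g} (hf : Commsh f) (hg : Commsh g) : Commsh (f ∘ g) := by
  intro ξ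
  show f (g (shf ξ)) = shf (f (g ξ))
  rw [hg ξ]
  exact hf (g ξ)

lemma commsh_iter {f} (hf : Commsh f) (s : ℕ) : Commsh f^[s] := by
  induction s with
  | zero => exact commsh_id
  | succ t ih => rw [Function.iterate_succ]; exact commsh_comp ih hf

lemma commsh_foldr {ι : Type*} (F : ι → (ℤ → ℂ) → (ℤ → ℂ)) (h : ∀ i, Commsh (F i))
    (L : List ι) : Commsh (L.foldr (fun i acc => F i ∘ acc) id) := by
  induction L with
  | nil => exact commsh_id
  | cons i L ih =>
    simp only [List.foldr_cons]
    exact commsh_comp (h i) ih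

/-! ### Twist conjugation -/

def tw (b : ℂ) (ξ : ℤ → ℂ) : ℤ → ℂ := fun n => b ^ n * ξ n

lemma tw_tw_inv (b : ℂ) (hb : b ≠ 0) (ξ : ℤ → ℂ) : tw b⁻¹ (tw b ξ) = ξ := by
  funext n
  simp only [tw, inv_zpow]
  rw [← mul_assoc, inv_mul_cancel₀ (zpow_ne_zero _ hb), one_mul]

lemma tw_inv_tw (b : ℂ) (hb : b ≠ 0) (ξ : ℤ → ℂ) : tw b (tw b⁻¹ ξ) = ξ := by
  funext n
  simp only [tw, inv_zpow]
  rw [← mul_assoc, mul_inv_cancel₀ (zpow_ne_zero _ hb), one_mul]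

def Cj (b : ℂ) (op op' : (ℤ → ℂ) → (ℤ → ℂ)) : Prop :=
  ∀ ξ, op ξ = tw b (op' (tw b⁻¹ ξ))

lemma cj_id (b : ℂ) (hb : b ≠ 0) : Cj b id id := by
  intro ξ; simp [tw_inv_tw b hb]

lemma cj_Dop (b : ℂ) (hb : b ≠ 0) (a : ℂ) : Cj b (Dop (a * b)) (Dop a) := by
  intro ξ; funext n
  show ξ n - a * b * ξ (n-1) = b ^ n * (tw b⁻¹ ξ n - a * tw b⁻¹ ξ (n-1))
  simp only [tw, inv_zpow']
  have e1 : b ^ n * (b ^ (-n) * ξ n) = ξ n := by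
    rw [← mul_assoc, ← zpow_add₀ hb, add_neg_cancel, zpow_zero, one_mul]
  have e2 : b ^ n * (b ^ (-(n-1)) * ξ (n-1)) = b * ξ (n-1) := by
    rw [← mul_assoc, ← zpow_add₀ hb, show n + -(n-1) = 1 by ring, zpow_one]
  rw [mul_sub, e1,
    show b ^ n * (a * (b ^ (-(n-1)) * ξ (n-1))) = a * (b ^ n * (b ^ (-(n-1)) * ξ (n-1))) by ring,
    e2]
  ring

lemma cj_comp {b f g f' g'} (hb : b ≠ 0) (hf : Cj b f f') (hg : Cj b g g') :
    Cj b (f ∘ g) (f' ∘ g') := by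
  intro ξ
  simp only [Function.comp_apply, hg ξ]
  rw [hf, tw_tw_inv b hb]

lemma cj_iter {b f f'} (hb : b ≠ 0) (hf : Cj b f f') (s : ℕ) : Cj b f^[s] f'^[s] := by
  induction s with
  | zero => exact cj_id b hb
  | succ t ih => rw [Function.iterate_succ, Function.iterate_succ]; exact cj_comp hb ih hf

lemma cj_foldr {ι : Type*} {b : ℂ} (hb : b ≠ 0) (F F' : ι → (ℤ → ℂ) → (ℤ → ℂ))
    (h : ∀ i, Cj b (F i) (F' i)) (L : List ι) :
    Cj b (L.foldr (fun i acc => F i ∘ acc) id) (L.foldr (fun i acc => F' i ∘ acc) id) := by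
  induction L with
  | nil => exact cj_id b hb
  | cons i L ih =>
    simp only [List.foldr_cons]
    exact cj_comp hb (h i) ih

/-! ### Killing classes -/

open Polynomial in
lemma ndeg_comp (p : Polynomial ℂ) : (p.comp (X - C 1)).natDegree = p.natDegree := by
  rw [Polynomial.natDegree_comp, Polynomial.natDegree_X_sub_C, mul_one]

open Polynomial in
lemma lc_comp (p : Polynomial ℂ) : (p.comp (X - C 1)).leadingCoeff = p.leadingCoeff := by
  by_cases hp : p = 0
  · simp [hp]
  rw [Polynomial.leadingCoeff_comp (by rw [Polynomial.natDegree_X_sub_C]; norm_num)]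
  rw [Polynomial.leadingCoeff_X_sub_C, one_pow, mul_one]

open Polynomial in
lemma comp_ne (p : Polynomial ℂ) (hp : p ≠ 0) : p.comp (X - C 1) ≠ 0 := by
  intro h
  have h2 := lc_comp p
  rw [h] at h2
  simp only [Polynomial.leadingCoeff_zero] at h2
  exact hp (Polynomial.leadingCoeff_eq_zero.mp h2.symm)

open Polynomial in
lemma deg_comp (p : Polynomial ℂ) (hp : p ≠ 0) : (p.comp (X - C 1)).degree = p.degree := by
  rw [Polynomial.degree_eq_natDegree (comp_ne p hp), Polynomial.degree_eq_natDegree hp, ndeg_comp]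

open Polynomial in
lemma deg_comp_le (p : Polynomial ℂ) : (p.comp (X - C 1)).degree ≤ p.degree := by
  by_cases hp : p = 0
  · simp [hp]
  · exact le_of_eq (deg_comp p hp)

open Polynomial in
lemma deg_sub_comp (p : Polynomial ℂ) (hp : p ≠ 0) :
    (p - p.comp (X - C 1)).degree < p.degree :=
  Polynomial.degree_sub_lt (deg_comp p hp).symm hp (lc_comp p).symm

open Polynomial in
lemma eval_comp_sub (p : Polynomial ℂ) (x : ℂ) :
    (p.comp (X - C 1)).eval x = p.eval (x - 1) := by
  simp [Polynomial.eval_comp]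

/-- The class of sequences `n ↦ g(n) βⁿ` with `deg g < t`. -/
def Kcl (β : ℂ) (t : ℕ) (ξ : ℤ → ℂ) : Prop :=
  ∃ p : Polynomial ℂ, p.degree < (t : ℕ) ∧ ξ = fun (n : ℤ) => p.eval (n : ℂ) * β ^ n

open Polynomial in
lemma Kcl_Dop {β : ℂ} (hβ : β ≠ 0) (a : ℂ) {t : ℕ} {ξ : ℤ → ℂ} (h : Kcl β t ξ) :
    Kcl β t (Dop a ξ) := by
  obtain ⟨p, hdeg, hval⟩ := h
  refine ⟨p - C (a / β) * p.comp (X - C 1), ?_, ?_⟩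
  · refine lt_of_le_of_lt (Polynomial.degree_sub_le _ _) (max_lt hdeg ?_)
    refine lt_of_le_of_lt ?_ hdeg
    calc (C (a / β) * p.comp (X - C 1)).degree
        ≤ (C (a / β)).degree + (p.comp (X - C 1)).degree := Polynomial.degree_mul_le _ _
      _ ≤ 0 + p.degree := add_le_add Polynomial.degree_C_le (deg_comp_le p)
      _ = p.degree := zero_add _
  · funext n
    have key : a * β ^ (n - 1) = a / β * β ^ n := by
      rw [zpow_sub_one₀ hβ]
      field_simp
    simp only [Dop, hval, Polynomial.eval_sub, Polynomial.eval_mul, Polynomial.eval_C,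
      eval_comp_sub]
    push_cast
    rw [show ((n : ℂ) - 1) = (((n - 1 : ℤ) : ℂ)) by push_cast; ring]
    rw [show p.eval ((n:ℤ):ℂ) * β ^ n - a * (p.eval (((n-1:ℤ)):ℂ) * β ^ (n-1))
        = p.eval ((n:ℤ):ℂ) * β ^ n - (a * β ^ (n-1)) * p.eval (((n-1:ℤ)):ℂ) by ring, key]
    ring

open Polynomial in
lemma Kcl_Dop_self {β : ℂ} (hβ : β ≠ 0) {t : ℕ} {ξ : ℤ → ℂ} (h : Kcl β (t + 1) ξ) :
    Kcl β t (Dop β ξ) := by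
  obtain ⟨p, hdeg, hval⟩ := h
  refine ⟨p - p.comp (X - C 1), ?_, ?_⟩
  · by_cases hp : p = 0
    · simp only [hp, Polynomial.zero_comp, sub_zero, Polynomial.degree_zero]
      exact WithBot.bot_lt_coe _
    · have h1 := deg_sub_comp p hp
      have h2 : p.degree ≤ (t : ℕ) := by
        rw [Polynomial.degree_eq_natDegree hp] at hdeg ⊢
        exact_mod_cast Nat.lt_succ_iff.mp (by exact_mod_cast hdeg)
      exact lt_of_lt_of_le h1 h2
  · funext n
    have key : β * β ^ (n - 1) = β ^ n := by
      rw [zpow_sub_one₀ hβ]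
      field_simp
    simp only [Dop, hval, Polynomial.eval_sub, eval_comp_sub]
    rw [show ((n : ℂ) - 1) = (((n - 1 : ℤ) : ℂ)) by push_cast; ring]
    rw [show p.eval ((n:ℤ):ℂ) * β ^ n - β * (p.eval (((n-1:ℤ)):ℂ) * β ^ (n-1))
        = p.eval ((n:ℤ):ℂ) * β ^ n - (β * β ^ (n-1)) * p.eval (((n-1:ℤ)):ℂ) by ring, key]
    ring

lemma Kcl_iter_kill {β : ℂ} (hβ : β ≠ 0) (t : ℕ) {ξ : ℤ → ℂ} (h : Kcl β t ξ) :
    (Dop β)^[t] ξ = fun _ => 0 := by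
  induction t generalizing ξ with
  | zero =>
    obtain ⟨p, hdeg, hval⟩ := h
    have hp : p = 0 := by
      rw [← Polynomial.degree_eq_bot]
      exact Nat.WithBot.lt_zero_iff.mp (by exact_mod_cast hdeg)
    funext n
    simp [hval, hp]
  | succ t ih =>
    rw [Function.iterate_succ_apply]
    exact ih (Kcl_Dop_self hβ h)

lemma Dop_zero (a : ℂ) : Dop a (fun _ => 0) = fun _ => 0 := by
  funext n; simp [Dop]

lemma Dop_iter_zero (a : ℂ) (s : ℕ) : (Dop a)^[s] (fun _ => 0) = fun _ => 0 := by
  induction s with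
  | zero => rfl
  | succ t ih => rw [Function.iterate_succ_apply, Dop_zero, ih]

lemma Kcl_iter {β : ℂ} (hβ : β ≠ 0) (a : ℂ) (s : ℕ) {t : ℕ} {ξ : ℤ → ℂ} (h : Kcl β t ξ) :
    Kcl β t ((Dop a)^[s] ξ) := by
  induction s generalizing ξ with
  | zero => exact h
  | succ u ih => rw [Function.iterate_succ_apply]; exact ih (Kcl_Dop hβ a h)

/-! ### rowOp and bigOp lemmas -/

variable {m : ℕ} (α : Fin m → ℂ) (s : Fin m → ℕ)

lemma isLin_rowOp (c : ℂ) : IsLin (rowOp α s c) :=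
  isLin_foldr _ (fun j => isLin_iter (isLin_Dop _) _) _

lemma window_rowOp (c : ℂ) : Window (rowOp α s c) (∑ j : Fin m, (s j : ℤ)) := by
  have h := window_foldr (fun j => (Dop (α j * c))^[s j]) (fun j => (s j : ℤ))
    (fun j => window_iter _ _) (List.finRange m)
  rwa [show ((List.finRange m).map (fun j => (s j : ℤ))).sum = ∑ j : Fin m, (s j : ℤ)
    from (Fin.sum_univ_def _).symm] at h

lemma commsh_rowOp (c : ℂ) : Commsh (rowOp α s c) :=
  commsh_foldr _ (fun j => commsh_iter (commsh_Dop _) _) _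

lemma cj_rowOp {b : ℂ} (hb : b ≠ 0) (c : ℂ) : Cj b (rowOp α s (c * b)) (rowOp α s c) := by
  have h : ∀ j : Fin m, Cj b ((Dop (α j * (c * b)))^[s j]) ((Dop (α j * c))^[s j]) := by
    intro j
    rw [show α j * (c * b) = α j * c * b by ring]
    exact cj_iter hb (cj_Dop b hb (α j * c)) (s j)
  exact cj_foldr hb _ _ h _

lemma flatmap_eq_map (L : List ℕ) :
    L.flatMap (fun (a : ℕ) => ([(a : ℤ)] : List ℤ)) = List.map (fun (a : ℕ) => (a : ℤ)) L := by
  induction L with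
  | nil => rfl
  | cons a L ih => simp only [List.flatMap_cons, List.map_cons, ih]; rfl

lemma bigOp_eq (q : ℂ) (ν : ℤ) (l : ℕ) :
    bigOp α s q ν l = ((List.range l).map (fun k : ℕ => (k : ℤ))).foldr
      (fun k acc => rowOp α s (q ^ (ν - (k + 1))) ∘ acc) id := by
  unfold bigOp
  congr 1
  exact flatmap_eq_map _

lemma isLin_bigOp (q : ℂ) (ν : ℤ) (l : ℕ) : IsLin (bigOp α s q ν l) := by
  rw [bigOp_eq]
  exact isLin_foldr _ (fun k => isLin_rowOp α s _) _

lemma window_bigOp (q : ℂ) (ν : ℤ) (l : ℕ) :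
    Window (bigOp α s q ν l) ((l : ℤ) * ∑ j : Fin m, (s j : ℤ)) := by
  rw [bigOp_eq]
  have h := window_foldr (fun k : ℤ => rowOp α s (q ^ (ν - (k + 1))))
    (fun _ => ∑ j : Fin m, (s j : ℤ)) (fun k => window_rowOp α s _)
    ((List.range l).map (fun k : ℕ => (k : ℤ)))
  rwa [show (((List.range l).map (fun k : ℕ => (k : ℤ))).map
      (fun _ => ∑ j : Fin m, (s j : ℤ))).sum = (l : ℤ) * ∑ j : Fin m, (s j : ℤ) by
    rw [List.map_const', List.sum_replicate, List.length_map, List.length_range,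
      nsmul_eq_mul]] at h

lemma commsh_bigOp (q : ℂ) (ν : ℤ) (l : ℕ) : Commsh (bigOp α s q ν l) := by
  rw [bigOp_eq]
  exact commsh_foldr _ (fun k => commsh_rowOp α s _) _

lemma cj_bigOp {q : ℂ} (hq : q ≠ 0) (ν : ℤ) (l : ℕ) :
    Cj (q ^ ν) (bigOp α s q ν l) (bigOp α s q 0 l) := by
  have hb : q ^ ν ≠ 0 := zpow_ne_zero _ hq
  have h : ∀ k : ℤ, Cj (q ^ ν) (rowOp α s (q ^ (ν - (k + 1))))
      (rowOp α s (q ^ (0 - (k + 1)))) := by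
    intro k
    rw [show (ν - (k + 1)) = (0 - (k + 1)) + ν by ring, zpow_add₀ hq]
    exact cj_rowOp α s hb _
  rw [bigOp_eq, bigOp_eq]
  exact cj_foldr hb _ _ h _

/-! ### kill lemmas for rowOp / bigOp -/

lemma Kcl_rowfoldr {β : ℂ} (hβ : β ≠ 0) (c : ℂ) (L : List (Fin m))
    {t : ℕ} {ξ : ℤ → ℂ} (h : Kcl β t ξ) :
    Kcl β t ((L.foldr (fun j acc => (Dop (α j * c))^[s j] ∘ acc) id) ξ) := by
  induction L with
  | nil => exact h
  | cons j L ih =>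
    simp only [List.foldr_cons, Function.comp_apply]
    exact Kcl_iter hβ _ _ ih

lemma Kcl_rowOp {β : ℂ} (hβ : β ≠ 0) (c : ℂ) {t : ℕ} {ξ : ℤ → ℂ} (h : Kcl β t ξ) :
    Kcl β t (rowOp α s c ξ) :=
  Kcl_rowfoldr α s hβ c _ h

lemma rowOp_zero (c : ℂ) : rowOp α s c (fun _ => 0) = fun _ => 0 :=
  (isLin_rowOp α s c).zero

lemma rowfoldr_kill {β : ℂ} (hβ : β ≠ 0) (c : ℂ) (j₀ : Fin m) (hβeq : β = α j₀ * c)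
    (L : List (Fin m)) (hmem : j₀ ∈ L) {ξ : ℤ → ℂ} (h : Kcl β (s j₀) ξ) :
    (L.foldr (fun j acc => (Dop (α j * c))^[s j] ∘ acc) id) ξ = fun _ => 0 := by
  induction L with
  | nil => exact absurd hmem List.not_mem_nil
  | cons j L ih =>
    simp only [List.foldr_cons, Function.comp_apply]
    by_cases hj : j = j₀
    · subst hj
      have hK := Kcl_rowfoldr α s hβ c L h
      have he : α j * c = β := hβeq.symm
      rw [he]
      exact Kcl_iter_kill hβ _ hK
    · rcases List.mem_cons.mp hmem with h' | h'
      · exact absurd h'.symm hj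
      · rw [ih h', Dop_iter_zero]

lemma rowOp_kill {β : ℂ} (hβ : β ≠ 0) (c : ℂ) (j₀ : Fin m) (hβeq : β = α j₀ * c)
    {ξ : ℤ → ℂ} (h : Kcl β (s j₀) ξ) : rowOp α s c ξ = fun _ => 0 :=
  rowfoldr_kill α s hβ c j₀ hβeq _ (List.mem_finRange j₀) h

lemma Kcl_bigfoldr {β : ℂ} (hβ : β ≠ 0) (q : ℂ) (ν : ℤ) (L : List ℤ)
    {t : ℕ} {ξ : ℤ → ℂ} (h : Kcl β t ξ) :
    Kcl β t ((L.foldr (fun k acc => rowOp α s (q ^ (ν - (k + 1))) ∘ acc) id) ξ) := by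
  induction L with
  | nil => exact h
  | cons k L ih =>
    simp only [List.foldr_cons, Function.comp_apply]
    exact Kcl_rowOp α s hβ _ ih

lemma bigfoldr_kill {β : ℂ} (hβ : β ≠ 0) {q : ℂ} (hq : q ≠ 0) (κ : ℤ)
    (j₀ : Fin m) (hβeq : β = α j₀ * q ^ (-κ))
    (L : List ℤ) (hmem : κ - 1 ∈ L) {ξ : ℤ → ℂ} (h : Kcl β (s j₀) ξ) :
    (L.foldr (fun k acc => rowOp α s (q ^ ((0:ℤ) - (k + 1))) ∘ acc) id) ξ = fun _ => 0 := by
  induction L with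
  | nil => exact absurd hmem List.not_mem_nil
  | cons k L ih =>
    simp only [List.foldr_cons, Function.comp_apply]
    by_cases hk : k = κ - 1
    · subst hk
      have hK := Kcl_bigfoldr α s hβ q 0 L h
      rw [show (0:ℤ) - (κ - 1 + 1) = -κ by ring]
      exact rowOp_kill α s hβ _ j₀ hβeq hK
    · rcases List.mem_cons.mp hmem with h' | h'
      · exact absurd h'.symm hk
      · rw [ih h', rowOp_zero]

lemma bigOp_kill {β : ℂ} (hβ : β ≠ 0) {q : ℂ} (hq : q ≠ 0) (l : ℕ) (κ : ℕ) (hκ : 1 ≤ κ)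
    (hκl : κ ≤ l) (j₀ : Fin m) (hβeq : β = α j₀ * q ^ (-(κ : ℤ)))
    {ξ : ℤ → ℂ} (h : Kcl β (s j₀) ξ) :
    bigOp α s q 0 l ξ = fun _ => 0 := by
  rw [bigOp_eq]
  have hmem : (κ : ℤ) - 1 ∈ (List.range l).map (fun k : ℕ => (k : ℤ)) := by
    rw [List.mem_map]
    exact ⟨κ - 1, List.mem_range.mpr (by omega), by push_cast; omega⟩
  exact bigfoldr_kill α s hβ hq (κ : ℤ) j₀ hβeq _ hmem h


/-! ### domain-specific lemmas -/

lemma vseq_rec (q : ℚ) (P : Polynomial ℚ) {m : ℕ} (d : ℕ) (α : Fin m → ℂ) (s : Fin m → ℕ)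
    (x0 : ℂ) (x : Fin m → Fin d → ℕ → ℂ) (n : ℕ) :
    vseq q P d α s x0 x (n+1)
      = Pq q P (n+1) * vseq q P d α s x0 x n + useq q d α s x ((n+1 : ℕ) : ℤ) := by
  unfold vseq
  rw [show n + 1 + 1 = (n + 1) + 1 by ring, Finset.sum_range_succ]
  have hemp : Finset.Icc (n + 1 + 1) (n + 1) = (∅ : Finset ℕ) := Finset.Icc_eq_empty (by omega)
  rw [hemp, Finset.prod_empty, mul_one]
  have hprod : prodP q P (n+1) = prodP q P n * Pq q P (n+1) := by
    unfold prodP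
    rw [Finset.prod_range_succ]
  rw [hprod]
  have hsum : ∀ l ∈ Finset.range (n+1),
      useq q d α s x (l : ℤ) * ∏ k ∈ Finset.Icc (l + 1) (n+1), Pq q P k
      = (useq q d α s x (l : ℤ) * ∏ k ∈ Finset.Icc (l + 1) n, Pq q P k) * Pq q P (n+1) := by
    intro l hl
    have hl' := Finset.mem_range.mp hl
    rw [Finset.prod_Icc_succ_top (by omega : l + 1 ≤ n + 1)]
    ring
  rw [Finset.sum_congr rfl hsum, ← Finset.sum_mul]
  ring

lemma Pq_expand (q : ℚ) (P : Polynomial ℚ) (d : ℕ) (hd : d = P.natDegree) (n : ℕ) :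
    Pq q P n = ∑ i ∈ Finset.range (d+1), ((P.coeff i : ℚ) : ℂ) * ((q : ℂ) ^ (n : ℕ)) ^ i := by
  unfold Pq
  rw [hd, Polynomial.eval_eq_sum_range]
  push_cast
  ring

open Polynomial in
lemma Kcl_uterm (qC A : ℂ) (hq : qC ≠ 0) (hA : A ≠ 0) (d : ℕ) (σ t : ℕ) (hσ : σ < t) (c₀ : ℂ) :
    Kcl (A * qC ^ (-(d : ℤ))) t
      (fun k : ℤ => qC ^ (-(d : ℤ) * (k + 1)) *
        ((∏ i ∈ Finset.range σ, (((k + 1 : ℤ) : ℂ) - (i : ℂ))) * A ^ ((k + 1) - (σ : ℤ)) * c₀)) := by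
  set r : Polynomial ℂ := ∏ i ∈ Finset.range σ, (X - C ((i : ℂ) - 1)) with hr
  have hmon : r.Monic := monic_prod_of_monic _ _ (fun i _ => monic_X_sub_C _)
  have hrdeg : r.natDegree = σ := by
    rw [hr, Polynomial.natDegree_prod _ _ (fun i _ => X_sub_C_ne_zero _)]
    have h1 : ∀ i ∈ Finset.range σ, (X - C ((i : ℂ) - 1)).natDegree = 1 :=
      fun i _ => Polynomial.natDegree_X_sub_C _
    rw [Finset.sum_congr rfl h1, Finset.sum_const, smul_eq_mul, mul_one, Finset.card_range]
  refine ⟨C (c₀ * qC ^ (-(d : ℤ)) * A ^ (1 - (σ : ℤ))) * r, ?_, ?_⟩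
  · calc (C (c₀ * qC ^ (-(d : ℤ)) * A ^ (1 - (σ : ℤ))) * r).degree
        ≤ (C (c₀ * qC ^ (-(d : ℤ)) * A ^ (1 - (σ : ℤ)))).degree + r.degree :=
          Polynomial.degree_mul_le _ _
      _ ≤ 0 + r.degree := add_le_add Polynomial.degree_C_le le_rfl
      _ = (σ : ℕ) := by rw [zero_add, Polynomial.degree_eq_natDegree hmon.ne_zero, hrdeg]
      _ < (t : ℕ) := by exact_mod_cast Nat.cast_lt.mpr hσ
  · funext k
    have hevalr : r.eval ((k : ℤ) : ℂ) = ∏ i ∈ Finset.range σ, (((k + 1 : ℤ) : ℂ) - (i : ℂ)) := by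
      rw [hr, Polynomial.eval_prod]
      apply Finset.prod_congr rfl
      intro i _
      push_cast
      simp only [Polynomial.eval_sub, Polynomial.eval_X, Polynomial.eval_C]
      ring
    rw [Polynomial.eval_mul, Polynomial.eval_C, hevalr]
    have e1 : A ^ ((k + 1) - (σ : ℤ)) = A ^ k * A ^ (1 - (σ : ℤ)) := by
      rw [← zpow_add₀ hA]; ring_nf
    have e2 : qC ^ (-(d : ℤ) * (k + 1)) = qC ^ (-(d : ℤ) * k) * qC ^ (-(d : ℤ)) := by
      rw [← zpow_add₀ hq]; ring_nf
    have e3 : (A * qC ^ (-(d : ℤ))) ^ k = A ^ k * qC ^ (-(d : ℤ) * k) := by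
      rw [mul_zpow, ← zpow_mul]
    rw [e1, e2, e3]
    ring

end S15aux

/-- the key recurrence relation
`p_d v_{l,n}(ω) = q^{−d(n+1)} W_d(n+1) − ∑_{ν=1}^d p_{d−ν} q^{−ν(n+1)} W_ν(n)`,
where `W_ν(n) = (∏_{k=1}^l ∏_{j=1}^m D_{α_j q^{ν−k}}^{s_j})(v_·(ω))(n)`
(and `v_{l,n}(ω) = W_0(n)`). -/
theorem stmt_15
    (q₁ q₂ : ℤ) (hq₁ : q₁ ≠ 0) (hq₂ : q₂ ≠ 0) (hcop : Int.gcd q₁ q₂ = 1)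
    (habs : |q₂| < |q₁|)
    (q : ℚ) (hq : q = (q₁ : ℚ) / (q₂ : ℚ))
    (P : Polynomial ℚ) (d : ℕ) (hd : d = P.natDegree) (hd1 : 1 ≤ d)
    (hP : ∀ n : ℕ, 1 ≤ n → P.eval (q ^ n) ≠ 0)
    (m : ℕ) (α : Fin m → ℂ) (hα : ∀ j, α j ≠ 0)
    (s : Fin m → ℕ) (hs : ∀ j, 0 < s j)
    (S : ℕ) (hS : S = ∑ j, s j)
    (l : ℕ) (hl : d ≤ l)
    (ω0 : ℂ) (ω : Fin m → Fin d → ℕ → ℂ)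
    (W : ℤ → ℤ → ℂ)
    (hW : ∀ ν n : ℤ, W ν n = bigOp α s (q : ℂ) ν l (vext q P d α s ω0 ω) n) :
    ∀ n : ℕ, S * l ≤ n →
      ((P.coeff d : ℚ) : ℂ) * vln q P d α s ω0 ω l n
        = (q : ℂ) ^ (-(d : ℤ) * ((n : ℤ) + 1)) * W (d : ℤ) ((n : ℤ) + 1)
          - ∑ ν ∈ Finset.Icc 1 d,
              ((P.coeff (d - ν) : ℚ) : ℂ) * (q : ℂ) ^ (-(ν : ℤ) * ((n : ℤ) + 1)) *
                W (ν : ℤ) (n : ℤ) := by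
  intro n hn
  have hqq : q ≠ 0 := by
    rw [hq]
    exact div_ne_zero (Int.cast_ne_zero.mpr hq₁) (Int.cast_ne_zero.mpr hq₂)
  have hq0 : (q : ℂ) ≠ 0 := by exact_mod_cast hqq
  have lin := S15aux.isLin_bigOp α s (q : ℂ) 0 l
  set vx : ℤ → ℂ := vext q P d α s ω0 ω with hvxdef
  -- twist identity
  have twist : ∀ (ν : ℤ) (n' : ℤ), bigOp α s (q : ℂ) ν l vx n'
      = (q : ℂ) ^ (ν * n') * bigOp α s (q : ℂ) 0 l
          (fun k => (q : ℂ) ^ (-(ν * k)) * vx k) n' := by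
    intro ν n'
    rw [S15aux.cj_bigOp α s hq0 ν l vx]
    have h2 : S15aux.tw ((q : ℂ) ^ ν)⁻¹ vx = fun k => (q : ℂ) ^ (-(ν * k)) * vx k := by
      funext k
      simp only [S15aux.tw, inv_zpow']
      rw [← zpow_mul]
      ring_nf
    rw [h2]
    simp only [S15aux.tw]
    rw [← zpow_mul]
  -- the ν-terms
  have termν : ∀ ν : ℕ, (q : ℂ) ^ (-(ν : ℤ) * ((n : ℤ) + 1)) * W (ν : ℤ) (n : ℤ)
      = bigOp α s (q : ℂ) 0 l (fun k => (q : ℂ) ^ (-(ν : ℤ) * (k + 1)) * vx k) (n : ℤ) := by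
    intro ν
    rw [hW, twist (ν : ℤ) (n : ℤ)]
    have e : (fun k : ℤ => (q : ℂ) ^ (-(ν : ℤ) * (k + 1)) * vx k)
        = fun k => (q : ℂ) ^ (-(ν : ℤ)) * ((q : ℂ) ^ (-((ν : ℤ) * k)) * vx k) := by
      funext k
      rw [← mul_assoc, ← zpow_add₀ hq0]
      ring_nf
    rw [e, lin.2]
    rw [← mul_assoc, ← zpow_add₀ hq0]
    congr 2
    ring
  -- the d-term
  have termd : (q : ℂ) ^ (-(d : ℤ) * ((n : ℤ) + 1)) * W (d : ℤ) ((n : ℤ) + 1)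
      = bigOp α s (q : ℂ) 0 l (fun k => (q : ℂ) ^ (-(d : ℤ) * (k + 1)) * vx (k + 1)) (n : ℤ) := by
    rw [hW, twist (d : ℤ) ((n : ℤ) + 1)]
    have hsh := S15aux.commsh_bigOp α s (q : ℂ) 0 l (fun k => (q : ℂ) ^ (-((d : ℤ) * k)) * vx k)
    have e : (fun k : ℤ => (q : ℂ) ^ (-(d : ℤ) * (k + 1)) * vx (k + 1))
        = S15aux.shf (fun k => (q : ℂ) ^ (-((d : ℤ) * k)) * vx k) := by
      funext k
      simp only [S15aux.shf]
      congr 2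
      ring
    rw [e, hsh]
    simp only [S15aux.shf]
    rw [← mul_assoc, ← zpow_add₀ hq0,
      show (-(d : ℤ) * ((n : ℤ) + 1) + (d : ℤ) * ((n : ℤ) + 1)) = 0 by ring, zpow_zero, one_mul]
  -- the three sequences
  set Gd : ℤ → ℂ := fun k => (q : ℂ) ^ (-(d : ℤ) * (k + 1)) * vx (k + 1) with hGd
  set Gs : ℤ → ℂ := fun k => ∑ ν ∈ Finset.Icc 1 d,
      ((P.coeff (d - ν) : ℚ) : ℂ) * ((q : ℂ) ^ (-(ν : ℤ) * (k + 1)) * vx k) with hGs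
  set Gl : ℤ → ℂ := fun k => ((P.coeff d : ℚ) : ℂ) * vx k with hGl
  set η : ℤ → ℂ := fun k => (q : ℂ) ^ (-(d : ℤ) * (k + 1)) * useq q d α s ω (k + 1) with hη
  -- rewrite goal into bigOp form
  have hLHS : ((P.coeff d : ℚ) : ℂ) * vln q P d α s ω0 ω l n
      = bigOp α s (q : ℂ) 0 l Gl (n : ℤ) := by
    rw [hGl]
    exact (congrFun (lin.2 ((P.coeff d : ℚ) : ℂ) vx) (n : ℤ)).symm
  have hsum : ∑ ν ∈ Finset.Icc 1 d,
        ((P.coeff (d - ν) : ℚ) : ℂ) * (q : ℂ) ^ (-(ν : ℤ) * ((n : ℤ) + 1)) * W (ν : ℤ) (n : ℤ)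
      = bigOp α s (q : ℂ) 0 l Gs (n : ℤ) := by
    rw [hGs, congrFun (lin.sum (Finset.Icc 1 d)
      (fun ν k => ((P.coeff (d - ν) : ℚ) : ℂ) * ((q : ℂ) ^ (-(ν : ℤ) * (k + 1)) * vx k))) (n : ℤ)]
    apply Finset.sum_congr rfl
    intro ν _
    rw [mul_assoc, termν ν, ← congrFun (lin.2 ((P.coeff (d - ν) : ℚ) : ℂ)
      (fun k => (q : ℂ) ^ (-(ν : ℤ) * (k + 1)) * vx k)) (n : ℤ)]
  -- agreement of Ξ with η on nonnegative integers
  have agree : ∀ k : ℤ, 0 ≤ k → Gd k - (Gs k + Gl k) = η k := by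
    intro k hk
    obtain ⟨kn, rfl⟩ : ∃ kn : ℕ, k = (kn : ℤ) := ⟨k.toNat, (Int.toNat_of_nonneg hk).symm⟩
    have hv1 : vx (kn : ℤ) = vseq q P d α s ω0 ω kn := by
      rw [hvxdef]
      show (if (0:ℤ) ≤ (kn : ℤ) then vseq q P d α s ω0 ω ((kn : ℤ)).toNat else 0) = _
      rw [if_pos (by omega : (0:ℤ) ≤ (kn : ℤ)), Int.toNat_natCast]
    have hv2 : vx ((kn : ℤ) + 1) = vseq q P d α s ω0 ω (kn + 1) := by
      rw [hvxdef]
      show (if (0:ℤ) ≤ (kn : ℤ) + 1 then vseq q P d α s ω0 ω ((kn : ℤ) + 1).toNat else 0) = _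
      rw [if_pos (by omega : (0:ℤ) ≤ (kn : ℤ) + 1),
        show ((kn : ℤ) + 1).toNat = kn + 1 by omega]
    have hrec := S15aux.vseq_rec q P d α s ω0 ω kn
    have hPq := S15aux.Pq_expand q P d hd (kn + 1)
    -- coefficient identity
    have hcoef : (q : ℂ) ^ (-(d : ℤ) * ((kn : ℤ) + 1)) * Pq q P (kn + 1)
        = ∑ ν ∈ Finset.range (d + 1),
            ((P.coeff (d - ν) : ℚ) : ℂ) * (q : ℂ) ^ (-(ν : ℤ) * ((kn : ℤ) + 1)) := by
      rw [hPq, Finset.mul_sum, ← Finset.sum_range_reflect]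
      apply Finset.sum_congr rfl
      intro i hi
      have hi' : i ≤ d := by
        have := Finset.mem_range.mp hi
        omega
      simp only [Nat.add_sub_cancel]
      have hpow : (((q : ℂ)) ^ ((kn + 1 : ℕ))) ^ (d - i) = (q : ℂ) ^ (((kn : ℤ) + 1) * ((d : ℤ) - (i : ℤ))) := by
        rw [← pow_mul, ← zpow_natCast (q : ℂ) ((kn + 1) * (d - i))]
        congr 1
        push_cast [hi']
        ring
      rw [hpow,
        show (-(i : ℤ) * ((kn : ℤ) + 1))
          = (-(d : ℤ) * ((kn : ℤ) + 1) + ((kn : ℤ) + 1) * ((d : ℤ) - (i : ℤ))) by ring,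
        zpow_add₀ hq0]
      ring
    -- the sum over Icc plus the 0 term equals the sum over range (d+1)
    have hins : ∑ ν ∈ Finset.range (d + 1),
          ((P.coeff (d - ν) : ℚ) : ℂ) * (q : ℂ) ^ (-(ν : ℤ) * ((kn : ℤ) + 1))
        = ((P.coeff d : ℚ) : ℂ) + ∑ ν ∈ Finset.Icc 1 d,
            ((P.coeff (d - ν) : ℚ) : ℂ) * (q : ℂ) ^ (-(ν : ℤ) * ((kn : ℤ) + 1)) := by
      have hre : Finset.range (d + 1) = insert 0 (Finset.Icc 1 d) := by
        ext i
        simp only [Finset.mem_range, Finset.mem_insert, Finset.mem_Icc]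
        omega
      rw [hre, Finset.sum_insert (by simp)]
      norm_num
    -- now compute
    have hGsv : Gs (kn : ℤ) = (∑ ν ∈ Finset.Icc 1 d,
        ((P.coeff (d - ν) : ℚ) : ℂ) * (q : ℂ) ^ (-(ν : ℤ) * ((kn : ℤ) + 1))) * vx (kn : ℤ) := by
      rw [hGs, Finset.sum_mul]
      apply Finset.sum_congr rfl
      intro ν _
      ring
    simp only [hη, hGd, hGl]
    rw [hGsv, hv2, hrec, show ((kn + 1 : ℕ) : ℤ) = (kn : ℤ) + 1 by push_cast; ring, hv1]
    have heq : ((∑ ν ∈ Finset.Icc 1 d,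
          ((P.coeff (d - ν) : ℚ) : ℂ) * (q : ℂ) ^ (-(ν : ℤ) * ((kn : ℤ) + 1)))
        + ((P.coeff d : ℚ) : ℂ)) = (q : ℂ) ^ (-(d : ℤ) * ((kn : ℤ) + 1)) * Pq q P (kn + 1) := by
      rw [hcoef, hins]
      ring
    linear_combination (-(vseq q P d α s ω0 ω kn)) * heq
  -- the killing step
  have hkill : bigOp α s (q : ℂ) 0 l η = fun _ => 0 := by
    have hηsum : η = fun k => ∑ j : Fin m, (fun (j : Fin m) (k : ℤ) =>
        ∑ k' : Fin d, ∑ σ ∈ Finset.range (s j),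
          (q : ℂ) ^ (-(d : ℤ) * (k + 1)) *
            ((∏ i ∈ Finset.range σ, (((k + 1 : ℤ) : ℂ) - (i : ℂ))) *
              (α j * (q : ℂ) ^ (k' : ℕ)) ^ ((k + 1) - (σ : ℤ)) * ω j k' σ)) j k := by
      funext k
      rw [hη]
      show (q : ℂ) ^ (-(d : ℤ) * (k + 1)) * useq q d α s ω (k + 1) = _
      rw [useq, Finset.mul_sum]
      apply Finset.sum_congr rfl
      intro j _
      rw [Finset.mul_sum]
      apply Finset.sum_congr rfl
      intro k' _
      rw [Finset.mul_sum]
    funext n'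
    rw [hηsum, congrFun (lin.sum Finset.univ _) n']
    apply Finset.sum_eq_zero
    intro j _
    rw [congrFun (lin.sum Finset.univ _) n']
    apply Finset.sum_eq_zero
    intro k' _
    rw [congrFun (lin.sum (Finset.range (s j)) _) n']
    apply Finset.sum_eq_zero
    intro σ hσ
    have hA : α j * (q : ℂ) ^ (k' : ℕ) ≠ 0 := mul_ne_zero (hα j) (pow_ne_zero _ hq0)
    have hK := S15aux.Kcl_uterm (q : ℂ) (α j * (q : ℂ) ^ (k' : ℕ)) hq0 hA d σ (s j)
      (Finset.mem_range.mp hσ) (ω j k' σ)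
    have hβ : α j * (q : ℂ) ^ (k' : ℕ) * (q : ℂ) ^ (-(d : ℤ)) ≠ 0 :=
      mul_ne_zero hA (zpow_ne_zero _ hq0)
    have hβeq : α j * (q : ℂ) ^ (k' : ℕ) * (q : ℂ) ^ (-(d : ℤ))
        = α j * (q : ℂ) ^ (-((d - (k' : ℕ) : ℕ) : ℤ)) := by
      rw [mul_assoc, ← zpow_natCast (q : ℂ) (k' : ℕ), ← zpow_add₀ hq0]
      congr 1
      have := k'.isLt
      push_cast [Nat.cast_sub (le_of_lt this)]
      ring
    have hkl := S15aux.bigOp_kill α s hβ hq0 l (d - (k' : ℕ)) (by have := k'.isLt; omega)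
      (by have := k'.isLt; omega) j hβeq hK
    exact congrFun hkl n'
  -- window argument
  have hwin := S15aux.window_bigOp α s (q : ℂ) 0 l
  have hSZ : (∑ j : Fin m, (s j : ℤ)) = (S : ℤ) := by
    rw [hS]
    push_cast
    rfl
  have hΞη : bigOp α s (q : ℂ) 0 l (fun k => Gd k - (Gs k + Gl k)) (n : ℤ)
      = bigOp α s (q : ℂ) 0 l η (n : ℤ) := by
    apply hwin
    intro k hk
    apply agree
    rw [hSZ] at hk
    have hn' : (S : ℤ) * (l : ℤ) ≤ (n : ℤ) := by exact_mod_cast hn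
    nlinarith [hk, hn']
  -- expand the difference by linearity
  have hexpand : bigOp α s (q : ℂ) 0 l (fun k => Gd k - (Gs k + Gl k)) (n : ℤ)
      = bigOp α s (q : ℂ) 0 l Gd (n : ℤ)
        - (bigOp α s (q : ℂ) 0 l Gs (n : ℤ) + bigOp α s (q : ℂ) 0 l Gl (n : ℤ)) := by
    rw [congrFun (lin.sub Gd (fun k => Gs k + Gl k)) (n : ℤ)]
    rw [congrFun (lin.1 Gs Gl) (n : ℤ)]
  have hzero : bigOp α s (q : ℂ) 0 l (fun k => Gd k - (Gs k + Gl k)) (n : ℤ) = 0 := by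
    rw [hΞη, hkill]
  rw [hLHS, hsum, termd]
  rw [hexpand] at hzero
  linear_combination -hzero
end
end
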